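/- arXiv:1909.06398 — 10 statements merged into one kernel-verified Lean document; each statement's English description precedes it below -/
import Mathlib

section
/- For every signed permutation w ∈ W_n, |λ(w)| = ℓ(w), where λ(w) = μ(w) + ν(w) is the shape of w. -/
set_option maxRecDepth 4000


/-- `w : Fin n → ℤ` is a signed permutation. -/
def IsSignedPerm {n : ℕ} (w : Fin n → ℤ) : Prop :=
  (∀ i, 1 ≤ |w i| ∧ |w i| ≤ n) ∧ Function.Injective fun i => |w i|

/-- The A-code of a signed permutation: γ_i = #{j > i : w j < w i}. -/
def codeS {n : ℕ} (w : Fin n → ℤ) (i : Fin n) : ℕ :=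
  (Finset.univ.filter fun j : Fin n => i < j ∧ w j < w i).card

/-- Length of a signed permutation (type B/C). -/
def lenS {n : ℕ} (w : Fin n → ℤ) : ℕ :=
  ((Finset.univ ×ˢ Finset.univ).filter
    fun p : Fin n × Fin n => p.1 < p.2 ∧ w p.2 < w p.1).card +
  ∑ i ∈ Finset.univ.filter (fun i : Fin n => w i < 0), (-(w i)).toNat

/-- |λ(w)| = ℓ(w): the size of the shape λ(w) = μ(w) + ν(w) equals the length.
Here |λ| = Σ_j ν_j + Σ μ, with ν_j = #{i : γ_i ≥ j} (summed over j = 1,…,n) and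
Σ μ the sum of absolute values of the negative entries of w. -/
theorem stmt5 {n : ℕ} (w : Fin n → ℤ) (hw : IsSignedPerm w) :
    (∑ j ∈ Finset.range n, (Finset.univ.filter fun i : Fin n => j + 1 ≤ codeS w i).card) +
      ∑ i ∈ Finset.univ.filter (fun i : Fin n => w i < 0), (-(w i)).toNat
    = lenS w := by
  unfold lenS
  congr 1
  have hb : ∀ i : Fin n, codeS w i ≤ n := fun i =>
    (Finset.card_filter_le _ _).trans (by simp)
  calc ∑ j ∈ Finset.range n, (Finset.univ.filter fun i : Fin n => j + 1 ≤ codeS w i).card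
      = ∑ j ∈ Finset.range n, ∑ i : Fin n, if j + 1 ≤ codeS w i then 1 else 0 :=
        Finset.sum_congr rfl fun j _ => Finset.card_filter _ _
    _ = ∑ i : Fin n, ∑ j ∈ Finset.range n, if j + 1 ≤ codeS w i then 1 else 0 :=
        Finset.sum_comm
    _ = ∑ i : Fin n, codeS w i := by
        refine Finset.sum_congr rfl fun i _ => ?_
        rw [← Finset.card_filter]
        have : (Finset.range n).filter (fun j => j + 1 ≤ codeS w i)
            = Finset.range (codeS w i) := by
          ext j
          simp only [Finset.mem_filter, Finset.mem_range]
          have := hb i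
          omega
        rw [this, Finset.card_range]
    _ = ((Finset.univ ×ˢ Finset.univ).filter
          fun p : Fin n × Fin n => p.1 < p.2 ∧ w p.2 < w p.1).card := by
        rw [Finset.card_filter, Finset.sum_product]
        exact Finset.sum_congr rfl fun i _ => Finset.card_filter _ _
end

section
/- For every element w of the even-signed permutation group W̃_n of type 0 or 1, |λ(w)| = ℓ(w), where λ(w) = μ(w) + ν(w), μ(w) is the strict partition whose parts are (|w_i| − 1) over the negative entries w_i arranged in decreasing order, and ν(w) is derived from the A-code of w. -/
/-- Type D length: ℓ(w) = #{i < j : w i > w j} + Σ_{w i < 0}(|w i| − 1). -/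
def lenD {n : ℕ} (w : Fin n → ℤ) : ℕ :=
  ((Finset.univ ×ˢ Finset.univ).filter
    fun p : Fin n × Fin n => p.1 < p.2 ∧ w p.2 < w p.1).card +
  ∑ i ∈ Finset.univ.filter (fun i : Fin n => w i < 0), ((-(w i)).toNat - 1)

lemma codeS_le {n : ℕ} (w : Fin n → ℤ) (i : Fin n) : codeS w i ≤ n := by
  classical
  calc codeS w i ≤ (Finset.univ : Finset (Fin n)).card := Finset.card_filter_le _ _
  _ = n := by simp

/-- For an even-signed permutation w of type 0 or 1 (i.e. w_1 ≥ −1), we have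
|λ(w)| = ℓ(w), where |λ(w)| = Σ_j ν_j + Σ_{w i < 0}(|w i| − 1), with
ν_j = #{i : γ_i ≥ j}. -/
theorem stmt6 {n : ℕ} (hn : 0 < n) (w : Fin n → ℤ) (hw : IsSignedPerm w)
    (heven : Even (Finset.univ.filter (fun i : Fin n => w i < 0)).card)
    (htype : -1 ≤ w ⟨0, hn⟩) :
    (∑ j ∈ Finset.range n, (Finset.univ.filter fun i : Fin n => j + 1 ≤ codeS w i).card) +
      ∑ i ∈ Finset.univ.filter (fun i : Fin n => w i < 0), ((-(w i)).toNat - 1)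
    = lenD w := by
  classical
  unfold lenD
  congr 1
  have h1 : (∑ j ∈ Finset.range n,
      (Finset.univ.filter fun i : Fin n => j + 1 ≤ codeS w i).card)
      = ∑ i : Fin n, codeS w i := by
    simp only [Finset.card_filter]
    rw [Finset.sum_comm]
    refine Finset.sum_congr rfl fun i _ => ?_
    rw [Finset.sum_boole, Nat.cast_id]
    have : (Finset.range n).filter (fun j => j + 1 ≤ codeS w i)
        = Finset.range (codeS w i) := by
      ext j
      simp only [Finset.mem_filter, Finset.mem_range]
      have := codeS_le w i
      omega
    rw [this, Finset.card_range]
  rw [h1]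
  have h2 : ((Finset.univ ×ˢ Finset.univ).filter
      fun p : Fin n × Fin n => p.1 < p.2 ∧ w p.2 < w p.1).card
      = ∑ p : Fin n × Fin n, if p.1 < p.2 ∧ w p.2 < w p.1 then 1 else 0 := by
    rw [Finset.card_filter]
    rfl
  rw [h2, Fintype.sum_prod_type]
  refine Finset.sum_congr rfl fun i _ => ?_
  rw [codeS, Finset.card_filter]
end

section
/- A permutation ω ∈ S_n is 312-avoiding if and only if ω has a reduced decomposition of the form R_1 R_2 ⋯ R_{n−1} where each R_j is a (possibly empty) subword of s_1 s_2 ⋯ s_{n−1} and all simple reflections appearing in R_p also appear in R_{p+1}, for each p < n − 1. -/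
/-- `π` avoids the pattern 312. -/
def Avoids312 {m : ℕ} (π : Equiv.Perm (Fin m)) : Prop :=
  ∀ i j k : Fin m, i < j → j < k → ¬ (π j < π k ∧ π k < π i)

/-- The simple transposition s_j of S_{n+1} (swapping positions j and j+1). -/
def gen {n : ℕ} (j : Fin n) : Equiv.Perm (Fin (n + 1)) :=
  Equiv.swap j.castSucc j.succ

/-- Product of a word in the simple transpositions, read left to right. -/
def wordProd {n : ℕ} (L : List (Fin n)) : Equiv.Perm (Fin (n + 1)) :=
  (L.map gen).prod

/-- `L` is a reduced word for ω: its product is ω and no shorter word has product ω. -/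
def IsReducedWord {n : ℕ} (L : List (Fin n)) (ω : Equiv.Perm (Fin (n + 1))) : Prop :=
  wordProd L = ω ∧ ∀ M : List (Fin n), wordProd M = ω → L.length ≤ M.length

namespace Stmt9Aux

open Finset

variable {n : ℕ}

/-! ### Basic word lemmas -/

theorem wordProd_nil : wordProd ([] : List (Fin n)) = 1 := rfl

theorem wordProd_cons (j : Fin n) (L : List (Fin n)) :
    wordProd (j :: L) = gen j * wordProd L := by
  simp [wordProd]

theorem wordProd_append (L M : List (Fin n)) :
    wordProd (L ++ M) = wordProd L * wordProd M := by
  simp [wordProd]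

theorem gen_mul_self (j : Fin n) : gen j * gen j = 1 := by
  simp [gen, Equiv.swap_mul_self]

/-- action of a generator on values -/
theorem gen_val (j : Fin n) (x : Fin (n+1)) :
    ((gen j x : Fin (n+1)) : ℕ) =
      if (x : ℕ) = (j : ℕ) then (j : ℕ) + 1
      else if (x : ℕ) = (j : ℕ) + 1 then (j : ℕ) else (x : ℕ) := by
  by_cases h1 : (x : ℕ) = (j : ℕ)
  · have hx : x = j.castSucc := Fin.ext (by simpa using h1)
    rw [gen, hx, Equiv.swap_apply_left]
    simp [h1]
  · by_cases h2 : (x : ℕ) = (j : ℕ) + 1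
    · have hx : x = j.succ := Fin.ext (by simpa using h2)
      rw [gen, hx, Equiv.swap_apply_right]
      simp [h1, h2]
    · have hx1 : x ≠ j.castSucc := fun h => h1 (by rw [h]; simp)
      have hx2 : x ≠ j.succ := fun h => h2 (by rw [h]; simp)
      rw [gen, Equiv.swap_apply_of_ne_of_ne hx1 hx2, if_neg h1, if_neg h2]

/-! ### Inversions -/

def invSet (σ : Equiv.Perm (Fin (n+1))) : Finset (Fin (n+1) × Fin (n+1)) :=
  Finset.univ.filter fun p => p.1 < p.2 ∧ σ p.2 < σ p.1

def invc (σ : Equiv.Perm (Fin (n+1))) : ℕ := (invSet σ).card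

theorem mem_invSet {σ : Equiv.Perm (Fin (n+1))} {p : Fin (n+1) × Fin (n+1)} :
    p ∈ invSet σ ↔ p.1 < p.2 ∧ σ p.2 < σ p.1 := by
  simp [invSet]


theorem gen_lt (j : Fin n) {x y : Fin (n+1)} (hxy : x < y)
    (hne : ¬((x : ℕ) = (j : ℕ) ∧ (y : ℕ) = (j : ℕ) + 1)) : gen j x < gen j y := by
  rw [Fin.lt_def] at hxy ⊢
  rw [gen_val, gen_val]
  have hj : (j : ℕ) < n := j.isLt
  split_ifs <;> omega

theorem pair_ne_iff {j : Fin n} {p : Fin (n+1) × Fin (n+1)} :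
    p ≠ (j.castSucc, j.succ) ↔ ¬(((p.1 : ℕ) = (j : ℕ)) ∧ ((p.2 : ℕ) = (j : ℕ) + 1)) := by
  rw [not_iff_not, Prod.ext_iff, Fin.ext_iff, Fin.ext_iff]
  simp

theorem map_mem_invSet {σ : Equiv.Perm (Fin (n+1))} {j : Fin n} {p : Fin (n+1) × Fin (n+1)}
    (hp : p ∈ invSet (σ * gen j)) (hne : p ≠ (j.castSucc, j.succ)) :
    (gen j p.1, gen j p.2) ∈ invSet σ := by
  rw [mem_invSet] at hp ⊢
  refine ⟨gen_lt j hp.1 (pair_ne_iff.mp hne), ?_⟩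
  simpa [Equiv.Perm.mul_apply] using hp.2

theorem gen_map_injOn {j : Fin n} {s : Finset (Fin (n+1) × Fin (n+1))} :
    Set.InjOn (fun p : Fin (n+1) × Fin (n+1) => (gen j p.1, gen j p.2)) s := by
  intro p _ q _ h
  simp only [Prod.mk.injEq] at h
  exact Prod.ext ((gen j).injective h.1) ((gen j).injective h.2)

theorem invc_one : invc (1 : Equiv.Perm (Fin (n+1))) = 0 := by
  apply Finset.card_eq_zero.mpr
  rw [invSet, Finset.filter_eq_empty_iff]
  rintro p -
  rintro ⟨h1, h2⟩
  simp only [Equiv.Perm.coe_one, id_eq] at h2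
  exact absurd h1 (not_lt.mpr h2.le)

theorem invc_mul_gen_le (σ : Equiv.Perm (Fin (n+1))) (j : Fin n) :
    invc (σ * gen j) ≤ invc σ + 1 := by
  have hcard : ((invSet (σ * gen j)).erase (j.castSucc, j.succ)).card ≤ (invSet σ).card := by
    apply Finset.card_le_card_of_injOn (fun p => (gen j p.1, gen j p.2))
    · intro p hp
      exact map_mem_invSet (Finset.mem_of_mem_erase hp) (Finset.ne_of_mem_erase hp)
    · exact gen_map_injOn
  show (invSet (σ * gen j)).card ≤ (invSet σ).card + 1
  by_cases hmem : (j.castSucc, j.succ) ∈ invSet (σ * gen j)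
  · have := Finset.card_erase_add_one hmem
    omega
  · rw [Finset.erase_eq_of_notMem hmem] at hcard
    omega

theorem invc_mul_gen_of_descent (σ : Equiv.Perm (Fin (n+1))) (j : Fin n)
    (h : σ j.succ < σ j.castSucc) :
    invc (σ * gen j) = invc σ - 1 ∧ 1 ≤ invc σ := by
  have hpair : (j.castSucc, j.succ) ∈ invSet σ := by
    rw [mem_invSet]
    exact ⟨Fin.castSucc_lt_succ (i := j), h⟩
  have h1 : 1 ≤ invc σ := Finset.card_pos.mpr ⟨_, hpair⟩
  have hnot : (j.castSucc, j.succ) ∉ invSet (σ * gen j) := by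
    rw [mem_invSet]
    rintro ⟨-, h2⟩
    have e1 : gen j j.succ = j.castSucc := Equiv.swap_apply_right _ _
    have e2 : gen j j.castSucc = j.succ := Equiv.swap_apply_left _ _
    simp only [Equiv.Perm.mul_apply, e1, e2] at h2
    exact absurd h h2.asymm
  have hcard : (invSet (σ * gen j)).card ≤ ((invSet σ).erase (j.castSucc, j.succ)).card := by
    apply Finset.card_le_card_of_injOn (fun p => (gen j p.1, gen j p.2))
    · intro p hp
      have hne : p ≠ (j.castSucc, j.succ) := fun he => hnot (he ▸ hp)
      apply Finset.mem_erase_of_ne_of_mem _ (map_mem_invSet hp hne)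
      rw [pair_ne_iff]
      rintro ⟨e1, e2⟩
      dsimp only at e1 e2
      rw [gen_val] at e1 e2
      have hj : (j : ℕ) < n := j.isLt
      have hx : (p.1 : ℕ) = (j : ℕ) + 1 := by split_ifs at e1 <;> omega
      have hy : (p.2 : ℕ) = (j : ℕ) := by split_ifs at e2 <;> omega
      have hlt := (mem_invSet.mp hp).1
      rw [Fin.lt_def] at hlt
      omega
    · exact gen_map_injOn
  rw [Finset.card_erase_of_mem hpair] at hcard
  have hback : (invSet σ).card ≤ (invSet (σ * gen j)).card + 1 := by
    have hmm : σ * gen j * gen j = σ := by rw [mul_assoc, gen_mul_self, mul_one]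
    calc (invSet σ).card = invc (σ * gen j * gen j) := by rw [hmm]; rfl
    _ ≤ invc (σ * gen j) + 1 := invc_mul_gen_le _ _
  have h1' : 1 ≤ (invSet σ).card := h1
  refine ⟨?_, h1⟩
  show (invSet (σ * gen j)).card = (invSet σ).card - 1
  omega

/-- Lemma A : inversions are at most word length. -/
theorem invc_wordProd_le (L : List (Fin n)) : invc (wordProd L) ≤ L.length := by
  induction L using List.reverseRecOn with
  | nil => simp [wordProd_nil, invc_one]
  | append_singleton M j ih =>
      have hsing : wordProd [j] = gen j := by simp [wordProd]
      rw [wordProd_append, hsing, List.length_append, List.length_singleton]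
      exact le_trans (invc_mul_gen_le _ _) (by omega)

theorem eq_one_of_no_descent (σ : Equiv.Perm (Fin (n+1)))
    (h : ∀ j : Fin n, σ j.castSucc < σ j.succ) : σ = 1 := by
  have hmono : StrictMono σ := Fin.strictMono_iff_lt_succ.mpr h
  have hrange : Set.range σ = Set.range (id : Fin (n+1) → Fin (n+1)) := by
    rw [σ.surjective.range_eq, Set.range_id]
  have := (hmono.range_inj strictMono_id).mp hrange
  exact Equiv.ext fun x => congrFun this x

/-- Lemma B : there is a word of length `invc σ`. -/
theorem exists_word (σ : Equiv.Perm (Fin (n+1))) :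
    ∃ L : List (Fin n), wordProd L = σ ∧ L.length = invc σ := by
  generalize hk : invc σ = k
  induction k generalizing σ with
  | zero =>
      refine ⟨[], ?_, rfl⟩
      rw [wordProd_nil]
      by_contra hne
      have h2 : ∃ j : Fin n, σ j.succ < σ j.castSucc := by
        by_contra hall
        push_neg at hall
        apply hne
        refine (eq_one_of_no_descent σ fun j => ?_).symm
        rcases lt_or_eq_of_le (hall j) with h | h
        · exact h
        · exact absurd (σ.injective h) (Fin.castSucc_lt_succ (i := j)).ne
      obtain ⟨j, hj⟩ := h2
      have := invc_mul_gen_of_descent σ j hj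
      omega
  | succ k ih =>
      have hne : σ ≠ 1 := by
        rintro rfl
        rw [invc_one] at hk
        omega
      have h2 : ∃ j : Fin n, σ j.succ < σ j.castSucc := by
        by_contra hall
        push_neg at hall
        apply hne
        refine eq_one_of_no_descent σ fun j => ?_
        rcases lt_or_eq_of_le (hall j) with h | h
        · exact h
        · exact absurd (σ.injective h) (Fin.castSucc_lt_succ (i := j)).ne
      obtain ⟨j, hj⟩ := h2
      obtain ⟨hd, -⟩ := invc_mul_gen_of_descent σ j hj
      obtain ⟨L, hL, hlen⟩ := ih (σ * gen j) (by omega)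
      refine ⟨L ++ [j], ?_, ?_⟩
      · have hsing : wordProd [j] = gen j := by simp [wordProd]
        rw [wordProd_append, hL, hsing, mul_assoc, gen_mul_self, mul_one]
      · have h5 : (L ++ [j]).length = L.length + 1 := by simp
        omega

theorem isReducedWord_iff (L : List (Fin n)) (ω : Equiv.Perm (Fin (n+1))) :
    IsReducedWord L ω ↔ wordProd L = ω ∧ L.length = invc ω := by
  constructor
  · rintro ⟨hprod, hmin⟩
    refine ⟨hprod, le_antisymm ?_ ?_⟩
    · obtain ⟨M, hM, hMlen⟩ := exists_word ω
      exact hMlen ▸ hmin M hM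
    · exact hprod ▸ invc_wordProd_le L
  · rintro ⟨hprod, hlen⟩
    exact ⟨hprod, fun M hM => hlen ▸ (hM ▸ invc_wordProd_le M)⟩

/-! ### Columns -/

/-- membership of a natural number in a finset of `Fin n` -/
def bmem (B : Finset (Fin n)) (t : ℕ) : Prop := ∃ j ∈ B, (j : ℕ) = t

instance (B : Finset (Fin n)) (t : ℕ) : Decidable (bmem B t) := by
  unfold bmem; infer_instance

theorem bmem_lt {B : Finset (Fin n)} {t : ℕ} (h : bmem B t) : t < n := by
  obtain ⟨j, _, rfl⟩ := h; exact j.isLt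

theorem bmem_mk {B : Finset (Fin n)} {t : ℕ} (h : t < n) :
    bmem B t ↔ (⟨t, h⟩ : Fin n) ∈ B := by
  constructor
  · rintro ⟨j, hj, rfl⟩; exact (by simpa using hj)
  · intro h'; exact ⟨_, h', rfl⟩

/-- the column permutation of `B` : product of `gen` over `B` in increasing order. -/
def col (B : Finset (Fin n)) : Equiv.Perm (Fin (n+1)) := wordProd (B.sort (· ≤ ·))

def astartP (B : Finset (Fin n)) (x a : ℕ) : Prop := ∀ t < x, a ≤ t → bmem B t

instance (B : Finset (Fin n)) (x a : ℕ) : Decidable (astartP B x a) := by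
  unfold astartP; infer_instance

theorem astartP_self (B : Finset (Fin n)) (x : ℕ) : astartP B x x := by
  intro t ht hat; omega

/-- start of the run of `B` ending just below `x`. -/
def astart (B : Finset (Fin n)) (x : ℕ) : ℕ := Nat.find ⟨x, astartP_self B x⟩

theorem astart_le (B : Finset (Fin n)) (x : ℕ) : astart B x ≤ x :=
  Nat.find_le (astartP_self B x)

theorem astart_spec (B : Finset (Fin n)) (x : ℕ) : astartP B x (astart B x) :=
  Nat.find_spec (⟨x, astartP_self B x⟩ : ∃ a, astartP B x a)

theorem astart_min {B : Finset (Fin n)} {x a : ℕ} (h : astartP B x a) : astart B x ≤ a :=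
  Nat.find_min' _ h

theorem astart_pred {B : Finset (Fin n)} {x : ℕ} (h : 0 < astart B x) :
    ¬ bmem B (astart B x - 1) := by
  intro hb
  have hlt : astart B x - 1 < astart B x := Nat.sub_lt h one_pos
  have h2 : ¬ astartP B x (astart B x - 1) := Nat.find_min _ hlt
  apply h2
  intro t ht hat
  rcases Nat.eq_or_lt_of_le hat with he | hl
  · rwa [← he]
  · exact astart_spec B x t ht (by omega)

theorem astart_eq_of {B : Finset (Fin n)} {x c : ℕ} (hle : c ≤ x)
    (hall : ∀ t, c ≤ t → t < x → bmem B t) (hpred : c = 0 ∨ ¬ bmem B (c-1)) :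
    astart B x = c := by
  have h1 : astart B x ≤ c := astart_min (fun t ht hct => hall t hct ht)
  rcases Nat.eq_or_lt_of_le h1 with he | hl
  · exact he
  · exfalso
    rcases hpred with h0 | hnp
    · omega
    · exact hnp (astart_spec B x (c-1) (by omega) (by omega))

theorem bmem_insert {B : Finset (Fin n)} {a : Fin n} {t : ℕ} :
    bmem (insert a B) t ↔ t = (a : ℕ) ∨ bmem B t := by
  constructor
  · rintro ⟨j, hj, rfl⟩
    rcases Finset.mem_insert.mp hj with h | h
    · exact Or.inl (by rw [h])
    · exact Or.inr ⟨j, h, rfl⟩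
  · rintro (rfl | ⟨j, hj, rfl⟩)
    · exact ⟨a, Finset.mem_insert_self a B, rfl⟩
    · exact ⟨j, Finset.mem_insert_of_mem hj, rfl⟩

theorem bmem_empty (t : ℕ) : ¬ bmem (∅ : Finset (Fin n)) t := by
  rintro ⟨j, hj, rfl⟩
  exact absurd hj (Finset.notMem_empty j)

/-- key pointwise formula for `col`. -/
theorem col_apply (B : Finset (Fin n)) (x : Fin (n+1)) :
    ((col B x : Fin (n+1)) : ℕ) = if bmem B (x : ℕ) then (x : ℕ) + 1 else astart B (x : ℕ) := by
  induction B using Finset.induction_on_min with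
  | empty =>
      have h1 : col (∅ : Finset (Fin n)) = 1 := by
        rw [col, Finset.sort_empty, wordProd_nil]
      have h2 : astart (∅ : Finset (Fin n)) (x : ℕ) = (x : ℕ) :=
        astart_eq_of le_rfl (fun t ht htx => absurd htx (by omega)) (Or.inr (bmem_empty _))
      rw [h1, if_neg (bmem_empty _), h2]
      rfl
  | insert a B' ha ih =>
      have hanotin : a ∉ B' := fun h => absurd (ha a h) (lt_irrefl a)
      have hsort : (insert a B').sort (· ≤ ·) = a :: B'.sort (· ≤ ·) :=
        Finset.sort_insert _ (fun b hb => (ha b hb).le) hanotin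
      have hcol : col (insert a B') = gen a * col B' := by
        rw [col, hsort, wordProd_cons]
        rfl
      have hBlt : ∀ t, bmem B' t → (a : ℕ) < t := by
        rintro t ⟨j, hj, rfl⟩
        exact_mod_cast ha j hj
      have hcolval : ((col (insert a B') x : Fin (n+1)) : ℕ) =
          if ((col B' x : Fin (n+1)) : ℕ) = (a : ℕ) then (a : ℕ) + 1
          else if ((col B' x : Fin (n+1)) : ℕ) = (a : ℕ) + 1 then (a : ℕ)
          else ((col B' x : Fin (n+1)) : ℕ) := by
        rw [hcol, Equiv.Perm.mul_apply]
        exact gen_val a (col B' x)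
      by_cases hx : bmem B' (x : ℕ)
      · have hxa : (a : ℕ) < (x : ℕ) := hBlt _ hx
        have hv : ((col B' x : Fin (n+1)) : ℕ) = (x : ℕ) + 1 := by rw [ih, if_pos hx]
        have hmem : bmem (insert a B') (x : ℕ) := bmem_insert.mpr (Or.inr hx)
        rw [hcolval, hv, if_neg (by omega), if_neg (by omega), if_pos hmem]
      · have hv : ((col B' x : Fin (n+1)) : ℕ) = astart B' (x : ℕ) := by rw [ih, if_neg hx]
        by_cases hxa : (x : ℕ) = (a : ℕ)
        · have has : astart B' (x : ℕ) = (x : ℕ) :=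
            astart_eq_of le_rfl (fun t ht htx => absurd htx (by omega))
              (Or.inr fun hb => by have := hBlt _ hb; omega)
          have hmem : bmem (insert a B') (x : ℕ) := bmem_insert.mpr (Or.inl hxa)
          rw [hcolval, hv, has, if_pos hxa, if_pos hmem]
          omega
        · have hnmem : ¬ bmem (insert a B') (x : ℕ) := by
            rw [bmem_insert]
            push_neg
            exact ⟨hxa, hx⟩
          rw [hcolval, hv, if_neg hnmem]
          by_cases hxlt : (x : ℕ) < (a : ℕ) + 1
          · have hcx : astart B' (x : ℕ) = (x : ℕ) :=
              astart_eq_of le_rfl (fun t ht htx => absurd htx (by omega))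
                (Or.inr fun hb => by have := hBlt _ hb; omega)
            have hBx : astart (insert a B') (x : ℕ) = (x : ℕ) := by
              apply astart_eq_of le_rfl (fun t ht htx => absurd htx (by omega))
              rcases Nat.eq_zero_or_pos (x : ℕ) with h0 | hpos
              · exact Or.inl h0
              · refine Or.inr fun hb => ?_
                rcases bmem_insert.mp hb with h | h
                · omega
                · have := hBlt _ h
                  omega
            rw [hcx, if_neg hxa, if_neg (by omega), hBx]
          · have hxgt : (a : ℕ) < (x : ℕ) := by omega
            have hcge : (a : ℕ) + 1 ≤ astart B' (x : ℕ) := by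
              by_contra hcon
              push_neg at hcon
              have hbna := astart_spec B' (x : ℕ) (a : ℕ) (by omega) (by omega)
              have := hBlt _ hbna
              omega
            by_cases hce : astart B' (x : ℕ) = (a : ℕ) + 1
            · have hBx : astart (insert a B') (x : ℕ) = (a : ℕ) := by
                apply astart_eq_of (by omega)
                · intro t hat htx
                  rcases Nat.eq_or_lt_of_le hat with he | hlt
                  · exact bmem_insert.mpr (Or.inl he.symm)
                  · exact bmem_insert.mpr (Or.inr (astart_spec B' (x : ℕ) t htx (by omega)))
                · rcases Nat.eq_zero_or_pos (a : ℕ) with h0 | hpos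
                  · exact Or.inl h0
                  · refine Or.inr fun hb => ?_
                    rcases bmem_insert.mp hb with h | h
                    · omega
                    · have := hBlt _ h
                      omega
              rw [if_neg (by omega), if_pos hce, hBx]
            · have hc2 : (a : ℕ) + 1 < astart B' (x : ℕ) := by omega
              have hBx : astart (insert a B') (x : ℕ) = astart B' (x : ℕ) := by
                apply astart_eq_of (astart_le B' (x : ℕ))
                · intro t hat htx
                  exact bmem_insert.mpr (Or.inr (astart_spec B' (x : ℕ) t htx hat))
                · refine Or.inr fun hb => ?_
                  rcases bmem_insert.mp hb with h | h
                  · omega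
                  · exact absurd h (astart_pred (by omega))
              rw [if_neg (by omega), if_neg hce, hBx]


theorem col_val_le (B : Finset (Fin n)) (x : Fin (n+1)) :
    ((col B x : Fin (n+1)) : ℕ) ≤ (x : ℕ) + 1 := by
  rw [col_apply]
  split_ifs
  · exact le_rfl
  · exact le_trans (astart_le B (x : ℕ)) (by omega)

theorem col_lt_iff {B : Finset (Fin n)} {x y : Fin (n+1)} (hxy : (x : ℕ) < (y : ℕ)) :
    ((col B y : Fin (n+1)) : ℕ) < ((col B x : Fin (n+1)) : ℕ) ↔
      ((∀ t, (x : ℕ) ≤ t → t < (y : ℕ) → bmem B t) ∧ ¬ bmem B (y : ℕ)) := by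
  by_cases hy : bmem B (y : ℕ)
  · rw [col_apply, col_apply, if_pos hy]
    constructor
    · intro h
      exfalso
      have hax := astart_le B (x : ℕ)
      split_ifs at h <;> omega
    · rintro ⟨-, hy'⟩
      exact absurd hy hy'
  · rw [col_apply, col_apply, if_neg hy]
    by_cases hall : ∀ t, (x : ℕ) ≤ t → t < (y : ℕ) → bmem B t
    · have hx : bmem B (x : ℕ) := hall _ le_rfl hxy
      have hay : astart B (y : ℕ) ≤ (x : ℕ) :=
        astart_min (fun t ht hxt => hall t hxt ht)
      rw [if_pos hx]
      constructor
      · intro _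
        exact ⟨hall, hy⟩
      · intro _
        omega
    · push_neg at hall
      obtain ⟨t, hxt, hty, htn⟩ := hall
      have hat : t < astart B (y : ℕ) := by
        by_contra hc
        push_neg at hc
        exact htn (astart_spec B (y : ℕ) t hty hc)
      have hax := astart_le B (x : ℕ)
      constructor
      · intro h
        exfalso
        split_ifs at h <;> omega
      · rintro ⟨hall', -⟩
        exact absurd (hall' t hxt hty) htn

theorem mem_invSet_col {B : Finset (Fin n)} {p : Fin (n+1) × Fin (n+1)} :
    p ∈ invSet (col B) ↔ (p.1 : ℕ) < (p.2 : ℕ) ∧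
      (∀ t, (p.1 : ℕ) ≤ t → t < (p.2 : ℕ) → bmem B t) ∧ ¬ bmem B (p.2 : ℕ) := by
  rw [mem_invSet]
  constructor
  · rintro ⟨h1, h2⟩
    have h1' : (p.1 : ℕ) < (p.2 : ℕ) := h1
    exact ⟨h1', (col_lt_iff h1').mp h2⟩
  · rintro ⟨h1, h2⟩
    exact ⟨h1, (col_lt_iff h1).mpr h2⟩

/-- existence of a non-member above `j`. -/
theorem nextoutP (B : Finset (Fin n)) (j : Fin n) : ∃ y, (j : ℕ) < y ∧ ¬ bmem B y :=
  ⟨n, j.isLt, fun h => absurd (bmem_lt h) (lt_irrefl n)⟩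

/-- the `y` paired with `x` in an inversion of `col B` : first non-member above `j`. -/
def nextout (B : Finset (Fin n)) (j : Fin n) : ℕ := Nat.find (nextoutP B j)

theorem nextout_spec (B : Finset (Fin n)) (j : Fin n) :
    (j : ℕ) < nextout B j ∧ ¬ bmem B (nextout B j) :=
  Nat.find_spec (nextoutP B j)

theorem nextout_le (B : Finset (Fin n)) (j : Fin n) : nextout B j ≤ n :=
  Nat.find_min' _ ⟨j.isLt, fun h => absurd (bmem_lt h) (lt_irrefl n)⟩

theorem nextout_min {B : Finset (Fin n)} {j : Fin n} {t : ℕ}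
    (h1 : (j : ℕ) < t) (h2 : t < nextout B j) : bmem B t := by
  have h3 := Nat.find_min (nextoutP B j) h2
  push_neg at h3
  exact h3 h1

theorem invc_col (B : Finset (Fin n)) : invc (col B) = B.card := by
  symm
  apply Finset.card_bij
    (fun (j : Fin n) (_ : j ∈ B) =>
      ((j.castSucc, (⟨nextout B j, by have := nextout_le B j; omega⟩ : Fin (n+1))) :
        Fin (n+1) × Fin (n+1)))
  · intro j hj
    rw [mem_invSet_col]
    refine ⟨by simpa using (nextout_spec B j).1, fun t ht1 ht2 => ?_, by
      simpa using (nextout_spec B j).2⟩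
    simp only [Fin.coe_castSucc] at ht1
    rcases Nat.eq_or_lt_of_le ht1 with he | hl
    · exact he ▸ ⟨j, hj, rfl⟩
    · exact nextout_min hl (by simpa using ht2)
  · intro j1 h1 j2 h2 he
    simp only [Prod.mk.injEq] at he
    exact Fin.castSucc_injective _ he.1
  · rintro ⟨x, y⟩ hp
    rw [mem_invSet_col] at hp
    dsimp only at hp
    obtain ⟨hxy, hall, hy⟩ := hp
    have hxB : bmem B (x : ℕ) := hall _ le_rfl hxy
    obtain ⟨j, hjB, hjv⟩ := hxB
    refine ⟨j, hjB, ?_⟩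
    have hx : j.castSucc = x := Fin.ext (by simpa using hjv)
    have hyval : nextout B j = (y : ℕ) := by
      have h1 : nextout B j ≤ (y : ℕ) :=
        Nat.find_min' (nextoutP B j) ⟨by omega, hy⟩
      rcases Nat.eq_or_lt_of_le h1 with he | hl
      · exact he
      · exfalso
        have h2 := nextout_spec B j
        exact h2.2 (hall _ (by omega) hl)
    simp only [Prod.ext_iff]
    exact ⟨hx, Fin.ext (by simpa using hyval)⟩

theorem col_card_length (B : Finset (Fin n)) : (B.sort (· ≤ ·)).length = B.card :=
  Finset.length_sort _

/-- if `j ∉ B` then `col B` maps `[0,j]` into itself. -/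
theorem col_bound {B : Finset (Fin n)} {j : ℕ} (hj : ¬ bmem B j) {x : Fin (n+1)}
    (hx : (x : ℕ) ≤ j) : ((col B x : Fin (n+1)) : ℕ) ≤ j := by
  rw [col_apply]
  split_ifs with h
  · have : (x : ℕ) ≠ j := fun he => hj (he ▸ h)
    omega
  · have := astart_le B (x : ℕ)
    omega


/-! ### Crossing sets -/

def cset (σ : Equiv.Perm (Fin (n+1))) : Finset (Fin n) :=
  Finset.univ.filter fun j => ∃ i : Fin (n+1), (i : ℕ) ≤ (j : ℕ) ∧ (j : ℕ) < ((σ i : Fin (n+1)) : ℕ)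

theorem bmem_cset {σ : Equiv.Perm (Fin (n+1))} {t : ℕ} :
    bmem (cset σ) t ↔ ∃ i : Fin (n+1), (i : ℕ) ≤ t ∧ t < ((σ i : Fin (n+1)) : ℕ) := by
  constructor
  · rintro ⟨j, hj, rfl⟩
    exact (Finset.mem_filter.mp hj).2
  · rintro ⟨i, hi, hti⟩
    have htn : t < n := by
      have h1 : ((σ i : Fin (n+1)) : ℕ) < n + 1 := (σ i).isLt
      omega
    exact ⟨⟨t, htn⟩, Finset.mem_filter.mpr ⟨Finset.mem_univ _, ⟨i, hi, hti⟩⟩, rfl⟩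

theorem perm_above {σ : Equiv.Perm (Fin (n+1))} {t : ℕ}
    (h : ∀ i : Fin (n+1), (i : ℕ) ≤ t → ((σ i : Fin (n+1)) : ℕ) ≤ t) :
    ∀ i : Fin (n+1), t < (i : ℕ) → t < ((σ i : Fin (n+1)) : ℕ) := by
  intro i hi
  by_contra hc
  push_neg at hc
  set T : Finset (Fin (n+1)) := Finset.univ.filter (fun z => (z : ℕ) ≤ t) with hT
  have himg : T.image σ = T := by
    apply Finset.eq_of_subset_of_card_le
    · intro z hz
      obtain ⟨w, hw, rfl⟩ := Finset.mem_image.mp hz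
      exact Finset.mem_filter.mpr ⟨Finset.mem_univ _, h w (Finset.mem_filter.mp hw).2⟩
    · rw [Finset.card_image_of_injective _ σ.injective]
  have hiT : σ i ∈ T := Finset.mem_filter.mpr ⟨Finset.mem_univ _, hc⟩
  rw [← himg] at hiT
  obtain ⟨w, hw, hwe⟩ := Finset.mem_image.mp hiT
  have : w = i := σ.injective hwe
  subst this
  exact absurd (Finset.mem_filter.mp hw).2 (by omega)

theorem notin_bound {σ : Equiv.Perm (Fin (n+1))} {t : ℕ} (h : ¬ bmem (cset σ) t) :
    ∀ i : Fin (n+1), (i : ℕ) ≤ t → ((σ i : Fin (n+1)) : ℕ) ≤ t := by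
  intro i hi
  by_contra hc
  push_neg at hc
  exact h (bmem_cset.mpr ⟨i, hi, hc⟩)

theorem notin_above {σ : Equiv.Perm (Fin (n+1))} {t : ℕ} (h : ¬ bmem (cset σ) t) :
    ∀ i : Fin (n+1), t < (i : ℕ) → t < ((σ i : Fin (n+1)) : ℕ) :=
  perm_above (notin_bound h)

/-- no-cancellation : an inversion of the column of the crossing set is an inversion of `ω`. -/
theorem nc_lemma {ω : Equiv.Perm (Fin (n+1))} (hav : Avoids312 ω) {y : Fin (n+1)}
    (hy : ¬ bmem (cset ω) (y : ℕ)) :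
    ∀ x : Fin (n+1), (x : ℕ) < (y : ℕ) →
      (∀ t, (x : ℕ) ≤ t → t < (y : ℕ) → bmem (cset ω) t) →
      ((ω y : Fin (n+1)) : ℕ) < ((ω x : Fin (n+1)) : ℕ) := by
  suffices H : ∀ k, ∀ x : Fin (n+1), (y : ℕ) - (x : ℕ) ≤ k → (x : ℕ) < (y : ℕ) →
      (∀ t, (x : ℕ) ≤ t → t < (y : ℕ) → bmem (cset ω) t) →
      ((ω y : Fin (n+1)) : ℕ) < ((ω x : Fin (n+1)) : ℕ) by
    exact fun x h1 h2 => H (y : ℕ) x (by omega) h1 h2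
  intro k
  induction k with
  | zero => intro x h1 h2 _; omega
  | succ k ih =>
      intro x hk hxy hall
      by_contra hcon
      push_neg at hcon
      have hne : ((ω x : Fin (n+1)) : ℕ) ≠ ((ω y : Fin (n+1)) : ℕ) := by
        intro he
        have h2 : ω x = ω y := Fin.ext he
        have h3 : x = y := ω.injective h2
        rw [h3] at hxy
        omega
      have hlt : ((ω x : Fin (n+1)) : ℕ) < ((ω y : Fin (n+1)) : ℕ) := by omega
      have hmid : ∀ i : Fin (n+1), (x : ℕ) < (i : ℕ) → (i : ℕ) < (y : ℕ) →
          ((ω y : Fin (n+1)) : ℕ) < ((ω i : Fin (n+1)) : ℕ) := by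
        intro i hi1 hi2
        exact ih i (by omega) hi2 (fun t ht1 ht2 => hall t (by omega) ht2)
      have hvy : ((ω y : Fin (n+1)) : ℕ) ≤ (y : ℕ) := notin_bound hy y le_rfl
      have hcount : ((ω y : Fin (n+1)) : ℕ) ≤ (x : ℕ) + 1 := by
        have hinj : (Finset.Iic (ω y)).card ≤ (Finset.Iic x ∪ {y}).card := by
          apply Finset.card_le_card_of_injOn (fun z => ω⁻¹ z)
          · intro z hz
            have hzv : (z : ℕ) ≤ ((ω y : Fin (n+1)) : ℕ) := Fin.le_def.mp (Finset.mem_Iic.mp hz)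
            set i : Fin (n+1) := ω⁻¹ z with hidef
            have hzi : ω i = z := ω.apply_symm_apply z
            have h1 : ¬ ((x : ℕ) < (i : ℕ) ∧ (i : ℕ) < (y : ℕ)) := by
              rintro ⟨ha, hb⟩
              have := hmid i ha hb
              rw [hzi] at this
              omega
            have h2 : ¬ ((y : ℕ) < (i : ℕ)) := by
              intro hgt
              have := notin_above hy i hgt
              rw [hzi] at this
              omega
            rcases Nat.lt_or_ge (x : ℕ) (i : ℕ) with hc | hc
            · have hiy : (i : ℕ) = (y : ℕ) := by omega
              exact Finset.mem_union_right _ (Finset.mem_singleton.mpr (Fin.ext hiy))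
            · exact Finset.mem_union_left _ (Finset.mem_Iic.mpr (Fin.le_def.mpr hc))
          · intro a _ b _ hab
            exact ω⁻¹.injective hab
        rw [Fin.card_Iic] at hinj
        have h3 := Finset.card_union_le (Finset.Iic x) ({y} : Finset (Fin (n+1)))
        rw [Fin.card_Iic, Finset.card_singleton] at h3
        omega
      obtain ⟨q, hqx, hqv⟩ := bmem_cset.mp (hall (x : ℕ) le_rfl hxy)
      have hqney : ((ω q : Fin (n+1)) : ℕ) ≠ ((ω y : Fin (n+1)) : ℕ) := by
        intro he
        have h3 : q = y := ω.injective (Fin.ext he)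
        rw [h3] at hqx
        omega
      have hqy : ((ω y : Fin (n+1)) : ℕ) < ((ω q : Fin (n+1)) : ℕ) := by omega
      have hqnex : (q : ℕ) ≠ (x : ℕ) := by
        intro he
        have h3 : q = x := Fin.ext he
        rw [h3] at hqy
        omega
      exact hav q x y (Fin.lt_def.mpr (by omega)) (Fin.lt_def.mpr hxy)
        ⟨Fin.lt_def.mpr hlt, Fin.lt_def.mpr hqy⟩


/-! ### inversion counting for products with columns -/

theorem sdiff_card_le (σ : Equiv.Perm (Fin (n+1))) (B : Finset (Fin n)) :
    ((invSet (σ * col B)) \ (invSet (col B))).card ≤ invc σ := by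
  apply Finset.card_le_card_of_injOn (fun p => (col B p.1, col B p.2))
  · intro p hp
    obtain ⟨hs, hnt⟩ := Finset.mem_sdiff.mp hp
    obtain ⟨h1, h2⟩ := mem_invSet.mp hs
    rw [mem_invSet] at hnt
    push_neg at hnt
    have h4 : col B p.1 ≠ col B p.2 := fun he => absurd ((col B).injective he) h1.ne
    have h5 : col B p.1 < col B p.2 := lt_of_le_of_ne (hnt h1) h4
    rw [Finset.mem_coe, mem_invSet]
    refine ⟨h5, ?_⟩
    simpa [Equiv.Perm.mul_apply] using h2
  · intro a _ b _ hab
    simp only [Prod.mk.injEq] at hab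
    exact Prod.ext ((col B).injective hab.1) ((col B).injective hab.2)

theorem inter_card_le (σ : Equiv.Perm (Fin (n+1))) (B : Finset (Fin n)) :
    ((invSet (σ * col B)) ∩ (invSet (col B))).card ≤ B.card := by
  calc ((invSet (σ * col B)) ∩ (invSet (col B))).card ≤ (invSet (col B)).card :=
        Finset.card_le_card (Finset.inter_subset_right)
  _ = B.card := invc_col B

theorem invc_mul_col_le (σ : Equiv.Perm (Fin (n+1))) (B : Finset (Fin n)) :
    invc (σ * col B) ≤ invc σ + B.card := by
  have h1 := Finset.card_inter_add_card_sdiff (invSet (σ * col B)) (invSet (col B))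
  have h2 := sdiff_card_le σ B
  have h3 := inter_card_le σ B
  show (invSet (σ * col B)).card ≤ invc σ + B.card
  omega

theorem nc_of_invc_eq {σ : Equiv.Perm (Fin (n+1))} {B : Finset (Fin n)}
    (heq : invc (σ * col B) = invc σ + B.card) :
    invSet (col B) ⊆ invSet (σ * col B) := by
  have h1 := Finset.card_inter_add_card_sdiff (invSet (σ * col B)) (invSet (col B))
  have h2 := sdiff_card_le σ B
  have h3 := inter_card_le σ B
  have h4 : invc (σ * col B) = (invSet (σ * col B)).card := rfl
  have h5 : ((invSet (σ * col B)) ∩ (invSet (col B))).card = B.card := by omega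
  have h6 : (invSet (σ * col B)) ∩ (invSet (col B)) = invSet (col B) := by
    apply Finset.eq_of_subset_of_card_le (Finset.inter_subset_right)
    rw [h5]
    exact le_of_eq (invc_col B)
  intro p hp
  have : p ∈ (invSet (σ * col B)) ∩ (invSet (col B)) := h6.symm ▸ hp
  exact (Finset.mem_inter.mp this).1

theorem invc_eq_of_nc {σ : Equiv.Perm (Fin (n+1))} {B : Finset (Fin n)}
    (hnc : invSet (col B) ⊆ invSet (σ * col B)) :
    invc (σ * col B) = invc σ + B.card := by
  have h1 := Finset.card_inter_add_card_sdiff (invSet (σ * col B)) (invSet (col B))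
  have h6 : (invSet (σ * col B)) ∩ (invSet (col B)) = invSet (col B) :=
    Finset.inter_eq_right.mpr hnc
  have h5 : ((invSet (σ * col B)) ∩ (invSet (col B))).card = B.card := by
    rw [h6]
    exact invc_col B
  have h7 : ((invSet (σ * col B)) \ (invSet (col B))).card = invc σ := by
    apply Finset.card_bij (fun p _ => ((col B p.1, col B p.2) : Fin (n+1) × Fin (n+1)))
    · intro p hp
      obtain ⟨hs, hnt⟩ := Finset.mem_sdiff.mp hp
      obtain ⟨h1', h2'⟩ := mem_invSet.mp hs
      rw [mem_invSet] at hnt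
      push_neg at hnt
      have h4 : col B p.1 ≠ col B p.2 := fun he => absurd ((col B).injective he) h1'.ne
      rw [mem_invSet]
      refine ⟨lt_of_le_of_ne (hnt h1') h4, ?_⟩
      simpa [Equiv.Perm.mul_apply] using h2'
    · intro a _ b _ hab
      simp only [Prod.mk.injEq] at hab
      exact Prod.ext ((col B).injective hab.1) ((col B).injective hab.2)
    · rintro ⟨u, v⟩ huv
      obtain ⟨huv1, huv2⟩ := mem_invSet.mp huv
      dsimp only at huv1 huv2
      set x := (col B)⁻¹ u with hx
      set y := (col B)⁻¹ v with hy
      have hcx : col B x = u := (col B).apply_symm_apply u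
      have hcy : col B y = v := (col B).apply_symm_apply v
      have hxyne : x ≠ y := fun he => absurd (by rw [← hcx, ← hcy, he] : u = v) huv1.ne
      have hxy : x < y := by
        rcases lt_or_gt_of_ne hxyne with h | h
        · exact h
        · exfalso
          have hmem : ((y, x) : Fin (n+1) × Fin (n+1)) ∈ invSet (col B) := by
            rw [mem_invSet]
            exact ⟨h, by rw [hcx, hcy]; exact huv1⟩
          have := (mem_invSet.mp (hnc hmem)).2
          dsimp only at this
          simp only [Equiv.Perm.mul_apply, hcx, hcy] at this
          exact absurd huv2 this.asymm
      refine ⟨(x, y), ?_, by simp [hcx, hcy]⟩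
      rw [Finset.mem_sdiff, mem_invSet, mem_invSet]
      refine ⟨⟨hxy, by simp only [Equiv.Perm.mul_apply, hcx, hcy]; exact huv2⟩, ?_⟩
      rintro ⟨-, hcc⟩
      rw [hcx, hcy] at hcc
      exact absurd huv1 hcc.asymm
  show (invSet (σ * col B)).card = invc σ + B.card
  omega

/-! ### the core step lemma (for the ⇐ direction) -/

theorem bmem_mono {B1 B2 : Finset (Fin n)} (h : B1 ⊆ B2) {t : ℕ} (hb : bmem B1 t) : bmem B2 t := by
  obtain ⟨j, hj, rfl⟩ := hb
  exact ⟨j, h hj, rfl⟩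

theorem core_step {σ : Equiv.Perm (Fin (n+1))} {B : Finset (Fin n)}
    (hav : Avoids312 σ) (hsub : cset σ ⊆ B)
    (hnc : invSet (col B) ⊆ invSet (σ * col B)) :
    Avoids312 (σ * col B) ∧ cset (σ * col B) ⊆ B := by
  set C := col B with hC
  set ω := σ * col B with hw
  have hwap : ∀ x : Fin (n+1), ω x = σ (C x) := fun x => rfl
  constructor
  · intro i j k hij hjk ⟨h1, h2⟩
    have hjkC : (j, k) ∉ invSet C := by
      intro hmem
      have := (mem_invSet.mp (hnc hmem)).2
      dsimp only at this
      exact absurd h1 this.asymm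
    have hCjk : C j < C k := by
      have hne : C j ≠ C k := fun he => absurd (C.injective he) hjk.ne
      rcases lt_or_gt_of_ne hne with h | h
      · exact h
      · exact absurd (mem_invSet.mpr ⟨hjk, h⟩) hjkC
    have hCij : ¬ (C i < C j) := by
      intro hlt
      exact hav (C i) (C j) (C k) hlt hCjk ⟨h1, h2⟩
    have hCki : ¬ (C k < C i) := by
      intro hlt
      have hik : ((i, k) : Fin (n+1) × Fin (n+1)) ∈ invSet C := mem_invSet.mpr ⟨hij.trans hjk, hlt⟩
      rw [mem_invSet_col] at hik
      obtain ⟨hik1, hik2, hik3⟩ := hik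
      dsimp only at hik1 hik2 hik3
      apply hjkC
      rw [mem_invSet_col]
      have hjklt : (j : ℕ) < (k : ℕ) := hjk
      refine ⟨hjklt, fun t ht1 ht2 => hik2 t ?_ (by exact ht2), hik3⟩
      have h8 : (j : ℕ) ≤ t := ht1
      have h9 : (i : ℕ) < (j : ℕ) := hij
      omega
    have hCji : C j < C i := by
      have hne : C j ≠ C i := fun he => absurd (C.injective he) hij.ne.symm
      rcases lt_or_gt_of_ne hne with h | h
      · exact h
      · exact absurd h hCij
    have hijC : ((i, j) : Fin (n+1) × Fin (n+1)) ∈ invSet C := mem_invSet.mpr ⟨hij, hCji⟩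
    rw [mem_invSet_col] at hijC
    obtain ⟨hij1, hij2, hij3⟩ := hijC
    dsimp only at hij1 hij2 hij3
    have hjcs : ¬ bmem (cset σ) (j : ℕ) := fun hb => hij3 (bmem_mono hsub hb)
    have hiB : bmem B (i : ℕ) := hij2 _ le_rfl hij1
    have hCi : ((C i : Fin (n+1)) : ℕ) = (i : ℕ) + 1 := by
      rw [hC, col_apply, if_pos hiB]
    have hCile : ((C i : Fin (n+1)) : ℕ) ≤ (j : ℕ) := by
      have : (i : ℕ) < (j : ℕ) := hij
      omega
    have hsCi : ((σ (C i) : Fin (n+1)) : ℕ) ≤ (j : ℕ) := notin_bound hjcs _ hCile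
    have h2v : ((σ (C k) : Fin (n+1)) : ℕ) < ((σ (C i) : Fin (n+1)) : ℕ) := h2
    rcases Nat.lt_or_ge (j : ℕ) ((C k : Fin (n+1)) : ℕ) with hck | hck
    · have := notin_above hjcs (C k) hck
      omega
    · by_cases hkB : bmem B (k : ℕ)
      · have hCk : ((C k : Fin (n+1)) : ℕ) = (k : ℕ) + 1 := by
          rw [hC, col_apply, if_pos hkB]
        have : (j : ℕ) < (k : ℕ) := hjk
        omega
      · have hCk : ((C k : Fin (n+1)) : ℕ) = astart B (k : ℕ) := by
          rw [hC, col_apply, if_neg hkB]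
        have hjmem : bmem B (j : ℕ) := astart_spec B (k : ℕ) (j : ℕ) hjk (by omega)
        exact absurd hjmem hij3
  · intro j hj
    by_contra hjB
    have hjBn : ¬ bmem B (j : ℕ) := fun hb => by
      obtain ⟨j', hj', hje⟩ := hb
      exact hjB (by rwa [show j' = j from Fin.ext hje] at hj')
    have hjcs : ¬ bmem (cset σ) (j : ℕ) := fun hb => hjBn (bmem_mono hsub hb)
    have hbj : bmem (cset ω) (j : ℕ) := ⟨j, hj, rfl⟩
    obtain ⟨i, hi, hlt⟩ := bmem_cset.mp hbj
    rw [hwap] at hlt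
    have hCi : ((C i : Fin (n+1)) : ℕ) ≤ (j : ℕ) := col_bound hjBn hi
    have := notin_bound hjcs (C i) hCi
    omega


/-! ### the peeling step (for the ⇒ direction) -/

theorem peel_nc {ω : Equiv.Perm (Fin (n+1))} (hav : Avoids312 ω) :
    invSet (col (cset ω)) ⊆ invSet ω := by
  intro p hp
  rw [mem_invSet_col] at hp
  obtain ⟨h1, h2, h3⟩ := hp
  rw [mem_invSet]
  exact ⟨Fin.lt_def.mpr h1, Fin.lt_def.mpr (nc_lemma hav h3 p.1 h1 h2)⟩

theorem peel_decomp (ω : Equiv.Perm (Fin (n+1))) :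
    (ω * (col (cset ω))⁻¹) * col (cset ω) = ω := inv_mul_cancel_right ω (col (cset ω))

theorem peel_invc {ω : Equiv.Perm (Fin (n+1))} (hav : Avoids312 ω) :
    invc ω = invc (ω * (col (cset ω))⁻¹) + (cset ω).card := by
  have h := invc_eq_of_nc (σ := ω * (col (cset ω))⁻¹) (B := cset ω)
    (by rw [peel_decomp]; exact peel_nc hav)
  rwa [peel_decomp] at h

theorem peel_avoids {ω : Equiv.Perm (Fin (n+1))} (hav : Avoids312 ω) :
    Avoids312 (ω * (col (cset ω))⁻¹) := by
  set B := cset ω with hB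
  set C := col B with hC
  intro u v w huv hvw hpat
  obtain ⟨h1, h2⟩ := hpat
  set x := C⁻¹ u with hx
  set y := C⁻¹ v with hy
  set z := C⁻¹ w with hz
  have hsu : (ω * C⁻¹) u = ω x := rfl
  have hsv : (ω * C⁻¹) v = ω y := rfl
  have hsw : (ω * C⁻¹) w = ω z := rfl
  rw [hsv, hsw] at h1
  rw [hsw, hsu] at h2
  have hCx : C x = u := C.apply_symm_apply u
  have hCy : C y = v := C.apply_symm_apply v
  have hCz : C z = w := C.apply_symm_apply w
  have hxy : x < y := by
    have hne : x ≠ y := fun he => absurd (by rw [← hCx, ← hCy, he]) huv.ne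
    rcases lt_or_gt_of_ne hne with h | h
    · exact h
    · exfalso
      have hmem : ((y, x) : Fin (n+1) × Fin (n+1)) ∈ invSet C := by
        rw [mem_invSet]
        exact ⟨h, by rw [hCx, hCy]; exact huv⟩
      have := (mem_invSet.mp (peel_nc hav hmem)).2
      dsimp only at this
      exact absurd (h1.trans h2) this.asymm
  have hxz : x < z := by
    have hne : x ≠ z := fun he => absurd (by rw [← hCx, ← hCz, he]) (huv.trans hvw).ne
    rcases lt_or_gt_of_ne hne with h | h
    · exact h
    · exfalso
      have hmem : ((z, x) : Fin (n+1) × Fin (n+1)) ∈ invSet C := by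
        rw [mem_invSet]
        exact ⟨h, by rw [hCx, hCz]; exact huv.trans hvw⟩
      have := (mem_invSet.mp (peel_nc hav hmem)).2
      dsimp only at this
      exact absurd h2 this.asymm
  rcases lt_trichotomy y z with hyz | hyz | hyz
  · exact hav x y z hxy hyz ⟨h1, h2⟩
  · exact absurd (by rw [← hCy, ← hCz, hyz]) hvw.ne
  · have hmem : ((z, y) : Fin (n+1) × Fin (n+1)) ∈ invSet C := by
      rw [mem_invSet]
      exact ⟨hyz, by rw [hCy, hCz]; exact hvw⟩
    rw [mem_invSet_col] at hmem
    obtain ⟨hm1, hm2, hm3⟩ := hmem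
    dsimp only at hm1 hm2 hm3
    have hxyn : ((x : Fin (n+1)) : ℕ) < ((y : Fin (n+1)) : ℕ) := hxy
    have hnxy : ((x, y) : Fin (n+1) × Fin (n+1)) ∉ invSet C := by
      rw [mem_invSet]
      rintro ⟨-, hc⟩
      rw [hCx, hCy] at hc
      exact absurd huv hc.asymm
    rw [mem_invSet_col] at hnxy
    push_neg at hnxy
    have hex : ∃ t, ((x : Fin (n+1)) : ℕ) ≤ t ∧ t < ((y : Fin (n+1)) : ℕ) ∧ ¬ bmem B t := by
      by_contra hcon
      push_neg at hcon
      exact hm3 (hnxy hxyn (fun t ha hb => hcon t ha hb))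
    obtain ⟨t, ht1, ht2, ht3⟩ := hex
    have htz : t < ((z : Fin (n+1)) : ℕ) := by
      by_contra hc
      push_neg at hc
      exact ht3 (hm2 t hc ht2)
    have hxt : ((ω x : Fin (n+1)) : ℕ) ≤ t := notin_bound ht3 x ht1
    have hzt : t < ((ω z : Fin (n+1)) : ℕ) := notin_above ht3 z htz
    have h2n : ((ω z : Fin (n+1)) : ℕ) < ((ω x : Fin (n+1)) : ℕ) := h2
    omega

theorem peel_cset {ω : Equiv.Perm (Fin (n+1))} :
    cset (ω * (col (cset ω))⁻¹) ⊆ cset ω := by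
  set B := cset ω with hB
  set C := col B with hC
  intro j hj
  by_contra hjB
  have hjnb : ¬ bmem B (j : ℕ) := fun hb => by
    obtain ⟨j', hj', hje⟩ := hb
    exact hjB (by rwa [show j' = j from Fin.ext hje] at hj')
  have hCb : ∀ i : Fin (n+1), (i : ℕ) ≤ (j : ℕ) → ((C i : Fin (n+1)) : ℕ) ≤ (j : ℕ) :=
    fun i hi => col_bound hjnb hi
  have hCinvb : ∀ z : Fin (n+1), (z : ℕ) ≤ (j : ℕ) → ((C⁻¹ z : Fin (n+1)) : ℕ) ≤ (j : ℕ) := by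
    intro z hz
    by_contra hc
    push_neg at hc
    have := perm_above hCb (C⁻¹ z) hc
    rw [show C (C⁻¹ z) = z from C.apply_symm_apply z] at this
    omega
  have hbj : bmem (cset (ω * C⁻¹)) (j : ℕ) := ⟨j, hj, rfl⟩
  obtain ⟨i, hi, hlt⟩ := bmem_cset.mp hbj
  have hmul : (ω * C⁻¹) i = ω (C⁻¹ i) := rfl
  rw [hmul] at hlt
  have := notin_bound hjnb (C⁻¹ i) (hCinvb i hi)
  omega

theorem peel_prefix {ω : Equiv.Perm (Fin (n+1))} (hav : Avoids312 ω) {k : ℕ}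
    (hfix : ∀ i : Fin (n+1), (i : ℕ) < k → ω i = i) :
    ∀ i : Fin (n+1), (i : ℕ) < k + 1 → (ω * (col (cset ω))⁻¹) i = i := by
  set B := cset ω with hB
  set C := col B with hC
  have hnotb : ∀ t, t < k → ¬ bmem B t := by
    intro t htk hb
    obtain ⟨i0, hi0, hlt⟩ := bmem_cset.mp hb
    have h0 := hfix i0 (by omega)
    rw [h0] at hlt
    omega
  have hCfix : ∀ i : Fin (n+1), (i : ℕ) < k → C i = i := by
    intro i hik
    apply Fin.ext
    rw [hC, col_apply, if_neg (hnotb _ hik)]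
    apply astart_eq_of le_rfl (fun t ht htx => absurd htx (by omega))
    rcases Nat.eq_zero_or_pos (i : ℕ) with h0 | hpos
    · exact Or.inl h0
    · exact Or.inr (hnotb _ (by omega))
  intro i hik1
  rcases Nat.lt_or_ge (i : ℕ) k with hik | hik
  · have h1 : C i = i := hCfix i hik
    have h2 : C⁻¹ i = i := C.injective (by rw [show C (C⁻¹ i) = i from C.apply_symm_apply i, h1])
    show ω (C⁻¹ i) = i
    rw [h2]
    exact hfix i hik
  · have hik2 : (i : ℕ) = k := by omega
    by_cases hfk : ω i = i
    · have hkb : ¬ bmem B (i : ℕ) := by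
        intro hb
        obtain ⟨q, hq, hlt⟩ := bmem_cset.mp hb
        rcases Nat.lt_or_ge (q : ℕ) k with h | h
        · have h0 := hfix q h
          rw [h0] at hlt
          omega
        · have hqi : q = i := Fin.ext (by omega)
          rw [hqi, hfk] at hlt
          omega
      have h1 : C i = i := by
        apply Fin.ext
        rw [hC, col_apply, if_neg hkb]
        apply astart_eq_of le_rfl (fun t ht htx => absurd htx (by omega))
        rcases Nat.eq_zero_or_pos (i : ℕ) with h0 | hpos
        · exact Or.inl h0
        · exact Or.inr (hnotb _ (by omega))
      have h2 : C⁻¹ i = i := C.injective (by rw [show C (C⁻¹ i) = i from C.apply_symm_apply i, h1])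
      show ω (C⁻¹ i) = i
      rw [h2]
      exact hfk
    · have hgt : (i : ℕ) < ((ω i : Fin (n+1)) : ℕ) := by
        by_contra hc
        push_neg at hc
        rcases Nat.lt_or_ge ((ω i : Fin (n+1)) : ℕ) (i : ℕ) with h | h
        · have hz := hfix (ω i) (by omega)
          have := ω.injective hz
          omega
        · exact hfk (Fin.ext (by omega))
      have hkn : (i : ℕ) < n := by
        have := (ω i).isLt
        omega
      have hkB : bmem B (i : ℕ) := bmem_cset.mpr ⟨i, le_rfl, hgt⟩
      have hy1 : (i : ℕ) < nextout B ⟨(i : ℕ), hkn⟩ := (nextout_spec B ⟨(i : ℕ), hkn⟩).1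
      have hy2 : ¬ bmem B (nextout B ⟨(i : ℕ), hkn⟩) := (nextout_spec B ⟨(i : ℕ), hkn⟩).2
      have hyn : nextout B ⟨(i : ℕ), hkn⟩ ≤ n := nextout_le B ⟨(i : ℕ), hkn⟩
      set yv := nextout B ⟨(i : ℕ), hkn⟩ with hyv
      set fy : Fin (n+1) := ⟨yv, by omega⟩ with hfy
      have hally : ∀ t, (i : ℕ) ≤ t → t < yv → bmem B t := by
        intro t ht1 ht2
        rcases Nat.eq_or_lt_of_le ht1 with he | hl
        · rwa [← he]
        · exact nextout_min hl ht2
      have hCfy : C fy = i := by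
        apply Fin.ext
        rw [hC, col_apply, if_neg (by exact hy2)]
        apply astart_eq_of (by omega) (fun t ht htx => hally t ht htx)
        rcases Nat.eq_zero_or_pos (i : ℕ) with h0 | hpos
        · exact Or.inl h0
        · exact Or.inr (hnotb _ (by omega))
      have hCinv : C⁻¹ i = fy := C.injective (by rw [show C (C⁻¹ i) = i from C.apply_symm_apply i, hCfy])
      have hwy : ((ω fy : Fin (n+1)) : ℕ) < ((ω i : Fin (n+1)) : ℕ) :=
        nc_lemma hav (y := fy) (by exact hy2) i (by exact hy1) (by exact hally)
      have hge : (i : ℕ) ≤ ((ω fy : Fin (n+1)) : ℕ) := by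
        by_contra hc
        push_neg at hc
        have hz := hfix (ω fy) (by omega)
        have := ω.injective hz
        have hfyv : ((fy : Fin (n+1)) : ℕ) = yv := rfl
        rw [← this] at hfyv
        omega
      rcases Nat.eq_or_lt_of_le hge with he | hlt2
      · show ω (C⁻¹ i) = i
        rw [hCinv]
        exact Fin.ext he.symm
      · exfalso
        have hpω : ω (ω⁻¹ i) = i := ω.apply_symm_apply i
        have hpgt : (i : ℕ) < ((ω⁻¹ i : Fin (n+1)) : ℕ) := by
          by_contra hc
          push_neg at hc
          rcases Nat.lt_or_ge ((ω⁻¹ i : Fin (n+1)) : ℕ) (i : ℕ) with h | h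
          · have hz := hfix (ω⁻¹ i) (by omega)
            rw [hpω] at hz
            have h9 : ((ω⁻¹ i : Fin (n+1)) : ℕ) = (i : ℕ) := by rw [← hz]
            omega
          · have hpi : ω⁻¹ i = i := Fin.ext (by omega)
            rw [hpi] at hpω
            exact hfk hpω
        have hplt : ((ω⁻¹ i : Fin (n+1)) : ℕ) < yv := by
          by_contra hc
          push_neg at hc
          rcases Nat.eq_or_lt_of_le hc with he2 | hl
          · have hpfy : ω⁻¹ i = fy := Fin.ext he2.symm
            rw [hpfy] at hpω
            rw [hpω] at hlt2
            omega
          · have := notin_above (σ := ω) (t := yv) hy2 (ω⁻¹ i) hl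
            rw [hpω] at this
            omega
        refine hav i (ω⁻¹ i) fy (Fin.lt_def.mpr hpgt) (Fin.lt_def.mpr hplt) ⟨?_, ?_⟩
        · rw [hpω]
          exact Fin.lt_def.mpr hlt2
        · exact Fin.lt_def.mpr hwy

theorem fix_all_eq_one {σ : Equiv.Perm (Fin (n+1))}
    (h : ∀ i : Fin (n+1), (i : ℕ) < n → σ i = i) : σ = 1 := by
  apply Equiv.ext
  intro x
  rcases Nat.lt_or_ge (x : ℕ) n with hx | hx
  · rw [h x hx]
    rfl
  · have : σ x = x := by
      by_contra hc
      have h1 : ((σ x : Fin (n+1)) : ℕ) ≠ (x : ℕ) := fun he => hc (Fin.ext he)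
      have h2 : ((σ x : Fin (n+1)) : ℕ) < n := by
        have ha := (σ x).isLt
        have hb := x.isLt
        omega
      have h3 := h (σ x) h2
      exact hc (σ.injective h3)
    rw [this]
    rfl


/-! ### assembly : the ⇐ direction -/

theorem avoids_one : Avoids312 (1 : Equiv.Perm (Fin (n+1))) := by
  intro i j k hij hjk hpat
  obtain ⟨h1, h2⟩ := hpat
  simp only [Equiv.Perm.coe_one, id_eq] at h1 h2
  exact absurd (hij.trans (hjk.trans h2)) (lt_irrefl i)

theorem cset_one : ∀ j : Fin n, j ∉ cset (1 : Equiv.Perm (Fin (n+1))) := by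
  intro j hj
  have : bmem (cset (1 : Equiv.Perm (Fin (n+1)))) (j : ℕ) := ⟨j, hj, rfl⟩
  obtain ⟨i, hi, hlt⟩ := bmem_cset.mp this
  simp only [Equiv.Perm.coe_one, id_eq] at hlt
  omega

theorem left_main (S' : ℕ → Finset (Fin n)) (hmono : ∀ a b : ℕ, a ≤ b → S' a ⊆ S' b) :
    ∀ k (ω : Equiv.Perm (Fin (n+1))),
      wordProd ((List.range k).flatMap fun p => (S' p).sort (· ≤ ·)) = ω →
      invc ω = ((List.range k).flatMap fun p => (S' p).sort (· ≤ ·)).length →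
      Avoids312 ω ∧ ∀ p, k ≤ p + 1 → cset ω ⊆ S' p := by
  intro k
  induction k with
  | zero =>
      intro ω hw hl
      simp only [List.range_zero, List.flatMap_nil] at hw
      rw [wordProd_nil] at hw
      subst hw
      exact ⟨avoids_one, fun p _ j hj => absurd hj (cset_one j)⟩
  | succ k ih =>
      intro ω hw hl
      rw [List.range_succ, List.flatMap_append] at hw hl
      simp only [List.flatMap_cons, List.flatMap_nil, List.append_nil] at hw hl
      set W' := (List.range k).flatMap fun p => (S' p).sort (· ≤ ·) with hW'
      set σ := wordProd W' with hσ
      have hprod : σ * col (S' k) = ω := by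
        rw [← hw, wordProd_append]
        rfl
      have hlen : (W' ++ (S' k).sort (· ≤ ·)).length = W'.length + (S' k).card := by
        rw [List.length_append, col_card_length]
      have h1 : invc σ ≤ W'.length := invc_wordProd_le W'
      have h2 : invc ω ≤ invc σ + (S' k).card := by
        rw [← hprod]
        exact invc_mul_col_le σ (S' k)
      rw [hlen] at hl
      have h3 : invc σ = W'.length := by omega
      have h4 : invc ω = invc σ + (S' k).card := by omega
      obtain ⟨havσ, hsubs⟩ := ih σ rfl h3
      have hsubk : cset σ ⊆ S' k := hsubs k (by omega)
      have hnc := nc_of_invc_eq (σ := σ) (B := S' k) (by rw [hprod, h4])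
      obtain ⟨hav2, hcs2⟩ := core_step havσ hsubk hnc
      rw [hprod] at hav2 hcs2
      exact ⟨hav2, fun p hp => hcs2.trans (hmono k p (by omega))⟩

/-! ### assembly : the ⇒ direction -/

def ωseq (ω : Equiv.Perm (Fin (n+1))) : ℕ → Equiv.Perm (Fin (n+1))
  | 0 => ω
  | (k+1) => (ωseq ω k) * (col (cset (ωseq ω k)))⁻¹

theorem ωseq_invariant {ω : Equiv.Perm (Fin (n+1))} (hav : Avoids312 ω) :
    ∀ k, Avoids312 (ωseq ω k) ∧ (∀ i : Fin (n+1), (i : ℕ) < k → ωseq ω k i = i) := by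
  intro k
  induction k with
  | zero => exact ⟨hav, fun i hi => absurd hi (by omega)⟩
  | succ k ih => exact ⟨peel_avoids ih.1, peel_prefix ih.1 ih.2⟩

theorem ωseq_antitone {ω : Equiv.Perm (Fin (n+1))} :
    ∀ k l : ℕ, k ≤ l → cset (ωseq ω l) ⊆ cset (ωseq ω k) := by
  intro k l hkl
  induction l with
  | zero =>
      have : k = 0 := by omega
      subst this
      exact Finset.Subset.refl _
  | succ l ihl =>
      rcases Nat.eq_or_lt_of_le hkl with he | hlt
      · subst he
        exact Finset.Subset.refl _
      · exact (peel_cset (ω := ωseq ω l)).trans (ihl (by omega))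

/-- the canonical word, reading rows left to right. -/
def rowword (ω : Equiv.Perm (Fin (n+1))) (k : ℕ) : List (Fin n) :=
  (List.range k).flatMap fun p => (cset (ωseq ω (k - 1 - p))).sort (· ≤ ·)

theorem rowword_succ (ω : Equiv.Perm (Fin (n+1))) (k : ℕ) :
    rowword ω (k+1) = (cset (ωseq ω k)).sort (· ≤ ·) ++ rowword ω k := by
  rw [rowword, List.range_succ_eq_map, List.flatMap_cons, List.flatMap_map]
  have h1 : k + 1 - 1 - 0 = k := by omega
  rw [h1]
  congr 1
  have h2 : (fun p => (cset (ωseq ω (k + 1 - 1 - (p + 1)))).sort (· ≤ ·)) =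
      (fun p => (cset (ωseq ω (k - 1 - p))).sort (· ≤ ·)) := by
    funext p
    have h3 : k + 1 - 1 - (p + 1) = k - 1 - p := by omega
    rw [h3]
  rw [rowword]
  exact congrArg (fun f => List.flatMap f (List.range k)) h2 |>.trans rfl

theorem rowword_prod (ω : Equiv.Perm (Fin (n+1))) :
    ∀ k, (ωseq ω k) * wordProd (rowword ω k) = ω := by
  intro k
  induction k with
  | zero =>
      show ω * wordProd (rowword ω 0) = ω
      rw [rowword]
      simp only [List.range_zero, List.flatMap_nil, wordProd_nil, mul_one]
  | succ k ih =>
      rw [rowword_succ, wordProd_append]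
      have hcol : wordProd ((cset (ωseq ω k)).sort (· ≤ ·)) = col (cset (ωseq ω k)) := rfl
      rw [hcol]
      show (ωseq ω k * (col (cset (ωseq ω k)))⁻¹) *
        (col (cset (ωseq ω k)) * wordProd (rowword ω k)) = ω
      rw [← mul_assoc, inv_mul_cancel_right]
      exact ih

theorem rowword_len {ω : Equiv.Perm (Fin (n+1))} (hav : Avoids312 ω) :
    ∀ k, invc ω = invc (ωseq ω k) + (rowword ω k).length := by
  intro k
  induction k with
  | zero =>
      show invc ω = invc ω + (rowword ω 0).length
      rw [rowword]
      simp
  | succ k ih =>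
      rw [rowword_succ, List.length_append, col_card_length]
      have hpeel := peel_invc (ωseq_invariant hav k).1
      show invc ω = invc (ωseq ω k * (col (cset (ωseq ω k)))⁻¹) + _
      omega

theorem ωseq_n_eq_one {ω : Equiv.Perm (Fin (n+1))} (hav : Avoids312 ω) : ωseq ω n = 1 :=
  fix_all_eq_one (fun i hi => (ωseq_invariant hav n).2 i hi)

end Stmt9Aux

/-- ω ∈ S_{n+1} is 312-avoiding iff it has a reduced decomposition R_1 ⋯ R_n where
each R_p is a subword of s_1 ⋯ s_n (encoded by a finset of indices, read in
increasing order) and every reflection in R_p also appears in R_{p+1}. -/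
theorem stmt9 (n : ℕ) (ω : Equiv.Perm (Fin (n + 1))) :
    Avoids312 ω ↔
      ∃ S : Fin n → Finset (Fin n),
        (∀ p q : Fin n, p ≤ q → S p ⊆ S q) ∧
        IsReducedWord ((List.finRange n).flatMap fun p => (S p).sort (· ≤ ·)) ω := by
  open Stmt9Aux in
  constructor
  · intro hav
    refine ⟨fun p => cset (ωseq ω (n - 1 - (p : ℕ))), ?_, ?_⟩
    · intro p q hpq
      have hp : (p : ℕ) ≤ (q : ℕ) := hpq
      exact ωseq_antitone (n - 1 - (q : ℕ)) (n - 1 - (p : ℕ)) (by omega)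
    · rw [isReducedWord_iff]
      have hconv : ((List.finRange n).flatMap fun (p : Fin n) =>
          ((cset (ωseq ω (n - 1 - (p : ℕ)))).sort (· ≤ ·))) = rowword ω n := by
        rw [rowword, ← List.map_coe_finRange_eq_range, List.flatMap_map]
      rw [hconv]
      constructor
      · have h := rowword_prod ω n
        rwa [ωseq_n_eq_one hav, one_mul] at h
      · have h := rowword_len hav n
        rw [ωseq_n_eq_one hav, invc_one] at h
        omega
  · rintro ⟨S, hmono, hred⟩
    rw [isReducedWord_iff] at hred
    obtain ⟨hw, hl⟩ := hred
    set S' : ℕ → Finset (Fin n) := fun p => if h : p < n then S ⟨p, h⟩ else Finset.univ with hS'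
    have hmono' : ∀ a b : ℕ, a ≤ b → S' a ⊆ S' b := by
      intro a b hab
      by_cases hb : b < n
      · have ha : a < n := by omega
        simp only [hS', dif_pos ha, dif_pos hb]
        exact hmono ⟨a, ha⟩ ⟨b, hb⟩ hab
      · simp only [hS', dif_neg hb]
        exact fun x _ => Finset.mem_univ x
    have hfun : (fun p : Fin n => (S p).sort (· ≤ ·)) =
        fun p : Fin n => (S' (p : ℕ)).sort (· ≤ ·) := by
      funext p
      simp only [hS', dif_pos p.isLt, Fin.eta]
    have hconv : ((List.finRange n).flatMap fun p => (S p).sort (· ≤ ·)) =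
        (List.range n).flatMap fun p => (S' p).sort (· ≤ ·) := by
      rw [hfun, ← List.map_coe_finRange_eq_range, List.flatMap_map]
    rw [hconv] at hw hl
    exact (left_main S' hmono' n ω hw hl.symm).1
end

section
/- A permutation π is vexillary (2143-avoiding) if and only if π can be written as a product π = ω̂ ω, where ω̂ is a dominant (132-avoiding) permutation, ω is a 231-avoiding permutation, and ℓ(π) = ℓ(ω̂) − ℓ(ω). -/
/-- `π` avoids the pattern 132. -/
def Avoids132 {n : ℕ} (π : Equiv.Perm (Fin n)) : Prop :=
  ∀ i j k : Fin n, i < j → j < k → ¬ (π i < π k ∧ π k < π j)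

/-- `π` avoids the pattern 231. -/
def Avoids231 {n : ℕ} (π : Equiv.Perm (Fin n)) : Prop :=
  ∀ i j k : Fin n, i < j → j < k → ¬ (π k < π i ∧ π i < π j)

/-- `π` avoids the pattern 2143. -/
def Avoids2143 {n : ℕ} (π : Equiv.Perm (Fin n)) : Prop :=
  ∀ i j k l : Fin n, i < j → j < k → k < l →
    ¬ (π j < π i ∧ π i < π l ∧ π l < π k)

/-- Number of inversions (the Coxeter length). -/
def invNum {n : ℕ} (π : Equiv.Perm (Fin n)) : ℕ :=
  ((Finset.univ ×ˢ Finset.univ).filter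
    fun p : Fin n × Fin n => p.1 < p.2 ∧ π p.2 < π p.1).card

open Finset

namespace Stmt10Aux

variable {n : ℕ}

/-! ### Inversion sets and the counting lemma -/

/-- The set of inversions of a permutation, as a finset of pairs. -/
def ISet (σ : Equiv.Perm (Fin n)) : Finset (Fin n × Fin n) :=
  Finset.univ.filter fun p : Fin n × Fin n => p.1 < p.2 ∧ σ p.2 < σ p.1

lemma mem_ISet {σ : Equiv.Perm (Fin n)} {p : Fin n × Fin n} :
    p ∈ ISet σ ↔ p.1 < p.2 ∧ σ p.2 < σ p.1 := by
  simp [ISet]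

lemma invNum_eq_card (σ : Equiv.Perm (Fin n)) : invNum σ = (ISet σ).card := by
  rw [invNum, ISet, Finset.univ_product_univ]

/-- sorting map on pairs -/
def sp (p : Fin n × Fin n) : Fin n × Fin n := if p.1 < p.2 then p else (p.2, p.1)

lemma invNum_decomp (d o : Equiv.Perm (Fin n)) :
    (ISet d).card = ((ISet (d * o) \ ISet o) ∪ (ISet o \ ISet (d * o))).card := by
  refine Finset.card_bij'
    (i := fun p _ => sp (o⁻¹ p.1, o⁻¹ p.2))
    (j := fun p _ => sp (o p.1, o p.2)) ?_ ?_ ?_ ?_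
  · rintro ⟨a1, a2⟩ ha
    rw [mem_ISet] at ha
    obtain ⟨h12, hd⟩ := ha
    simp only [sp]
    rcases lt_or_gt_of_ne (fun h : o⁻¹ a1 = o⁻¹ a2 => (ne_of_lt h12) (o⁻¹.injective h)) with h | h
    · rw [if_pos h, Finset.mem_union, Finset.mem_sdiff]
      left
      constructor
      · rw [mem_ISet]
        refine ⟨h, ?_⟩
        simpa using hd
      · rw [mem_ISet]
        simp only [Equiv.Perm.coe_inv, Equiv.apply_symm_apply]
        rintro ⟨-, h2⟩
        exact absurd h12 (not_lt.mpr h2.le)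
    · rw [if_neg (not_lt.mpr h.le), Finset.mem_union, Finset.mem_sdiff]
      right
      rw [Finset.mem_sdiff]
      constructor
      · rw [mem_ISet]
        refine ⟨h, ?_⟩
        simpa using h12
      · rw [mem_ISet]
        simp only [Equiv.Perm.mul_apply, Equiv.Perm.coe_inv, Equiv.apply_symm_apply]
        rintro ⟨-, h2⟩
        exact absurd hd (not_lt.mpr h2.le)
  · rintro ⟨p, q⟩ hpq
    simp only [sp]
    rw [Finset.mem_union, Finset.mem_sdiff, Finset.mem_sdiff, mem_ISet, mem_ISet] at hpq
    rcases hpq with ⟨⟨hpq, hV⟩, hU⟩ | ⟨⟨hpq, hU⟩, hV⟩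
    · -- in V \ U : o p < o q
      have hne : o p ≠ o q := fun h => (ne_of_lt hpq) (o.injective h)
      have ho : o p < o q := by
        rcases lt_or_gt_of_ne hne with h | h
        · exact h
        · exact absurd ⟨hpq, h⟩ hU
      rw [if_pos ho, mem_ISet]
      exact ⟨ho, by simpa using hV⟩
    · -- in U \ V : o q < o p, and d (o p) < d (o q)
      have hdo : d (o p) < d (o q) := by
        have hne : d (o p) ≠ d (o q) := fun h => (ne_of_lt hU).symm (d.injective h)
        rcases lt_or_gt_of_ne hne with h | h
        · exact h
        · exact absurd ⟨hpq, by simpa using h⟩ hV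
      rw [if_neg (not_lt.mpr hU.le), mem_ISet]
      exact ⟨hU, hdo⟩
  · rintro ⟨a1, a2⟩ ha
    rw [mem_ISet] at ha
    obtain ⟨h12, -⟩ := ha
    simp only [sp]
    by_cases h : o⁻¹ a1 < o⁻¹ a2
    · rw [if_pos h]
      simp only [Equiv.Perm.coe_inv, Equiv.apply_symm_apply]
      rw [if_pos h12]
    · rw [if_neg h]
      simp only [Equiv.Perm.coe_inv, Equiv.apply_symm_apply]
      rw [if_neg (not_lt.mpr h12.le)]
  · rintro ⟨p, q⟩ hpq
    have hpq' : p < q := by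
      rw [Finset.mem_union, Finset.mem_sdiff, mem_ISet, Finset.mem_sdiff, mem_ISet] at hpq
      rcases hpq with ⟨⟨h, -⟩, -⟩ | ⟨⟨h, -⟩, -⟩ <;> exact h
    simp only [sp]
    by_cases h : o p < o q
    · rw [if_pos h]
      simp only [Equiv.Perm.coe_inv, Equiv.symm_apply_apply]
      rw [if_pos hpq']
    · rw [if_neg h]
      simp only [Equiv.Perm.coe_inv, Equiv.symm_apply_apply]
      rw [if_neg (not_lt.mpr hpq'.le)]

/-- From the length condition, inversion sets of `d*o` and `o` are disjoint. -/
lemma star_of_len {d o : Equiv.Perm (Fin n)}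
    (hlen : invNum (d * o) + invNum o = invNum d) :
    ISet (d * o) ∩ ISet o = ∅ := by
  have h0 := invNum_decomp d o
  have h1 : ((ISet (d * o) \ ISet o) ∪ (ISet o \ ISet (d * o))).card
      = (ISet (d * o) \ ISet o).card + (ISet o \ ISet (d * o)).card :=
    Finset.card_union_of_disjoint disjoint_sdiff_sdiff
  have h2 := Finset.card_sdiff_add_card_inter (ISet (d * o)) (ISet o)
  have h3 := Finset.card_sdiff_add_card_inter (ISet o) (ISet (d * o))
  have h4 : (ISet o ∩ ISet (d * o)).card = (ISet (d * o) ∩ ISet o).card := by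
    rw [Finset.inter_comm]
  rw [invNum_eq_card, invNum_eq_card, invNum_eq_card] at hlen
  rw [h1] at h0
  have : (ISet (d * o) ∩ ISet o).card = 0 := by omega
  exact Finset.card_eq_zero.mp this

/-- Conversely, if the inversion sets are disjoint, the length condition holds. -/
lemma len_of_star {d o : Equiv.Perm (Fin n)}
    (hdisj : ISet (d * o) ∩ ISet o = ∅) :
    invNum (d * o) + invNum o = invNum d := by
  have hD : Disjoint (ISet (d * o)) (ISet o) := Finset.disjoint_iff_inter_eq_empty.mpr hdisj
  have h0 := invNum_decomp d o
  rw [Finset.sdiff_eq_self_of_disjoint hD, Finset.sdiff_eq_self_of_disjoint hD.symm] at h0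
  rw [invNum_eq_card, invNum_eq_card, invNum_eq_card, h0,
    Finset.card_union_of_disjoint hD]

/-! ### The backward direction -/

lemma backward {d o : Equiv.Perm (Fin n)} (h132 : Avoids132 d) (h231 : Avoids231 o)
    (hlen : invNum (d * o) + invNum o = invNum d) : Avoids2143 (d * o) := by
  have hdisj := star_of_len hlen
  have star : ∀ p q : Fin n, p < q → (d * o) q < (d * o) p → o p < o q := by
    intro p q hpq hV
    have hne : o p ≠ o q := fun h => (ne_of_lt hpq) (o.injective h)
    rcases lt_or_gt_of_ne hne with h | h
    · exact h
    · exfalso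
      have : (p, q) ∈ ISet (d * o) ∩ ISet o := by
        rw [Finset.mem_inter, mem_ISet, mem_ISet]
        exact ⟨⟨hpq, hV⟩, ⟨hpq, h⟩⟩
      rw [hdisj] at this
      exact absurd this (Finset.notMem_empty _)
  intro i j k l hij hjk hkl h
  obtain ⟨h1, h2, h3⟩ := h
  have hoij : o i < o j := star i j hij h1
  have hokl : o k < o l := star k l hkl h3
  have hik : i < k := hij.trans hjk
  have hne : o i ≠ o k := fun h => (ne_of_lt hik) (o.injective h)
  rcases lt_or_gt_of_ne hne with hio | hio
  · exact h132 (o i) (o k) (o l) hio hokl ⟨by simpa using h2, by simpa using h3⟩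
  · exact h231 i j k hij hjk ⟨hio, hoij⟩


/-! ### The forward construction -/

variable (π : Equiv.Perm (Fin n))

/-- `mval π z = 1 + max {x < z : z appears before x in π}` (0 if none). -/
def mval (z : Fin n) : ℕ :=
  (Finset.univ.filter fun x : Fin n => x < z ∧ π⁻¹ z < π⁻¹ x).sup fun x => (x : ℕ) + 1

def Mval (y : Fin n) : ℕ :=
  (Finset.univ.filter fun z : Fin n => y ≤ z ∧ π⁻¹ y ≤ π⁻¹ z).sup (mval π)

def gval (y : Fin n) : ℕ := min (y : ℕ) (Mval π y)

def keyv (y : Fin n) : ℕ := (n - gval π y) * n + (y : ℕ)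

variable {π}

lemma mval_le (z : Fin n) : mval π z ≤ (z : ℕ) := by
  apply Finset.sup_le
  intro x hx
  rw [Finset.mem_filter] at hx
  exact hx.2.1

lemma le_mval {x z : Fin n} (h1 : x < z) (h2 : π⁻¹ z < π⁻¹ x) : (x : ℕ) + 1 ≤ mval π z :=
  Finset.le_sup (f := fun x : Fin n => (x : ℕ) + 1)
    (by rw [Finset.mem_filter]; exact ⟨Finset.mem_univ _, h1, h2⟩)

lemma mval_le_Mval {y z : Fin n} (h1 : y ≤ z) (h2 : π⁻¹ y ≤ π⁻¹ z) : mval π z ≤ Mval π y :=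
  Finset.le_sup (by rw [Finset.mem_filter]; exact ⟨Finset.mem_univ _, h1, h2⟩)

lemma gval_le (y : Fin n) : gval π y ≤ (y : ℕ) := min_le_left _ _

lemma gval_le_Mval (y : Fin n) : gval π y ≤ Mval π y := min_le_right _ _

/-- F1 : an inversion of `π` raises `g` strictly. -/
lemma gval_lt_of_inv {a c : Fin n} (h1 : a < c) (h2 : π⁻¹ c < π⁻¹ a) :
    gval π a < gval π c := by
  have hm : (a : ℕ) + 1 ≤ mval π c := le_mval h1 h2
  have hM : mval π c ≤ Mval π c := mval_le_Mval le_rfl le_rfl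
  have hga : gval π a ≤ (a : ℕ) := gval_le a
  have : (a : ℕ) + 1 ≤ gval π c := le_min (by exact_mod_cast h1) (hm.trans hM)
  omega

/-- F2 : no vexillarity needed. -/
lemma F2 {a b c : Fin n} (hab : a < b) (hbc : b < c) (h : gval π b < gval π c) :
    gval π a < gval π c := by
  by_contra hcon
  push_neg at hcon
  -- gval π c ≤ gval π a ≤ a < c, so gval π c = Mval π c
  have hga : gval π a ≤ (a : ℕ) := gval_le a
  have hac : (a : ℕ) < (c : ℕ) := by exact_mod_cast hab.trans hbc
  have habn : (a : ℕ) < (b : ℕ) := by exact_mod_cast hab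
  have hgc : gval π c = Mval π c := by
    have : gval π c < (c : ℕ) := by omega
    simp only [gval] at this ⊢
    omega
  -- witness z for Mval π c
  have hne : (Finset.univ.filter fun z : Fin n => c ≤ z ∧ π⁻¹ c ≤ π⁻¹ z).Nonempty :=
    ⟨c, by rw [Finset.mem_filter]; exact ⟨Finset.mem_univ _, le_rfl, le_rfl⟩⟩
  obtain ⟨z, hz, hzm⟩ := Finset.exists_mem_eq_sup _ hne (mval π)
  rw [Finset.mem_filter] at hz
  obtain ⟨-, hcz, hpcz⟩ := hz
  rcases le_or_gt (π⁻¹ b) (π⁻¹ z) with hbz | hbz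
  · -- z also counts for Mval π b, so gval π b ≥ gval π c
    have h5 : mval π z ≤ Mval π b := mval_le_Mval (le_of_lt (lt_of_lt_of_le hbc hcz)) hbz
    have hzm' : Mval π c = mval π z := hzm
    have h6 : Mval π c ≤ Mval π b := by rw [hzm']; exact h5
    have h7 : gval π b = min (b : ℕ) (Mval π b) := rfl
    have h8 : gval π c ≤ (a : ℕ) := le_trans hcon hga
    omega
  · -- π⁻¹ c ≤ π⁻¹ z < π⁻¹ b, so b is inverted with c : mval π c ≥ b + 1
    have h5 : π⁻¹ c < π⁻¹ b := lt_of_le_of_lt hpcz hbz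
    have h6 : (b : ℕ) + 1 ≤ mval π c := le_mval hbc h5
    have h7 : mval π c ≤ Mval π c := mval_le_Mval le_rfl le_rfl
    omega

lemma pos_ne {x y : Fin n} (h : π⁻¹ x < π⁻¹ y) : x ≠ y := by
  intro he; subst he; exact lt_irrefl _ h

/-- F3 : uses vexillarity. -/
lemma F3 (hvex : Avoids2143 π) {x y z : Fin n}
    (h1 : π⁻¹ x < π⁻¹ y) (h2 : π⁻¹ y < π⁻¹ z)
    (k1 : gval π x < gval π z ∨ (gval π z = gval π x ∧ z < x))
    (k2 : gval π y < gval π x ∨ (gval π x = gval π y ∧ x < y)) : False := by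
  have hxz : x < z := by
    rcases lt_or_gt_of_ne (pos_ne (h1.trans h2)) with h | h
    · exact h
    · exfalso
      have hg : gval π z < gval π x := gval_lt_of_inv h (h1.trans h2)
      have hgz := gval_le (π := π) z
      rcases k1 with hk | ⟨hk, -⟩ <;> omega
  have hgzx : gval π x < gval π z := by
    rcases k1 with hk | ⟨-, hk⟩
    · exact hk
    · exact absurd hxz (not_lt.mpr hk.le)
  have hgxy : gval π y ≤ gval π x := by
    rcases k2 with hk | ⟨hk, -⟩ <;> omega
  have hyz : y < z := by
    rcases lt_or_gt_of_ne (pos_ne h2) with h | h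
    · exact h
    · exfalso
      have := gval_lt_of_inv h h2
      have hgz := gval_le (π := π) z
      omega
  -- witness w for Mval π z
  have hne : (Finset.univ.filter fun w : Fin n => z ≤ w ∧ π⁻¹ z ≤ π⁻¹ w).Nonempty :=
    ⟨z, by rw [Finset.mem_filter]; exact ⟨Finset.mem_univ _, le_rfl, le_rfl⟩⟩
  obtain ⟨w, hw, hwm⟩ := Finset.exists_mem_eq_sup _ hne (mval π)
  rw [Finset.mem_filter] at hw
  obtain ⟨-, hzw, hpzw⟩ := hw
  have hwm' : Mval π z = mval π w := hwm
  have hMz : gval π z ≤ mval π w := by rw [← hwm']; exact gval_le_Mval z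
  rcases lt_or_gt_of_ne (pos_ne h1) with hxy | hxy
  · -- case x < y : show gval π y = y, contradiction with x < y
    have h5 : mval π w ≤ Mval π y :=
      mval_le_Mval (le_of_lt (hyz.trans_le hzw)) (le_of_lt (h2.trans_le hpzw))
    have h6 : gval π y < Mval π y := by omega
    have h7 : gval π y = (y : ℕ) := by simp only [gval] at h6 ⊢; omega
    have h8 : gval π x ≤ (x : ℕ) := gval_le x
    have h9 : (x : ℕ) < (y : ℕ) := by exact_mod_cast hxy
    omega
  · -- case y < x : extract u, get 2143 pattern
    have hmw : 1 ≤ mval π w := by omega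
    have hne2 : (Finset.univ.filter fun u : Fin n => u < w ∧ π⁻¹ w < π⁻¹ u).Nonempty := by
      by_contra hcon
      rw [Finset.not_nonempty_iff_eq_empty] at hcon
      have : mval π w = 0 := by simp only [mval, hcon]; rfl
      omega
    obtain ⟨u, hu, hue⟩ := Finset.exists_mem_eq_sup _ hne2 (fun x : Fin n => (x : ℕ) + 1)
    rw [Finset.mem_filter] at hu
    obtain ⟨-, huw, hpwu⟩ := hu
    have hmwu : mval π w = (u : ℕ) + 1 := hue
    -- u > x
    have hpxu : π⁻¹ x < π⁻¹ u := h1.trans (h2.trans (hpzw.trans_lt hpwu))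
    have hxu : x < u := by
      rcases lt_or_gt_of_ne (pos_ne hpxu) with h | h
      · exact h
      · exfalso
        have h5 : (u : ℕ) + 1 ≤ mval π x := le_mval h hpxu
        have h6 : mval π x ≤ Mval π x := mval_le_Mval le_rfl le_rfl
        have h7 : (u : ℕ) + 1 ≤ (x : ℕ) := by exact_mod_cast h
        have h8 : gval π x = min (x : ℕ) (Mval π x) := rfl
        omega
    -- 2143 pattern at positions π⁻¹ x < π⁻¹ y < π⁻¹ w < π⁻¹ u with values x, y, w, u
    have hyw : π⁻¹ y < π⁻¹ w := h2.trans_le hpzw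
    have huw' : u < w := huw
    refine hvex (π⁻¹ x) (π⁻¹ y) (π⁻¹ w) (π⁻¹ u) h1 hyw hpwu ?_
    simp only [Equiv.Perm.coe_inv, Equiv.apply_symm_apply]
    exact ⟨hxy, hxu, huw'⟩

/-! ### the rank permutation -/

lemma gval_lt_n (y : Fin n) : gval π y < n := lt_of_le_of_lt (gval_le y) y.isLt

lemma keyv_lt_of_g {u v : Fin n} (h : gval π v < gval π u) : keyv π u < keyv π v := by
  have hu : (u : ℕ) < n := u.isLt
  have hv : (v : ℕ) < n := v.isLt
  have hgu : gval π u < n := gval_lt_n u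
  have h1 : n - gval π u < n - gval π v := by omega
  calc (n - gval π u) * n + (u : ℕ) < (n - gval π u) * n + n := by omega
    _ = (n - gval π u + 1) * n := by ring
    _ ≤ (n - gval π v) * n := Nat.mul_le_mul_right n h1
    _ ≤ (n - gval π v) * n + (v : ℕ) := Nat.le_add_right _ _

lemma keyv_lt_iff {u v : Fin n} :
    keyv π u < keyv π v ↔ gval π v < gval π u ∨ (gval π u = gval π v ∧ u < v) := by
  constructor
  · intro h
    rcases lt_trichotomy (gval π u) (gval π v) with hg | hg | hg
    · exact absurd h (not_lt.mpr (keyv_lt_of_g hg).le)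
    · rcases lt_trichotomy u v with hv | hv | hv
      · exact Or.inr ⟨hg, hv⟩
      · subst hv; exact absurd h (lt_irrefl _)
      · exfalso
        rw [keyv, keyv, hg] at h
        have : (v : ℕ) < (u : ℕ) := by exact_mod_cast hv
        omega
    · exact Or.inl hg
  · rintro (hg | ⟨hg, huv⟩)
    · exact keyv_lt_of_g hg
    · rw [keyv, keyv, hg]
      have : (u : ℕ) < (v : ℕ) := by exact_mod_cast huv
      omega

lemma keyv_injective : Function.Injective (keyv π) := by
  intro u v h
  have hu := congrArg (· % n) h
  simp only [keyv] at hu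
  have hun : (u : ℕ) < n := u.isLt
  have hvn : (v : ℕ) < n := v.isLt
  rw [mul_comm (n - gval π u) n, mul_comm (n - gval π v) n, Nat.mul_add_mod, Nat.mul_add_mod,
    Nat.mod_eq_of_lt hun, Nat.mod_eq_of_lt hvn] at hu
  exact Fin.ext hu

variable (π)

def rankf : Fin n → Fin n := fun v =>
  ⟨(Finset.univ.filter fun u : Fin n => keyv π u < keyv π v).card, by
    have h1 : (Finset.univ.filter fun u : Fin n => keyv π u < keyv π v) ⊆
        Finset.univ.erase v := by
      intro u hu
      rw [Finset.mem_filter] at hu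
      rw [Finset.mem_erase]
      refine ⟨?_, Finset.mem_univ _⟩
      intro he; subst he; exact lt_irrefl _ hu.2
    have h2 := Finset.card_le_card h1
    have h3 : (Finset.univ.erase v).card = n - 1 := by
      rw [Finset.card_erase_of_mem (Finset.mem_univ _), Finset.card_univ, Fintype.card_fin]
    have h4 : 0 < n := Fin.pos v
    omega⟩

variable {π}

lemma rankf_lt_of_key {u v : Fin n} (h : keyv π u < keyv π v) : rankf π u < rankf π v := by
  have hss : (Finset.univ.filter fun w : Fin n => keyv π w < keyv π u) ⊂
      Finset.univ.filter fun w : Fin n => keyv π w < keyv π v := by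
    constructor
    · intro w hw
      rw [Finset.mem_filter] at hw ⊢
      exact ⟨Finset.mem_univ _, hw.2.trans h⟩
    · intro hcon
      have : u ∈ Finset.univ.filter fun w : Fin n => keyv π w < keyv π v := by
        rw [Finset.mem_filter]; exact ⟨Finset.mem_univ _, h⟩
      have := hcon this
      rw [Finset.mem_filter] at this
      exact lt_irrefl _ this.2
  exact Finset.card_lt_card hss

lemma rankf_lt_iff {u v : Fin n} : rankf π u < rankf π v ↔ keyv π u < keyv π v := by
  constructor
  · intro h
    rcases lt_trichotomy (keyv π u) (keyv π v) with hk | hk | hk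
    · exact hk
    · exfalso
      have := keyv_injective hk; subst this; exact lt_irrefl _ h
    · exact absurd h (not_lt.mpr (rankf_lt_of_key hk).le)
  · exact rankf_lt_of_key

lemma rankf_injective : Function.Injective (rankf π) := by
  intro u v h
  rcases lt_trichotomy (keyv π u) (keyv π v) with hk | hk | hk
  · exact absurd h (ne_of_lt (rankf_lt_of_key hk))
  · exact keyv_injective hk
  · exact absurd h.symm (ne_of_lt (rankf_lt_of_key hk))

variable (π)

noncomputable def eperm : Equiv.Perm (Fin n) :=
  Equiv.ofBijective (rankf π) (Finite.injective_iff_bijective.mp rankf_injective)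

variable {π}

lemma eperm_apply (v : Fin n) : eperm π v = rankf π v := rfl

/-- The dominant factor is 132-avoiding. -/
lemma d_avoids : Avoids132 ((eperm π)⁻¹) := by
  intro i j k hij hjk h
  obtain ⟨h1, h2⟩ := h
  set A := (eperm π)⁻¹ i with hA
  set B := (eperm π)⁻¹ k with hB
  set C := (eperm π)⁻¹ j with hC
  have heA : rankf π A = i := by rw [hA, ← eperm_apply, Equiv.Perm.coe_inv, Equiv.apply_symm_apply]
  have heB : rankf π B = k := by rw [hB, ← eperm_apply, Equiv.Perm.coe_inv, Equiv.apply_symm_apply]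
  have heC : rankf π C = j := by rw [hC, ← eperm_apply, Equiv.Perm.coe_inv, Equiv.apply_symm_apply]
  have hkAC : keyv π A < keyv π C := by rw [← rankf_lt_iff, heA, heC]; exact hij
  have hkCB : keyv π C < keyv π B := by rw [← rankf_lt_iff, heC, heB]; exact hjk
  -- h1 : A < B, h2 : B < C
  have hgCB : gval π B < gval π C := by
    rcases keyv_lt_iff.mp hkCB with hg | ⟨-, hg⟩
    · exact hg
    · exact absurd h2 (not_lt.mpr hg.le)
  have hgAC : gval π C ≤ gval π A := by
    rcases keyv_lt_iff.mp hkAC with hg | ⟨hg, -⟩ <;> omega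
  have := F2 h1 h2 hgCB
  omega

/-- The second factor is 231-avoiding (uses vexillarity). -/
lemma o_avoids (hvex : Avoids2143 π) : Avoids231 (eperm π * π) := by
  intro p q r hpq hqr h
  obtain ⟨h1, h2⟩ := h
  simp only [Equiv.Perm.mul_apply, eperm_apply] at h1 h2
  have k1 := rankf_lt_iff.mp h1
  have k2 := rankf_lt_iff.mp h2
  rw [keyv_lt_iff] at k1 k2
  have hx : π⁻¹ (π p) = p := Equiv.symm_apply_apply π p
  have hy : π⁻¹ (π q) = q := Equiv.symm_apply_apply π q
  have hz : π⁻¹ (π r) = r := Equiv.symm_apply_apply π r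
  refine F3 hvex (x := π p) (y := π q) (z := π r) ?_ ?_ ?_ ?_
  · rw [hx, hy]; exact hpq
  · rw [hy, hz]; exact hqr
  · exact k1
  · exact k2

/-- star property for the construction : inversion sets disjoint. -/
lemma constr_disjoint : ISet ((eperm π)⁻¹ * (eperm π * π)) ∩ ISet (eperm π * π) = ∅ := by
  rw [Finset.eq_empty_iff_forall_notMem]
  rintro ⟨p, q⟩ hmem
  rw [Finset.mem_inter, mem_ISet, mem_ISet] at hmem
  obtain ⟨⟨hpq, hV⟩, -, hU⟩ := hmem
  simp only [Equiv.Perm.mul_apply, Equiv.Perm.coe_inv, Equiv.symm_apply_apply] at hV hU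
  simp only [eperm_apply] at hU
  -- hV : π q < π p  (inversion of π), hU : rankf (π q) < rankf (π p)
  have hgl : gval π (π q) < gval π (π p) := by
    apply gval_lt_of_inv hV
    rw [Equiv.Perm.coe_inv, Equiv.symm_apply_apply, Equiv.symm_apply_apply]
    exact hpq
  have : rankf π (π p) < rankf π (π q) := rankf_lt_of_key (keyv_lt_of_g hgl)
  exact absurd hU (not_lt.mpr this.le)

end Stmt10Aux

/-- π is vexillary (2143-avoiding) iff π = ω̂ ω with ω̂ dominant (132-avoiding),
ω 231-avoiding, and ℓ(π) = ℓ(ω̂) − ℓ(ω). -/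
theorem stmt10 {n : ℕ} (π : Equiv.Perm (Fin n)) :
    Avoids2143 π ↔
      ∃ d o : Equiv.Perm (Fin n), Avoids132 d ∧ Avoids231 o ∧
        π = d * o ∧ invNum π + invNum o = invNum d := by
  constructor
  · intro hvex
    refine ⟨(Stmt10Aux.eperm π)⁻¹, Stmt10Aux.eperm π * π, Stmt10Aux.d_avoids,
      Stmt10Aux.o_avoids hvex, by group, ?_⟩
    have h := Stmt10Aux.len_of_star (Stmt10Aux.constr_disjoint (π := π))
    have he : (Stmt10Aux.eperm π)⁻¹ * (Stmt10Aux.eperm π * π) = π := by group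
    rwa [he] at h
  · rintro ⟨d, o, h132, h231, rfl, hlen⟩
    exact Stmt10Aux.backward h132 h231 hlen
end

section
/- A permutation π ∈ S_n is vexillary if and only if its code γ satisfies: (i) whenever i < j and γ_i ≤ γ_j, then γ_i ≤ γ_k for all k with i < k < j; (ii) whenever i < j and γ_i > γ_j, the number of k with i < k < j and γ_k < γ_j is at most γ_i − γ_j. -/
/-- The code of a permutation: γ_i = #{j > i : π j < π i}. -/
def codeA {n : ℕ} (π : Equiv.Perm (Fin n)) (i : Fin n) : ℕ :=
  (Finset.univ.filter fun j : Fin n => i < j ∧ π j < π i).card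

/-!
The forward direction rests on two consequences of 2143-avoidance. If `i < k < j` and
`γ_k < γ_i, γ_j`, then `π k < π i`: otherwise some `m ∈ (i, k)` lies below `π i` and some `l > j`
lies strictly between `π k` and `π j`, and `i, m, j, l` is a 2143. And a position `k ∈ (i, j)`
with `π k < π i` forces every inversion `(j, l)` to be an inversion `(i, l)`, so `γ_j` counts
only part of `γ_i`. Both conditions on the code follow by counting.

Conversely, take a 2143 occurrence `a < b < c < d` with `a` as large as possible. Then
`γ_b < γ_a`, so (i) forces `γ_c < γ_a`, and maximality makes every `m ∈ (a, c)` with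
`π m < π a` satisfy `γ_m < γ_c`. There are at least `γ_a - γ_c + 1` such `m`, contradicting (ii).
-/

open Finset

section

variable {n : ℕ} {π : Equiv.Perm (Fin n)}

def inversionSet (π : Equiv.Perm (Fin n)) (i : Fin n) : Finset (Fin n) :=
  univ.filter fun j => i < j ∧ π j < π i

@[simp]
lemma mem_inversionSet {i j : Fin n} : j ∈ inversionSet π i ↔ i < j ∧ π j < π i := by
  simp [inversionSet]

lemma card_inversionSet (i : Fin n) : #(inversionSet π i) = codeA π i := rfl

lemma codeA_lt_codeA_of_inversionSet_subset {i j x : Fin n}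
    (h : inversionSet π i ⊆ inversionSet π j) (hxj : x ∈ inversionSet π j)
    (hxi : x ∉ inversionSet π i) : codeA π i < codeA π j :=
  card_lt_card ((ssubset_iff_of_subset h).2 ⟨x, hxj, hxi⟩)

lemma codeA_lt_codeA_of_lt_of_apply_lt {i j : Fin n} (hij : i < j) (hπ : π j < π i) :
    codeA π j < codeA π i :=
  codeA_lt_codeA_of_inversionSet_subset
    (fun l hl => by
      rw [mem_inversionSet] at hl ⊢
      exact ⟨hij.trans hl.1, hl.2.trans hπ⟩)
    (mem_inversionSet.2 ⟨hij, hπ⟩) (by simp)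

lemma apply_lt_apply_of_codeA_le {i j : Fin n} (hij : i < j) (h : codeA π i ≤ codeA π j) :
    π i < π j := by
  refine (π.injective.ne hij.ne).lt_or_gt.resolve_right fun hπ => ?_
  exact (codeA_lt_codeA_of_lt_of_apply_lt hij hπ).not_ge h

lemma exists_between_apply_lt_of_codeA_lt {i k : Fin n} (hik : i < k) (hπ : π i < π k)
    (h : codeA π k < codeA π i) : ∃ m, i < m ∧ m < k ∧ π m < π i := by
  obtain ⟨m, hmi, hmk⟩ :=
    exists_mem_notMem_of_card_lt_card (s := inversionSet π k) (t := inversionSet π i) h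
  rw [mem_inversionSet] at hmi hmk
  refine ⟨m, hmi.1, ?_, hmi.2⟩
  refine lt_of_le_of_ne (not_lt.1 fun hkm => hmk ⟨hkm, hmi.2.trans hπ⟩) ?_
  rintro rfl
  exact hπ.not_gt hmi.2

lemma exists_gt_apply_mem_Ioo_of_codeA_lt {k j : Fin n} (hkj : k < j)
    (h : codeA π k < codeA π j) : ∃ l, j < l ∧ π k < π l ∧ π l < π j := by
  obtain ⟨l, hlj, hlk⟩ :=
    exists_mem_notMem_of_card_lt_card (s := inversionSet π k) (t := inversionSet π j) h
  rw [mem_inversionSet] at hlj hlk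
  have hkl := hkj.trans hlj.1
  refine ⟨l, hlj.1, ?_, hlj.2⟩
  exact lt_of_le_of_ne (not_lt.1 fun hπ => hlk ⟨hkl, hπ⟩) (π.injective.ne hkl.ne)

lemma codeA_lt_card_add_codeA {a c d : Fin n} (hac : a < c) (hcd : c < d)
    (had : π a < π d) (hdc : π d < π c) :
    codeA π a < #(univ.filter fun m => a < m ∧ m < c ∧ π m < π a) + codeA π c := by
  set S := univ.filter fun m => a < m ∧ m < c ∧ π m < π a
  have hd : d ∈ inversionSet π c := mem_inversionSet.2 ⟨hcd, hdc⟩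
  have hsplit : inversionSet π a ⊆ S ∪ (inversionSet π c).erase d := by
    intro l hl
    rw [mem_inversionSet] at hl
    rcases lt_trichotomy l c with hlc | rfl | hcl
    · exact mem_union_left _ (by simp [S, hl.1, hlc, hl.2])
    · exact absurd (hl.2.trans (had.trans hdc)) (lt_irrefl _)
    · refine mem_union_right _ (mem_erase.2 ⟨?_, mem_inversionSet.2 ?_⟩)
      · rintro rfl
        exact had.not_gt hl.2
      · exact ⟨hcl, hl.2.trans (had.trans hdc)⟩
  have := (card_le_card hsplit).trans (card_union_le _ _)
  rw [card_erase_of_mem hd, card_inversionSet, card_inversionSet] at this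
  have := card_pos.2 ⟨d, hd⟩
  rw [card_inversionSet] at this
  omega

namespace Avoids2143

variable (hπ : Avoids2143 π)
include hπ

lemma apply_lt_of_codeA_lt {i k j : Fin n} (hik : i < k) (hkj : k < j)
    (hki : codeA π k < codeA π i) (hkj' : codeA π k < codeA π j) : π k < π i := by
  refine (π.injective.ne hik.ne').lt_or_gt.resolve_right fun hik' => ?_
  obtain ⟨m, him, hmk, hm⟩ := exists_between_apply_lt_of_codeA_lt hik hik' hki
  obtain ⟨l, hjl, hkl, hlj⟩ := exists_gt_apply_mem_Ioo_of_codeA_lt hkj hkj'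
  exact hπ i m j l him (hmk.trans hkj) hjl ⟨hm, hik'.trans hkl, hlj⟩

lemma inversionSet_subset {i k j : Fin n} (hik : i < k) (hkj : k < j) (hki : π k < π i) :
    inversionSet π j ⊆ inversionSet π i := by
  intro l hl
  rw [mem_inversionSet] at hl ⊢
  have hil := hik.trans (hkj.trans hl.1)
  refine ⟨hil, (π.injective.ne hil.ne').lt_or_gt.resolve_right fun hil' => ?_⟩
  exact hπ i k j l hik hkj hl.1 ⟨hki, hil', hl.2⟩

lemma codeA_le_codeA_of_mem_Ioo {i j k : Fin n} (hij : codeA π i ≤ codeA π j)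
    (hik : i < k) (hkj : k < j) : codeA π i ≤ codeA π k := by
  by_contra! hki
  have hπki := hπ.apply_lt_of_codeA_lt hik hkj hki (hki.trans_le hij)
  refine (codeA_lt_codeA_of_inversionSet_subset (hπ.inversionSet_subset hik hkj hπki)
    (mem_inversionSet.2 ⟨hik, hπki⟩) ?_).not_ge hij
  simp [hkj.not_gt]

lemma card_codeA_lt_le_sub {i j : Fin n} (hji : codeA π j < codeA π i) :
    #(univ.filter fun k => i < k ∧ k < j ∧ codeA π k < codeA π j) ≤
      codeA π i - codeA π j := by
  set T := univ.filter fun k => i < k ∧ k < j ∧ codeA π k < codeA π j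
  obtain hT | ⟨k₀, hk₀⟩ := T.eq_empty_or_nonempty
  · simp [hT]
  have hTi : T ⊆ inversionSet π i := by
    intro k hk
    simp only [T, mem_filter, mem_univ, true_and] at hk
    exact mem_inversionSet.2
      ⟨hk.1, hπ.apply_lt_of_codeA_lt hk.1 hk.2.1 (hk.2.2.trans hji) hk.2.2⟩
  simp only [T, mem_filter, mem_univ, true_and] at hk₀
  have hji : inversionSet π j ⊆ inversionSet π i :=
    hπ.inversionSet_subset hk₀.1 hk₀.2.1 (mem_inversionSet.1 (hTi (by simp [T, hk₀]))).2
  have hdisj : Disjoint T (inversionSet π j) := by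
    refine disjoint_left.2 fun k hkT hkj => ?_
    simp only [T, mem_filter, mem_univ, true_and, mem_inversionSet] at hkT hkj
    exact hkT.2.1.not_gt hkj.1
  have := card_le_card (union_subset hTi hji)
  rw [card_union_of_disjoint hdisj, card_inversionSet, card_inversionSet] at this
  omega

end Avoids2143

lemma avoids2143_of_code
    (h₁ : ∀ i j k : Fin n, i < j → codeA π i ≤ codeA π j →
        i < k → k < j → codeA π i ≤ codeA π k)
    (h₂ : ∀ i j : Fin n, i < j → codeA π j < codeA π i →
        #(univ.filter fun k => i < k ∧ k < j ∧ codeA π k < codeA π j) ≤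
          codeA π i - codeA π j) :
    Avoids2143 π := by
  intro a
  induction a using WellFoundedGT.induction with
  | _ a ih =>
  rintro b c d hab hbc hcd ⟨hba, had, hdc⟩
  have hba' := codeA_lt_codeA_of_lt_of_apply_lt hab hba
  have hca : codeA π c < codeA π a :=
    lt_of_not_ge fun hac => (h₁ a c b (hab.trans hbc) hac hab hbc).not_gt hba'
  have hS : (univ.filter fun m => a < m ∧ m < c ∧ π m < π a) ⊆
      univ.filter fun m => a < m ∧ m < c ∧ codeA π m < codeA π c := by
    intro m hm
    simp only [mem_filter, mem_univ, true_and] at hm ⊢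
    obtain ⟨ham, hmc, hma⟩ := hm
    refine ⟨ham, hmc, codeA_lt_codeA_of_inversionSet_subset (x := d) ?_
      (mem_inversionSet.2 ⟨hcd, hdc⟩) (by simp [(hma.trans had).not_gt])⟩
    intro t ht
    rw [mem_inversionSet] at ht ⊢
    -- maximality of `a`: an inversion `(m, t)` with `t < c` would start the 2143 `m, t, c, d`
    have hct : c < t := by
      rcases lt_trichotomy t c with htc | rfl | hct
      · exact absurd ⟨ht.2, hma.trans had, hdc⟩ (ih m ham t c d ht.1 htc hcd)
      · exact absurd (ht.2.trans (hma.trans (had.trans hdc))) (lt_irrefl _)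
      · exact hct
    exact ⟨hct, ht.2.trans (hma.trans (had.trans hdc))⟩
  have := (card_le_card hS).trans (h₂ a c (hab.trans hbc) hca)
  have := codeA_lt_card_add_codeA (hab.trans hbc) hcd had hdc
  omega

end

/-- π is vexillary iff its code γ satisfies:
(i) if i < j and γ_i ≤ γ_j then γ_i ≤ γ_k for all i < k < j;
(ii) if i < j and γ_i > γ_j then #{k : i < k < j, γ_k < γ_j} ≤ γ_i − γ_j. -/
theorem stmt11 {n : ℕ} (π : Equiv.Perm (Fin n)) :
    Avoids2143 π ↔
      ((∀ i j k : Fin n, i < j → codeA π i ≤ codeA π j →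
          i < k → k < j → codeA π i ≤ codeA π k) ∧
       (∀ i j : Fin n, i < j → codeA π j < codeA π i →
          (Finset.univ.filter fun k : Fin n =>
            i < k ∧ k < j ∧ codeA π k < codeA π j).card ≤ codeA π i - codeA π j)) :=
  ⟨fun hπ => ⟨fun _ _ _ _ hij hik hkj => hπ.codeA_le_codeA_of_mem_Ioo hij hik hkj,
      fun _ _ _ hji => hπ.card_codeA_lt_le_sub hji⟩,
    fun ⟨h₁, h₂⟩ => avoids2143_of_code h₁ h₂⟩
end

section
/- If π is a vexillary permutation, then the shape of π⁻¹ is the conjugate of the shape of π: λ(π⁻¹) = λ(π)′. -/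
/-- The shape of π: the entries of its code, sorted into weakly decreasing order. -/
def shapeList {n : ℕ} (π : Equiv.Perm (Fin n)) : List ℕ :=
  ((Finset.univ.val.map (codeA π)).sort (· ≤ ·)).reverse

namespace Stmt12Aux

variable {n : ℕ}

/-- Row `i` of the Rothe diagram (recorded by column index). -/
def R (π : Equiv.Perm (Fin n)) (i : Fin n) : Finset (Fin n) :=
  Finset.univ.filter fun c => c < π i ∧ i < π⁻¹ c

lemma card_R (π : Equiv.Perm (Fin n)) (i : Fin n) : (R π i).card = codeA π i := by
  unfold R codeA
  apply Finset.card_bij' (fun c _ => π⁻¹ c) (fun j _ => π j)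
  · intro c hc
    simp only [Finset.mem_filter, Finset.mem_univ, true_and] at hc ⊢
    refine ⟨hc.2, by simpa using hc.1⟩
  · intro j hj
    simp only [Finset.mem_filter, Finset.mem_univ, true_and] at hj ⊢
    refine ⟨hj.2, by simpa using hj.1⟩
  · intro c hc; simp
  · intro j hj; simp

lemma code_inv (π : Equiv.Perm (Fin n)) (c : Fin n) :
    codeA π⁻¹ c = (Finset.univ.filter fun i => c ∈ R π i).card := by
  unfold R codeA
  apply Finset.card_bij' (fun d _ => π⁻¹ d) (fun i _ => π i)
  · intro d hd
    simp only [Finset.mem_filter, Finset.mem_univ, true_and] at hd ⊢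
    refine ⟨by simpa using hd.1, hd.2⟩
  · intro i hi
    simp only [Finset.mem_filter, Finset.mem_univ, true_and] at hi ⊢
    refine ⟨hi.1, by simpa using hi.2⟩
  · intro d hd; simp
  · intro i hi; simp

lemma chain_aux (π : Equiv.Perm (Fin n)) (hvex : Avoids2143 π) {i i' : Fin n} (hii : i < i')
    (h : ¬ R π i' ⊆ R π i) : R π i ⊆ R π i' := by
  rw [Finset.not_subset] at h
  obtain ⟨c', hc'mem, hc'not⟩ := h
  intro c hc
  simp only [R, Finset.mem_filter, Finset.mem_univ, true_and, not_and, not_lt]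
    at hc hc'mem hc'not ⊢
  by_contra hcnot
  push_neg at hcnot
  -- hcnot : c < π i' → π⁻¹ c ≤ i'
  have h1 : π i ≤ c' := by
    by_contra hlt
    push_neg at hlt
    have := hc'not hlt
    have := hc'mem.2
    have := hii
    omega
  have h2 : π i < c' := by
    rcases eq_or_lt_of_le h1 with heq | h2
    · exfalso
      have : π⁻¹ c' = i := by rw [← heq]; simp
      rw [this] at hc'mem
      have := hc'mem.2
      have := hii
      omega
    · exact h2
  have h3 : c < π i' := lt_trans (lt_trans hc.1 h2) hc'mem.1
  have h4 : π⁻¹ c ≤ i' := hcnot h3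
  have h5 : π⁻¹ c < i' := by
    rcases eq_or_lt_of_le h4 with heq | h5
    · exfalso
      have : c = π i' := by rw [← heq]; simp
      rw [this] at h3
      exact absurd h3 (lt_irrefl _)
    · exact h5
  refine hvex i (π⁻¹ c) i' (π⁻¹ c') hc.2 h5 hc'mem.2 ?_
  simp only [Equiv.Perm.inv_def, Equiv.apply_symm_apply]
  exact ⟨hc.1, h2, hc'mem.1⟩

lemma chain (π : Equiv.Perm (Fin n)) (hvex : Avoids2143 π) (i i' : Fin n) :
    R π i ⊆ R π i' ∨ R π i' ⊆ R π i := by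
  rcases lt_trichotomy i i' with h | h | h
  · by_cases hsub : R π i' ⊆ R π i
    · exact Or.inr hsub
    · exact Or.inl (chain_aux π hvex h hsub)
  · subst h; exact Or.inl (subset_refl _)
  · by_cases hsub : R π i ⊆ R π i'
    · exact Or.inl hsub
    · exact Or.inr (chain_aux π hvex h hsub)

lemma exists_min_chain {γ ι : Type*} [DecidableEq γ] (B : Finset ι) (hB : B.Nonempty)
    (g : ι → Finset γ) (hchain : ∀ a b, g a ⊆ g b ∨ g b ⊆ g a) :
    ∃ b₀ ∈ B, ∀ b ∈ B, g b₀ ⊆ g b := by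
  classical
  obtain ⟨m, hm, hmin⟩ := (B.image g).exists_minimal (hB.image g)
  obtain ⟨b₀, hb₀, rfl⟩ := Finset.mem_image.mp hm
  refine ⟨b₀, hb₀, fun b hb => ?_⟩
  rcases hchain b₀ b with h | h
  · exact h
  · have hns : ¬ g b ⊂ g b₀ := fun hlt => (Finset.ssubset_def.mp hlt).2 (hmin (Finset.mem_image_of_mem g hb) (Finset.ssubset_def.mp hlt).1)
    have : g b = g b₀ := by
      by_contra hne
      exact hns (lt_of_le_of_ne h hne)
    rw [← this]

lemma conj_card {ι γ : Type*} [Fintype ι] [DecidableEq ι] [Fintype γ] [DecidableEq γ]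
    (g : ι → Finset γ) (hchain : ∀ a b, g a ⊆ g b ∨ g b ⊆ g a) {s t : ℕ}
    (hs : 1 ≤ s) (ht : 1 ≤ t) :
    s ≤ (Finset.univ.filter fun c => t ≤ (Finset.univ.filter fun i => c ∈ g i).card).card ↔
      t ≤ (Finset.univ.filter fun i : ι => s ≤ (g i).card).card := by
  constructor
  · intro h
    set S := Finset.univ.filter fun c => t ≤ (Finset.univ.filter fun i => c ∈ g i).card with hS
    have hSne : S.Nonempty := Finset.card_pos.mp (lt_of_lt_of_le hs h)
    have hIchain : ∀ c c' : γ,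
        (Finset.univ.filter fun i => c ∈ g i) ⊆ (Finset.univ.filter fun i => c' ∈ g i) ∨
        (Finset.univ.filter fun i => c' ∈ g i) ⊆ (Finset.univ.filter fun i => c ∈ g i) := by
      intro c c'
      by_cases hsub : (Finset.univ.filter fun i => c ∈ g i) ⊆ (Finset.univ.filter fun i => c' ∈ g i)
      · exact Or.inl hsub
      · right
        rw [Finset.not_subset] at hsub
        obtain ⟨i, hi, hinot⟩ := hsub
        simp only [Finset.mem_filter, Finset.mem_univ, true_and] at hi hinot
        intro i' hi'
        simp only [Finset.mem_filter, Finset.mem_univ, true_and] at hi' ⊢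
        rcases hchain i i' with hgs | hgs
        · exact hgs hi
        · exact absurd (hgs hi') hinot
    obtain ⟨c₀, hc₀S, hc₀min⟩ :=
      exists_min_chain S hSne (fun c => Finset.univ.filter fun i => c ∈ g i) hIchain
    have hsub : (Finset.univ.filter fun i => c₀ ∈ g i) ⊆
        Finset.univ.filter fun i : ι => s ≤ (g i).card := by
      intro i hi
      simp only [Finset.mem_filter, Finset.mem_univ, true_and]
      have hSg : S ⊆ g i := by
        intro c hc
        have := hc₀min c hc hi
        simp only [Finset.mem_filter, Finset.mem_univ, true_and] at this
        exact this
      calc s ≤ S.card := h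
        _ ≤ (g i).card := Finset.card_le_card hSg
    have hc₀ : t ≤ (Finset.univ.filter fun i => c₀ ∈ g i).card := by
      rw [hS] at hc₀S
      simp only [Finset.mem_filter, Finset.mem_univ, true_and] at hc₀S
      exact hc₀S
    exact le_trans hc₀ (Finset.card_le_card hsub)
  · intro h
    set A := Finset.univ.filter fun i : ι => s ≤ (g i).card with hA
    have hAne : A.Nonempty := Finset.card_pos.mp (lt_of_lt_of_le ht h)
    obtain ⟨i₀, hi₀A, hi₀min⟩ := exists_min_chain A hAne g (hchain)
    have hsub : g i₀ ⊆ Finset.univ.filter fun c => t ≤ (Finset.univ.filter fun i => c ∈ g i).card := by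
      intro c hc
      simp only [Finset.mem_filter, Finset.mem_univ, true_and]
      have hAsub : A ⊆ Finset.univ.filter fun i => c ∈ g i := by
        intro i hi
        simp only [Finset.mem_filter, Finset.mem_univ, true_and]
        exact hi₀min i hi hc
      calc t ≤ A.card := h
        _ ≤ _ := Finset.card_le_card hAsub
    have hi₀ : s ≤ (g i₀).card := by
      rw [hA] at hi₀A
      simp only [Finset.mem_filter, Finset.mem_univ, true_and] at hi₀A
      exact hi₀A
    exact le_trans hi₀ (Finset.card_le_card hsub)

lemma sorted_getD_ge_iff {L : List ℕ} (hL : L.Pairwise (· ≥ ·)) {j t : ℕ} (ht : 1 ≤ t) :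
    t ≤ L.getD j 0 ↔ j + 1 ≤ L.countP (fun x => decide (t ≤ x)) := by
  constructor
  · intro h
    have hj : j < L.length := by
      by_contra hj
      push_neg at hj
      rw [List.getD_eq_default _ _ hj] at h
      omega
    rw [List.getD_eq_getElem _ _ hj] at h
    have htake : (L.take (j+1)).countP (fun x => decide (t ≤ x)) = (L.take (j+1)).length := by
      rw [List.countP_eq_length]
      intro x hx
      obtain ⟨i, hi, hxe⟩ := List.mem_iff_getElem.mp hx
      rw [List.getElem_take] at hxe
      have hilen : i < L.length := lt_of_lt_of_le (lt_of_lt_of_le hi (by simp)) (le_refl _)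
      have hij : i ≤ j := by
        have := hi
        simp only [List.length_take] at this
        omega
      have hge : L[j] ≤ L[i] := by
        rcases eq_or_lt_of_le hij with heq | hlt
        · subst heq; exact le_refl _
        · exact hL.rel_get_of_lt (a := ⟨i, hilen⟩) (b := ⟨j, hj⟩) hlt
      subst hxe
      simp only [decide_eq_true_eq]
      omega
    calc j + 1 = (L.take (j+1)).length := by simp [List.length_take]; omega
      _ = (L.take (j+1)).countP (fun x => decide (t ≤ x)) := htake.symm
      _ ≤ L.countP (fun x => decide (t ≤ x)) :=
          (List.take_sublist _ _).countP_le
  · intro h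
    have hj : j < L.length := by
      have := List.countP_le_length (p := fun x => decide (t ≤ x)) (l := L)
      omega
    by_contra hcontra
    push_neg at hcontra
    rw [List.getD_eq_getElem _ _ hj] at hcontra
    have hdrop : (L.drop j).countP (fun x => decide (t ≤ x)) = 0 := by
      rw [List.countP_eq_zero]
      intro x hx
      have hs : (L.drop j).Pairwise (· ≥ ·) := hL.sublist (List.drop_sublist _ _)
      rw [List.drop_eq_getElem_cons hj] at hx hs
      rcases List.mem_cons.mp hx with rfl | hx'
      · simp only [decide_eq_true_eq]; omega
      · have := List.rel_of_pairwise_cons hs hx'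
        simp only [decide_eq_true_eq]
        omega
    have hsplit : L.countP (fun x => decide (t ≤ x)) =
        (L.take j).countP (fun x => decide (t ≤ x)) +
        (L.drop j).countP (fun x => decide (t ≤ x)) := by
      conv_lhs => rw [← List.take_append_drop j L]
      rw [List.countP_append]
    have htakelen : (L.take j).countP (fun x => decide (t ≤ x)) ≤ j := by
      calc (L.take j).countP (fun x => decide (t ≤ x)) ≤ (L.take j).length :=
          List.countP_le_length
        _ ≤ j := by simp [List.length_take]
    omega

lemma shape_sorted (σ : Equiv.Perm (Fin n)) : (shapeList σ).Pairwise (· ≥ ·) := by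
  unfold shapeList
  rw [List.pairwise_reverse]
  have h := Multiset.pairwise_sort (r := (· ≤ ·)) (s := Finset.univ.val.map (codeA σ))
  exact h

lemma countP_shapeList (σ : Equiv.Perm (Fin n)) (t : ℕ) :
    (shapeList σ).countP (fun x => decide (t ≤ x)) =
      (Finset.univ.filter fun c : Fin n => t ≤ codeA σ c).card := by
  unfold shapeList
  rw [List.countP_reverse]
  have h1 : ((Finset.univ.val.map (codeA σ)).sort (· ≤ ·)).countP (fun x => decide (t ≤ x)) =
      Multiset.countP (fun x => t ≤ x)
        (((Finset.univ.val.map (codeA σ)).sort (· ≤ ·) : List ℕ) : Multiset ℕ) := by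
    simp [Multiset.coe_countP]
  rw [h1, Multiset.sort_eq, Multiset.countP_map, Finset.card_def, Finset.filter_val]

end Stmt12Aux

open Stmt12Aux in
/-- If π is vexillary, then λ(π⁻¹) = λ(π)′: for each j ≥ 0, the (j+1)-st part of
the shape of π⁻¹ equals the (j+1)-st part of the conjugate of the shape of π,
which is #{i : γ_i(π) ≥ j+1}. -/
theorem stmt12 {n : ℕ} (π : Equiv.Perm (Fin n)) (hvex : Avoids2143 π) :
    ∀ j : ℕ, (shapeList π⁻¹).getD j 0 =
      (Finset.univ.filter fun i : Fin n => j + 1 ≤ codeA π i).card := by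
  intro j
  set M := (Finset.univ.filter fun i : Fin n => j + 1 ≤ codeA π i).card with hM
  have key : ∀ t, 1 ≤ t → (t ≤ (shapeList π⁻¹).getD j 0 ↔ t ≤ M) := by
    intro t ht
    rw [sorted_getD_ge_iff (shape_sorted π⁻¹) ht, countP_shapeList]
    have hc := conj_card (R π) (chain π hvex) (s := j + 1) (t := t) (by omega) ht
    have e1 : (Finset.univ.filter fun c : Fin n => t ≤ codeA π⁻¹ c) =
        Finset.univ.filter fun c => t ≤ (Finset.univ.filter fun i => c ∈ R π i).card := by
      apply Finset.filter_congr
      intro c _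
      rw [code_inv]
    have e2 : (Finset.univ.filter fun i : Fin n => j + 1 ≤ codeA π i) =
        Finset.univ.filter fun i : Fin n => j + 1 ≤ (R π i).card := by
      apply Finset.filter_congr
      intro i _
      rw [card_R]
    rw [e1, hM, e2]
    exact hc
  have h1 : (shapeList π⁻¹).getD j 0 ≤ M := by
    by_contra hcon
    push_neg at hcon
    have := (key (M + 1) (by omega)).mp (by omega)
    omega
  have h2 : M ≤ (shapeList π⁻¹).getD j 0 := by
    rcases Nat.eq_zero_or_pos M with h0 | hpos
    · omega
    · exact (key M hpos).mpr le_rfl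
  omega
end

section
/- Let k ≥ 0 and let C be a fixed partition. The map w ↦ v(w), where v(w) is obtained by sorting the entries w_{k+1},…,w_n into increasing order, is a bijection from the set of signed permutations w ∈ W_n that are increasing up to k (0 < w_1 < ⋯ < w_k) and have k-truncated A-code equal to C, onto the set of k-Grassmannian elements of W_n; moreover ℓ(v(w)) = ℓ(w) − Σ_{i=k+1}^n C_i. -/
/-- w is increasing up to k: 0 < w_1 < ⋯ < w_k. -/
def IncUpTo {n : ℕ} (k : ℕ) (w : Fin n → ℤ) : Prop :=
  (∀ i : Fin n, (i : ℕ) < k → 0 < w i) ∧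
  (∀ i j : Fin n, i < j → (j : ℕ) < k → w i < w j)

/-- The k-truncated A-code of w equals C (0-indexed: γ_{k+1+i} = C i). -/
def TruncCodeEq {n : ℕ} (k : ℕ) (w : Fin n → ℤ) (C : ℕ → ℕ) : Prop :=
  ∀ i : Fin n, k ≤ (i : ℕ) → codeS w i = C ((i : ℕ) - k)

/-- v is k-Grassmannian: 0 < v_1 < ⋯ < v_k and v_{k+1} < ⋯ < v_n. -/
def IsGrass {n : ℕ} (k : ℕ) (v : Fin n → ℤ) : Prop :=
  IsSignedPerm v ∧ IncUpTo k v ∧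
  (∀ i j : Fin n, i < j → k ≤ (i : ℕ) → v i < v j)

/-- v is obtained from w by sorting the entries w_{k+1}, …, w_n increasingly. -/
def SortsTail {n : ℕ} (k : ℕ) (w v : Fin n → ℤ) : Prop :=
  (∀ i : Fin n, (i : ℕ) < k → v i = w i) ∧
  (∀ i j : Fin n, i < j → k ≤ (i : ℕ) → v i < v j) ∧
  ((Finset.univ.filter fun i : Fin n => k ≤ (i : ℕ)).val.map v
    = (Finset.univ.filter fun i : Fin n => k ≤ (i : ℕ)).val.map w)

/-!
The head `w₁ < ⋯ < w_k` is left untouched, and an arrangement of the tail is determined by its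
set of values together with its A-code (a Lehmer code): `w_i` is the element of rank `γ_i` among
the values not placed before it, and every code with `γ_{k+1+t} < n - k - t` arises. Sorting the
tail is the arrangement with code `0`. Rearranging the tail changes neither the inversions with
an entry in the head nor the negative entries, so the length drops by exactly the number of
inversions inside the tail, which is `Σ γ_i`.
-/

open Finset

theorem Multiset.countP_lt_lt_countP_lt {α : Type*} [LinearOrder α] {M : Multiset α} {x y : α}
    (hx : x ∈ M) (hxy : x < y) : M.countP (· < x) < M.countP (· < y) := by
  rw [M.countP_eq_countP_filter_add (· < y) (· < x), Multiset.countP_filter,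
    Multiset.countP_filter]
  have hpos : 0 < M.countP (fun z => z < y ∧ ¬ z < x) :=
    Multiset.countP_pos_of_mem hx ⟨hxy, lt_irrefl x⟩
  have : M.countP (fun z => z < y ∧ z < x) = M.countP (· < x) :=
    Multiset.countP_congr rfl fun z _ => propext ⟨fun h => h.2, fun h => ⟨h.trans hxy, h⟩⟩
  omega

theorem Multiset.eq_of_countP_lt_eq {α : Type*} [LinearOrder α] {M : Multiset α} {x y : α}
    (hx : x ∈ M) (hy : y ∈ M) (h : M.countP (· < x) = M.countP (· < y)) : x = y := by
  rcases lt_trichotomy x y with hxy | rfl | hyx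
  · exact absurd h (Multiset.countP_lt_lt_countP_lt hx hxy).ne
  · rfl
  · exact absurd h (Multiset.countP_lt_lt_countP_lt hy hyx).ne'

theorem Finset.exists_card_filter_lt_eq {α : Type*} [LinearOrder α] (S : Finset α) {c : ℕ}
    (hc : c < #S) : ∃ x ∈ S, #(S.filter (· < x)) = c := by
  have hinj : Set.InjOn (fun x => (S.filter (· < x)).card) S := fun x hx y hy h =>
    Multiset.eq_of_countP_lt_eq (M := S.val) hx hy <| by
      simp only [Multiset.countP_eq_card_filter]; exact h
  obtain ⟨x, hx, hxc⟩ := Finset.surjOn_of_injOn_of_card_le (fun x => (S.filter (· < x)).card)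
    (fun x _ => Finset.mem_range.2 (Finset.card_lt_card
      (Finset.filter_ssubset.2 ⟨x, ‹_›, lt_irrefl x⟩))) hinj (by simp) (Finset.mem_range.2 hc)
  exact ⟨x, hx, hxc⟩

theorem Fin.univ_val_map_succ {α : Type*} {m : ℕ} (f : Fin (m + 1) → α) :
    Multiset.map f univ.val = f 0 ::ₘ Multiset.map (Fin.tail f) univ.val := by
  rw [Fin.univ_val_map, Fin.univ_val_map, List.ofFn_succ]
  rfl

theorem codeS_zero {m : ℕ} (f : Fin (m + 1) → ℤ) :
    codeS f 0 = (Multiset.map f univ.val).countP (· < f 0) := by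
  rw [Fin.univ_val_map_succ, Multiset.countP_cons, Multiset.countP_map, codeS,
    Finset.card_filter, Fin.sum_univ_succ]
  simp only [lt_self_iff_false, and_false, if_false, Fin.succ_pos, true_and, zero_add, add_zero]
  exact (Finset.card_filter _ _).symm

theorem codeS_succ {m : ℕ} (f : Fin (m + 1) → ℤ) (t : Fin m) :
    codeS f t.succ = codeS (Fin.tail f) t := by
  simp only [codeS, Finset.card_filter, Fin.sum_univ_succ, Fin.succ_lt_succ_iff,
    Fin.not_lt_zero, false_and, if_false, zero_add]
  rfl

theorem eq_of_map_univ_eq_of_codeS_eq : ∀ {m : ℕ} {f g : Fin m → ℤ},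
    Multiset.map f univ.val = Multiset.map g univ.val → (∀ t, codeS f t = codeS g t) → f = g
  | 0, _, _, _, _ => funext fun t => t.elim0
  | m + 1, f, g, hfg, hcode => by
    have hmem : ∀ h : Fin (m + 1) → ℤ, h 0 ∈ Multiset.map h univ.val := fun h =>
      Multiset.mem_map_of_mem h (Finset.mem_univ_val 0)
    have h0 : f 0 = g 0 := by
      refine Multiset.eq_of_countP_lt_eq (hmem f) (hfg ▸ hmem g) ?_
      rw [← codeS_zero, hcode, codeS_zero, hfg]
    have htail : Fin.tail f = Fin.tail g := by
      refine eq_of_map_univ_eq_of_codeS_eq ?_ fun t => ?_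
      · rw [Fin.univ_val_map_succ, Fin.univ_val_map_succ, h0] at hfg
        exact Multiset.cons_inj_right _ |>.1 hfg
      · rw [← codeS_succ, ← codeS_succ, hcode]
    rw [← Fin.cons_self_tail f, ← Fin.cons_self_tail g, h0, htail]

theorem exists_map_univ_eq_codeS_eq : ∀ {m : ℕ} (S : Finset ℤ), #S = m → ∀ c : ℕ → ℕ,
    (∀ t < m, c t + t < m) →
    ∃ f : Fin m → ℤ, Multiset.map f univ.val = S.val ∧ ∀ t, codeS f t = c t
  | 0, S, hS, _, _ => ⟨Fin.elim0, by simp [Finset.card_eq_zero.1 hS], fun t => t.elim0⟩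
  | m + 1, S, hS, c, hc => by
    obtain ⟨x, hxS, hx⟩ := S.exists_card_filter_lt_eq (c := c 0) (by have := hc 0; omega)
    obtain ⟨f, hf, hcode⟩ := exists_map_univ_eq_codeS_eq (m := m) (S.erase x)
      (by rw [Finset.card_erase_of_mem hxS, hS, Nat.add_sub_cancel]) (fun t => c (t + 1))
      (fun t ht => by have := hc (t + 1); omega)
    have hmap : Multiset.map (Fin.cons x f : Fin (m + 1) → ℤ) univ.val = S.val := by
      rw [Fin.univ_val_map_succ, Fin.cons_zero, Fin.tail_cons, hf, Finset.erase_val,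
        Multiset.cons_erase hxS]
    refine ⟨Fin.cons x f, hmap, Fin.cases ?_ fun t => ?_⟩
    · rw [codeS_zero, hmap, Fin.cons_zero, Fin.val_zero, ← hx, Multiset.countP_eq_card_filter]
      rfl
    · rw [codeS_succ, Fin.tail_cons, hcode, Fin.val_succ]

section Tail

variable {n : ℕ}

def tailIdx (n k : ℕ) : Finset (Fin n) := univ.filter fun i : Fin n => k ≤ (i : ℕ)

def tailEmb (n k : ℕ) : Fin (n - k) ↪o Fin n :=
  OrderEmbedding.ofStrictMono (fun t => ⟨k + t, by omega⟩) fun _ _ h =>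
    Fin.mk_lt_mk.2 (Nat.add_lt_add_left h k)

@[simp]
theorem tailEmb_val {k : ℕ} (t : Fin (n - k)) : (tailEmb n k t : ℕ) = k + t := rfl

theorem mem_range_tailEmb {k : ℕ} {j : Fin n} : j ∈ Set.range (tailEmb n k) ↔ k ≤ (j : ℕ) :=
  ⟨by rintro ⟨t, rfl⟩; exact Nat.le_add_right k t,
    fun h => ⟨⟨j - k, by omega⟩, Fin.ext (by rw [tailEmb_val, Fin.val_mk]; omega)⟩⟩

theorem tailIdx_eq_map (k : ℕ) : tailIdx n k = univ.map (tailEmb n k).toEmbedding := by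
  ext j
  simp [tailIdx, ← mem_range_tailEmb (k := k)]

theorem map_tailIdx_val (k : ℕ) (w : Fin n → ℤ) :
    Multiset.map w (tailIdx n k).val = Multiset.map (w ∘ tailEmb n k) univ.val := by
  rw [tailIdx_eq_map, Finset.map_val, Multiset.map_map]; rfl

theorem card_tailIdx (k : ℕ) : #(tailIdx n k) = n - k := by
  simp [tailIdx_eq_map]

theorem codeS_comp_tailEmb (k : ℕ) (w : Fin n → ℤ) (t : Fin (n - k)) :
    codeS (w ∘ tailEmb n k) t = codeS w (tailEmb n k t) := by
  rw [codeS, codeS, ← Finset.card_map (tailEmb n k).toEmbedding]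
  congr 1
  ext j
  simp only [Finset.mem_map, Finset.mem_filter, Finset.mem_univ, true_and,
    RelEmbedding.coe_toEmbedding, Function.comp]
  constructor
  · rintro ⟨s, ⟨hts, hs⟩, rfl⟩
    exact ⟨(tailEmb n k).lt_iff_lt.2 hts, hs⟩
  · rintro ⟨htj, hj⟩
    obtain ⟨s, rfl⟩ := mem_range_tailEmb.2 (le_of_lt (lt_of_le_of_lt
      (mem_range_tailEmb.1 ⟨t, rfl⟩) (Fin.lt_def.1 htj)))
    exact ⟨s, ⟨(tailEmb n k).lt_iff_lt.1 htj, hj⟩, rfl⟩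

theorem truncCodeEq_iff {k : ℕ} {w : Fin n → ℤ} {C : ℕ → ℕ} :
    TruncCodeEq k w C ↔ ∀ t, codeS (w ∘ tailEmb n k) t = C t := by
  refine ⟨fun h t => ?_, fun h i hi => ?_⟩
  · rw [codeS_comp_tailEmb, h _ (mem_range_tailEmb.1 ⟨t, rfl⟩)]
    simp
  · obtain ⟨t, rfl⟩ := mem_range_tailEmb.2 hi
    rw [← codeS_comp_tailEmb, h]
    simp

theorem TruncCodeEq.sum_tailIdx_codeS {k : ℕ} {w : Fin n → ℤ} {C : ℕ → ℕ}
    (hw : TruncCodeEq k w C) : ∑ i ∈ tailIdx n k, codeS w i = ∑ i ∈ range (n - k), C i := by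
  simp only [tailIdx_eq_map, Finset.sum_map, RelEmbedding.coe_toEmbedding, ← codeS_comp_tailEmb,
    truncCodeEq_iff.1 hw, Fin.sum_univ_eq_sum_range C]

def glueTail (k : ℕ) (u : Fin n → ℤ) (f : Fin (n - k) → ℤ) (i : Fin n) : ℤ :=
  if h : k ≤ (i : ℕ) then f ⟨i - k, by omega⟩ else u i

theorem glueTail_of_lt {k : ℕ} (u : Fin n → ℤ) (f : Fin (n - k) → ℤ) {i : Fin n}
    (hi : (i : ℕ) < k) : glueTail k u f i = u i := by
  simp [glueTail, not_le.2 hi]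

theorem glueTail_comp_tailEmb (k : ℕ) (u : Fin n → ℤ) (f : Fin (n - k) → ℤ) :
    glueTail k u f ∘ tailEmb n k = f := by
  funext t
  simp [glueTail]

end Tail

theorem Fin.nodup_map_univ_iff {α : Type*} {m : ℕ} {f : Fin m → α} :
    (Multiset.map f univ.val).Nodup ↔ Function.Injective f := by
  rw [Fin.univ_val_map, Multiset.coe_nodup, List.nodup_ofFn]

theorem isSignedPerm_iff {n : ℕ} {w : Fin n → ℤ} : IsSignedPerm w ↔
    (∀ z ∈ Multiset.map w univ.val, 1 ≤ |z| ∧ |z| ≤ n) ∧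
      ((Multiset.map w univ.val).map abs).Nodup := by
  rw [IsSignedPerm, Multiset.map_map, Fin.nodup_map_univ_iff, Multiset.forall_mem_map_iff]
  simp [Function.comp_def]

theorem IsSignedPerm.injective {n : ℕ} {w : Fin n → ℤ} (hw : IsSignedPerm w) :
    Function.Injective w :=
  fun _ _ h => hw.2 (congrArg abs h)

theorem IncUpTo.of_head_eq {n k : ℕ} {v w : Fin n → ℤ} (hw : IncUpTo k w)
    (hhead : ∀ i : Fin n, (i : ℕ) < k → v i = w i) : IncUpTo k v :=
  ⟨fun i hi => hhead i hi ▸ hw.1 i hi, fun i j hij hj => by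
    rw [hhead i (lt_trans (Fin.lt_def.1 hij) hj), hhead j hj]
    exact hw.2 i j hij hj⟩

theorem codeS_eq_countP {n : ℕ} (w : Fin n → ℤ) (i : Fin n) :
    codeS w i = (Multiset.map w (Ioi i).val).countP (· < w i) := by
  rw [Multiset.countP_map, ← Finset.filter_val, codeS]
  congr 1
  ext j
  simp

theorem lenS_eq_sum_codeS_add {n : ℕ} (w : Fin n → ℤ) :
    lenS w = ∑ i, codeS w i + ∑ i, (-(w i)).toNat := by
  rw [lenS, Finset.sum_filter_of_ne fun i _ h => by omega, Finset.card_filter,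
    Finset.sum_product]
  simp only [codeS, Finset.card_filter]

theorem TruncCodeEq.lt_of_zero {n k : ℕ} {v : Fin n → ℤ} (hv : TruncCodeEq k v fun _ => 0)
    (hinj : Function.Injective v) {i j : Fin n} (hij : i < j) (hi : k ≤ (i : ℕ)) : v i < v j := by
  refine lt_of_le_of_ne (not_lt.1 fun hji => ?_) (hinj.ne hij.ne)
  have hcode := hv i hi
  rw [codeS, Finset.card_eq_zero, Finset.filter_eq_empty_iff] at hcode
  exact hcode (Finset.mem_univ j) ⟨hij, hji⟩

section Rearrange

variable {n k : ℕ}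

theorem exists_tail_perm_truncCodeEq (u : Fin n → ℤ) (hu : Function.Injective u) (c : ℕ → ℕ)
    (hc : ∀ t < n - k, c t + t < n - k) :
    ∃ w : Fin n → ℤ, (∀ i : Fin n, (i : ℕ) < k → w i = u i) ∧
      Multiset.map w (tailIdx n k).val = Multiset.map u (tailIdx n k).val ∧ TruncCodeEq k w c := by
  have hS : #((tailIdx n k).image u) = n - k := by
    rw [Finset.card_image_of_injective _ hu, card_tailIdx]
  obtain ⟨f, hf, hcode⟩ := exists_map_univ_eq_codeS_eq _ hS c hc
  refine ⟨glueTail k u f, fun i hi => glueTail_of_lt u f hi, ?_, ?_⟩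
  · rw [map_tailIdx_val, glueTail_comp_tailEmb, hf, Finset.image_val_of_injOn hu.injOn]
  · rw [truncCodeEq_iff, glueTail_comp_tailEmb]
    exact hcode

theorem eq_of_tail_perm_of_truncCodeEq {w w' : Fin n → ℤ} {C : ℕ → ℕ}
    (hhead : ∀ i : Fin n, (i : ℕ) < k → w i = w' i)
    (htail : Multiset.map w (tailIdx n k).val = Multiset.map w' (tailIdx n k).val)
    (hw : TruncCodeEq k w C) (hw' : TruncCodeEq k w' C) : w = w' := by
  have h := eq_of_map_univ_eq_of_codeS_eq (f := w ∘ tailEmb n k) (g := w' ∘ tailEmb n k)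
    (by rwa [← map_tailIdx_val, ← map_tailIdx_val])
    (fun t => by rw [truncCodeEq_iff.1 hw, truncCodeEq_iff.1 hw'])
  funext i
  by_cases hi : k ≤ (i : ℕ)
  · obtain ⟨t, rfl⟩ := mem_range_tailEmb.2 hi
    exact congrFun h t
  · exact hhead i (not_le.1 hi)

variable {v w : Fin n → ℤ}
    (hhead : ∀ i : Fin n, (i : ℕ) < k → v i = w i)
    (htail : Multiset.map v (tailIdx n k).val = Multiset.map w (tailIdx n k).val)
include hhead htail

theorem map_val_eq_of_tail_perm {s : Finset (Fin n)} (hs : tailIdx n k ⊆ s) :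
    Multiset.map v s.val = Multiset.map w s.val := by
  have htl : s.val.filter (fun i : Fin n => ¬ (i : ℕ) < k) = (tailIdx n k).val := by
    rw [← Finset.filter_val]
    congr 1
    ext i
    simp only [tailIdx, Finset.mem_filter, Finset.mem_univ, true_and, not_lt]
    exact ⟨fun h => h.2, fun h => ⟨hs (by simpa [tailIdx] using h), h⟩⟩
  rw [← Multiset.filter_add_not (fun i : Fin n => (i : ℕ) < k) s.val, Multiset.map_add,
    Multiset.map_add, htl, htail]
  congr 1
  exact Multiset.map_congr rfl fun i hi => hhead i (Multiset.mem_filter.1 hi).2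

theorem IsSignedPerm.of_tail_perm (hw : IsSignedPerm w) : IsSignedPerm v := by
  rw [isSignedPerm_iff] at hw ⊢
  rwa [map_val_eq_of_tail_perm hhead htail (Finset.subset_univ _)]

theorem codeS_eq_of_tail_perm {i : Fin n} (hi : (i : ℕ) < k) : codeS v i = codeS w i := by
  have hsub : tailIdx n k ⊆ Ioi i := fun j hj =>
    Finset.mem_Ioi.2 (Fin.lt_def.2 (lt_of_lt_of_le hi (Finset.mem_filter.1 hj).2))
  rw [codeS_eq_countP, codeS_eq_countP, hhead i hi, map_val_eq_of_tail_perm hhead htail hsub]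

theorem lenS_add_sum_tail_codeS :
    lenS v + ∑ i ∈ tailIdx n k, codeS w i = lenS w + ∑ i ∈ tailIdx n k, codeS v i := by
  have hsplit (f : Fin n → ℕ) :
      ∑ i, f i = ∑ i ∈ univ.filter (fun i : Fin n => (i : ℕ) < k), f i + ∑ i ∈ tailIdx n k, f i := by
    rw [← Finset.sum_filter_add_sum_filter_not univ fun i : Fin n => (i : ℕ) < k]
    simp only [tailIdx, not_lt]
  have hhead_codes : ∑ i ∈ univ.filter (fun i : Fin n => (i : ℕ) < k), codeS v i
      = ∑ i ∈ univ.filter (fun i : Fin n => (i : ℕ) < k), codeS w i :=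
    Finset.sum_congr rfl fun i hi => codeS_eq_of_tail_perm hhead htail (Finset.mem_filter.1 hi).2
  have hneg := congrArg (fun M : Multiset ℤ => (M.map fun z => (-z).toNat).sum)
    (map_val_eq_of_tail_perm hhead htail (s := univ) (Finset.subset_univ _))
  simp only [Multiset.map_map, Function.comp_def, Finset.sum_map_val] at hneg
  rw [lenS_eq_sum_codeS_add, lenS_eq_sum_codeS_add, hsplit (codeS v), hsplit (codeS w), hneg,
    hhead_codes]
  omega

end Rearrange

theorem stmt13_general (n k : ℕ) (C : ℕ → ℕ)
    (hCbd : ∀ i : ℕ, i < n - k → C i + i + 1 ≤ n - k) :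
    (∀ w : Fin n → ℤ, IsSignedPerm w → IncUpTo k w → TruncCodeEq k w C →
      ∃ v : Fin n → ℤ, SortsTail k w v ∧ IsGrass k v ∧
        lenS v + ∑ i ∈ Finset.range (n - k), C i = lenS w) ∧
    (∀ w w' v : Fin n → ℤ,
      IsSignedPerm w → IncUpTo k w → TruncCodeEq k w C →
      IsSignedPerm w' → IncUpTo k w' → TruncCodeEq k w' C →
      SortsTail k w v → SortsTail k w' v → w = w') ∧
    (∀ v : Fin n → ℤ, IsGrass k v →
      ∃ w : Fin n → ℤ, IsSignedPerm w ∧ IncUpTo k w ∧ TruncCodeEq k w C ∧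
        SortsTail k w v) := by
  refine ⟨fun w hw hinc hcode => ?_, fun w w' v _ _ hcw _ _ hcw' hst hst' => ?_,
    fun v ⟨hv, hinc, hmono⟩ => ?_⟩
  · obtain ⟨v, hhead, htail, hzero⟩ :=
      exists_tail_perm_truncCodeEq (k := k) w hw.injective (fun _ => 0) fun _ ht => by omega
    have hv : IsSignedPerm v := hw.of_tail_perm hhead htail
    have hmono : ∀ i j : Fin n, i < j → k ≤ (i : ℕ) → v i < v j :=
      fun _ _ => hzero.lt_of_zero hv.injective
    refine ⟨v, ⟨hhead, hmono, htail⟩, ⟨hv, hinc.of_head_eq hhead, hmono⟩, ?_⟩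
    have hlen := lenS_add_sum_tail_codeS hhead htail
    rwa [hcode.sum_tailIdx_codeS, hzero.sum_tailIdx_codeS, Finset.sum_const_zero,
      add_zero] at hlen
  · exact eq_of_tail_perm_of_truncCodeEq (fun i hi => (hst.1 i hi).symm.trans (hst'.1 i hi))
      (hst.2.2.symm.trans hst'.2.2) hcw hcw'
  · obtain ⟨w, hhead, htail, hcode⟩ := exists_tail_perm_truncCodeEq v hv.injective C hCbd
    exact ⟨w, hv.of_tail_perm hhead htail, hinc.of_head_eq hhead, hcode,
      fun i hi => (hhead i hi).symm, hmono, htail.symm⟩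

/-- The map w ↦ v(w) is a bijection from the signed permutations increasing up
to k with k-truncated A-code C onto the k-Grassmannian elements of W_n, and
ℓ(v(w)) = ℓ(w) − Σ C_i. -/
theorem stmt13 (n k : ℕ) (C : ℕ → ℕ)
    (hC : ∀ a b : ℕ, a ≤ b → C b ≤ C a)
    (hCbd : ∀ i : ℕ, i < n - k → C i + i + 1 ≤ n - k) :
    (∀ w : Fin n → ℤ, IsSignedPerm w → IncUpTo k w → TruncCodeEq k w C →
      ∃ v : Fin n → ℤ, SortsTail k w v ∧ IsGrass k v ∧
        lenS v + ∑ i ∈ Finset.range (n - k), C i = lenS w) ∧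
    (∀ w w' v : Fin n → ℤ,
      IsSignedPerm w → IncUpTo k w → TruncCodeEq k w C →
      IsSignedPerm w' → IncUpTo k w' → TruncCodeEq k w' C →
      SortsTail k w v → SortsTail k w' v → w = w') ∧
    (∀ v : Fin n → ℤ, IsGrass k v →
      ∃ w : Fin n → ℤ, IsSignedPerm w ∧ IncUpTo k w ∧ TruncCodeEq k w C ∧
        SortsTail k w v) :=
  stmt13_general n k C hCbd
end

section
/- Let w, w̄ ∈ W_n both be increasing up to k with the same k-truncated A-code, with ℓ(w) = ℓ(w̄) + 1. If v(w̄) = s_i v(w) for some simple reflection s_i (i ≥ 0), then w̄ = s_i w. -/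
/-- The simple reflection s_i of the hyperoctahedral group acting on values:
s_0 exchanges 1 and −1; for i ≥ 1, s_i exchanges i ↔ i+1 and −i ↔ −(i+1). -/
def sVal (i : ℕ) (a : ℤ) : ℤ :=
  if i = 0 then (if a = 1 then -1 else if a = -1 then 1 else a)
  else if a = (i : ℤ) then (i : ℤ) + 1
  else if a = (i : ℤ) + 1 then (i : ℤ)
  else if a = -(i : ℤ) then -((i : ℤ) + 1)
  else if a = -((i : ℤ) + 1) then -(i : ℤ)
  else a

lemma aux1 {M : Multiset ℤ} {x y : ℤ} (hx : x ∈ M) (hxy : x < y) :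
    (M.filter (· < x)).card < (M.filter (· < y)).card := by
  apply Multiset.card_lt_card
  apply lt_of_le_of_ne
  · exact Multiset.monotone_filter_right M (fun a ha => lt_trans ha hxy)
  · intro h
    have hx' : x ∈ M.filter (· < y) := Multiset.mem_filter.2 ⟨hx, hxy⟩
    rw [← h] at hx'
    exact absurd (Multiset.mem_filter.1 hx').2 (lt_irrefl x)

lemma aux2 {M : Multiset ℤ} {x y : ℤ} (hx : x ∈ M) (hy : y ∈ M)
    (h : (M.filter (· < x)).card = (M.filter (· < y)).card) : x = y := by
  rcases lt_trichotomy x y with h'|h'|h'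
  · exact absurd h (ne_of_lt (aux1 hx h'))
  · exact h'
  · exact absurd h.symm (ne_of_lt (aux1 hy h'))

lemma code_eq_card {n : ℕ} (f : Fin n → ℤ) (p : ℕ) (hpn : p < n) :
    codeS f ⟨p, hpn⟩ =
    (((Finset.univ.filter fun j : Fin n => p ≤ (j:ℕ)).val.map f).filter
      (· < f ⟨p, hpn⟩)).card := by
  rw [Multiset.filter_map, Multiset.card_map]
  have hset : (Finset.univ.filter fun j : Fin n => (⟨p,hpn⟩:Fin n) < j ∧ f j < f ⟨p,hpn⟩)
      = (Finset.univ.filter fun j : Fin n => p ≤ (j:ℕ)).filter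
        (fun j => f j < f ⟨p,hpn⟩) := by
    rw [Finset.filter_filter]
    apply Finset.filter_congr
    intro x _
    simp only [Fin.lt_def]
    constructor
    · rintro ⟨h1, h2⟩; exact ⟨le_of_lt h1, h2⟩
    · rintro ⟨h1, h2⟩
      refine ⟨lt_of_le_of_ne h1 fun h => ?_, h2⟩
      have hx : (⟨p, hpn⟩ : Fin n) = x := Fin.ext h
      rw [hx] at h2; exact lt_irrefl _ h2
  show (Finset.univ.filter fun j : Fin n => (⟨p,hpn⟩:Fin n) < j ∧ f j < f ⟨p,hpn⟩).card = _
  rw [hset]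
  rfl

lemma keyUniq {n : ℕ} (f g : Fin n → ℤ) :
    ∀ (m p : ℕ), n ≤ p + m →
    (∀ j : Fin n, p ≤ (j:ℕ) → codeS f j = codeS g j) →
    ((Finset.univ.filter fun j : Fin n => p ≤ (j:ℕ)).val.map f
      = (Finset.univ.filter fun j : Fin n => p ≤ (j:ℕ)).val.map g) →
    ∀ j : Fin n, p ≤ (j:ℕ) → f j = g j := by
  intro m
  induction m with
  | zero =>
    intro p hnp _ _ j hj
    exact absurd j.isLt (by omega)
  | succ m ih =>
    intro p hnp hcode hM j hj
    by_cases hpn : n ≤ p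
    · exact absurd j.isLt (by omega)
    push_neg at hpn
    have hval : (Finset.univ.filter fun j : Fin n => p ≤ (j:ℕ)).val
        = (⟨p, hpn⟩ : Fin n) ::ₘ (Finset.univ.filter fun j : Fin n => p+1 ≤ (j:ℕ)).val := by
      have hSins : (Finset.univ.filter fun j : Fin n => p ≤ (j:ℕ))
          = insert (⟨p, hpn⟩ : Fin n) (Finset.univ.filter fun j : Fin n => p+1 ≤ (j:ℕ)) := by
        ext x
        simp only [Finset.mem_filter, Finset.mem_univ, true_and, Finset.mem_insert,
          Fin.ext_iff]
        omega
      rw [hSins, Finset.insert_val_of_notMem (by simp)]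
    have hMem : f ⟨p, hpn⟩ ∈ (Finset.univ.filter fun j : Fin n => p ≤ (j:ℕ)).val.map f := by
      apply Multiset.mem_map.2
      exact ⟨⟨p, hpn⟩, Eq.mpr Finset.mem_val (by simp), rfl⟩
    have hMemg : g ⟨p, hpn⟩ ∈ (Finset.univ.filter fun j : Fin n => p ≤ (j:ℕ)).val.map f := by
      rw [hM]
      exact Multiset.mem_map.2 ⟨⟨p, hpn⟩, Eq.mpr Finset.mem_val (by simp), rfl⟩
    have hfg : f ⟨p, hpn⟩ = g ⟨p, hpn⟩ := by
      apply aux2 hMem hMemg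
      rw [← code_eq_card f p hpn]
      conv_rhs => rw [hM]
      rw [← code_eq_card g p hpn]
      exact hcode ⟨p, hpn⟩ (le_refl p)
    have hM' : ((Finset.univ.filter fun j : Fin n => p+1 ≤ (j:ℕ)).val.map f
        = (Finset.univ.filter fun j : Fin n => p+1 ≤ (j:ℕ)).val.map g) := by
      have hM2 := hM
      rw [hval, Multiset.map_cons, Multiset.map_cons, hfg] at hM2
      exact (Multiset.cons_inj_right _).1 hM2
    rcases eq_or_lt_of_le hj with he | hlt
    · have : j = ⟨p, hpn⟩ := Fin.ext he.symm
      rw [this]; exact hfg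
    · exact ih (p+1) (by omega) (fun j hj => hcode j (by omega)) hM' j hlt

lemma sval_lt_iff (i : ℕ) (a b : ℤ) (ha : a ≠ 0) (hb : b ≠ 0)
    (hne : a ≠ b) (hne' : a ≠ -b)
    (h1 : ¬(a = (i:ℤ) ∧ b = (i:ℤ)+1)) (h2 : ¬(b = (i:ℤ) ∧ a = (i:ℤ)+1))
    (h3 : ¬(a = -(i:ℤ) ∧ b = -((i:ℤ)+1))) (h4 : ¬(b = -(i:ℤ) ∧ a = -((i:ℤ)+1))) :
    a < b ↔ sVal i a < sVal i b := by
  unfold sVal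
  split_ifs <;> omega

/-- If w, w̄ are increasing up to k with the same k-truncated A-code,
ℓ(w) = ℓ(w̄) + 1, and v(w̄) = s_i v(w) for a simple reflection s_i, then w̄ = s_i w. -/
theorem stmt14 (n k i : ℕ) (hi : i < n) (w wb v vb : Fin n → ℤ)
    (hw : IsSignedPerm w) (hwb : IsSignedPerm wb)
    (hik : IncUpTo k w) (hikb : IncUpTo k wb)
    (hcode : ∀ j : Fin n, k ≤ (j : ℕ) → codeS w j = codeS wb j)
    (hlen : lenS w = lenS wb + 1)
    (hv : SortsTail k w v) (hvb : SortsTail k wb vb)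
    (hs : ∀ j : Fin n, vb j = sVal i (v j)) :
    ∀ j : Fin n, wb j = sVal i (w j) := by
  classical
  -- tail multiset of wb equals tail multiset of sVal i ∘ w
  have hMw : (Finset.univ.filter fun j : Fin n => k ≤ (j:ℕ)).val.map wb
      = (Finset.univ.filter fun j : Fin n => k ≤ (j:ℕ)).val.map (fun x => sVal i (w x)) := by
    rw [← hvb.2.2]
    have h1 : (Finset.univ.filter fun j : Fin n => k ≤ (j:ℕ)).val.map vb
        = ((Finset.univ.filter fun j : Fin n => k ≤ (j:ℕ)).val.map v).map (sVal i) := by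
      rw [Multiset.map_map]
      exact Multiset.map_congr rfl (fun x _ => hs x)
    rw [h1, hv.2.2, Multiset.map_map]
    rfl
  -- no bad pair (s, s+1) both in the tail of w, when sVal i swaps them
  have hswap : ∀ s : ℤ, sVal i s = s + 1 → sVal i (s+1) = s →
      s ∈ (Finset.univ.filter fun j : Fin n => k ≤ (j:ℕ)).val.map w →
      s + 1 ∈ (Finset.univ.filter fun j : Fin n => k ≤ (j:ℕ)).val.map w → False := by
    intro s hs1 hs2 hm1 hm2
    rw [← hv.2.2] at hm1 hm2
    obtain ⟨p, hpS, hvp⟩ := Multiset.mem_map.1 hm1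
    obtain ⟨q, hqS, hvq⟩ := Multiset.mem_map.1 hm2
    have hpk : k ≤ (p:ℕ) := (Finset.mem_filter.1 (Eq.mp Finset.mem_val hpS)).2
    have hqk : k ≤ (q:ℕ) := (Finset.mem_filter.1 (Eq.mp Finset.mem_val hqS)).2
    have hpq : p < q := by
      rcases lt_trichotomy p q with h'|h'|h'
      · exact h'
      · rw [h', hvq] at hvp; omega
      · have := hv.2.1 q p h' hqk; omega
    have hineq := hvb.2.1 p q hpq hpk
    rw [hs p, hs q, hvp, hvq, hs1, hs2] at hineq
    omega
  -- the code of sVal i ∘ w agrees with that of w on the tail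
  have hcodeu : ∀ j : Fin n, k ≤ (j:ℕ) → codeS (fun x => sVal i (w x)) j = codeS w j := by
    intro j hj
    unfold codeS
    congr 1
    apply Finset.filter_congr
    intro l _
    by_cases hjl : j < l
    · simp only [hjl, true_and]
      have hlk : k ≤ (l:ℕ) := le_trans hj (le_of_lt hjl)
      have hlj : l ≠ j := fun h => by rw [h] at hjl; exact lt_irrefl _ hjl
      have memw : ∀ x : Fin n, k ≤ (x:ℕ) →
          w x ∈ (Finset.univ.filter fun j : Fin n => k ≤ (j:ℕ)).val.map w := by
        intro x hx
        exact Multiset.mem_map.2 ⟨x, Eq.mpr Finset.mem_val (by simp [hx]), rfl⟩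
    -- apply sval_lt_iff with a := w l, b := w j
      have habs : ∀ x : Fin n, w x ≠ 0 := by
        intro x hx
        have := (hw.1 x).1
        rw [hx, abs_zero] at this
        omega
      have key := sval_lt_iff i (w l) (w j) (habs l) (habs j)
        (fun h => hlj (hw.2 (by simp only [h])))
        (fun h => hlj (hw.2 (by simp only [h, abs_neg])))
        (fun ⟨e1, e2⟩ => by
          have hi0 : i ≠ 0 := fun h0 => habs l (by rw [e1, h0]; rfl)
          refine hswap (i:ℤ) ?_ ?_ (e1 ▸ memw l hlk) (e2 ▸ memw j hj)
          · unfold sVal; split_ifs <;> omega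
          · unfold sVal; split_ifs <;> omega)
        (fun ⟨e1, e2⟩ => by
          have hi0 : i ≠ 0 := fun h0 => habs j (by rw [e1, h0]; rfl)
          refine hswap (i:ℤ) ?_ ?_ (e1 ▸ memw j hj) (e2 ▸ memw l hlk)
          · unfold sVal; split_ifs <;> omega
          · unfold sVal; split_ifs <;> omega)
        (fun ⟨e1, e2⟩ => by
          have hi0 : i ≠ 0 := fun h0 => habs l (by rw [e1, h0]; rfl)
          have h1 : (-(↑i+1) : ℤ) + 1 = -(i:ℤ) := by ring
          refine hswap (-((i:ℤ)+1)) ?_ ?_ ?_ ?_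
          · rw [h1]; unfold sVal; split_ifs <;> omega
          · rw [h1]; unfold sVal; split_ifs <;> omega
          · exact e2 ▸ memw j hj
          · rw [h1]; exact e1 ▸ memw l hlk)
        (fun ⟨e1, e2⟩ => by
          have hi0 : i ≠ 0 := fun h0 => habs j (by rw [e1, h0]; rfl)
          have h1 : (-(↑i+1) : ℤ) + 1 = -(i:ℤ) := by ring
          refine hswap (-((i:ℤ)+1)) ?_ ?_ ?_ ?_
          · rw [h1]; unfold sVal; split_ifs <;> omega
          · rw [h1]; unfold sVal; split_ifs <;> omega
          · exact e2 ▸ memw l hlk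
          · rw [h1]; exact e1 ▸ memw j hj)
      exact key.symm
    · simp [hjl]
  -- uniqueness on the tail
  have htail := keyUniq wb (fun x => sVal i (w x)) n k (by omega)
    (fun j hj => ((hcode j hj).symm).trans ((hcodeu j hj).symm)) hMw
  intro j
  rcases lt_or_ge (j:ℕ) k with hjk | hjk
  · rw [← hvb.1 j hjk, hs j, hv.1 j hjk]
  · exact htail j hjk
end

section
/- Let w ∈ W_∞ be a signed permutation with first right descent at k (so 0 < w_1 < ⋯ < w_k and w_k > w_{k+1}), let u_1 < ⋯ < u_m < 0 < u_{m+1} < ⋯ < u_{n−k} list the entries w_{k+1},…,w_n, and set β = (u_1+1,…,u_m+1,u_{m+1},…,u_{n−k}). If β_{s+1} > β_s + 1, then |β_s| is a left descent of w (i.e., ℓ(s_{|β_s|} w) < ℓ(w)). -/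
/-- β_s = u_s + 1 if u_s < 0, and β_s = u_s otherwise. -/
def betaOf {m : ℕ} (u : Fin m → ℤ) (s : Fin m) : ℤ :=
  if u s < 0 then u s + 1 else u s

lemma lenS_eq {n : ℕ} (w : Fin n → ℤ) :
    lenS w = (∑ p ∈ Finset.univ ×ˢ Finset.univ,
      if (p : Fin n × Fin n).1 < p.2 ∧ w p.2 < w p.1 then 1 else 0) +
      ∑ i : Fin n, (-(w i)).toNat := by
  unfold lenS
  congr 1
  · rw [Finset.card_filter]
  · rw [Finset.sum_filter]
    refine Finset.sum_congr rfl fun i _ => ?_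
    split_ifs with h
    · rfl
    · omega

lemma sVal_lt_iff (i : ℕ) (hi : 1 ≤ i) (x y : ℤ)
    (h1 : ¬(x = (i:ℤ) ∧ y = (i:ℤ) + 1)) (h2 : ¬(y = (i:ℤ) ∧ x = (i:ℤ) + 1))
    (h3 : ¬(x = -(i:ℤ) ∧ y = -((i:ℤ)+1))) (h4 : ¬(y = -(i:ℤ) ∧ x = -((i:ℤ)+1))) :
    (sVal i x < sVal i y ↔ x < y) := by
  unfold sVal
  split_ifs <;> omega

lemma sVal_i (i : ℕ) (hi : 1 ≤ i) : sVal i ((i:ℤ)) = (i:ℤ) + 1 := by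
  unfold sVal; split_ifs <;> omega

lemma sVal_i1 (i : ℕ) (hi : 1 ≤ i) : sVal i ((i:ℤ) + 1) = (i:ℤ) := by
  unfold sVal; split_ifs <;> omega

lemma sVal_ni1 (i : ℕ) (hi : 1 ≤ i) : sVal i (-((i:ℤ) + 1)) = -(i:ℤ) := by
  unfold sVal; split_ifs <;> omega

lemma sVal_fix (i : ℕ) (hi : 1 ≤ i) (x : ℤ) (h1 : x ≠ (i:ℤ)) (h2 : x ≠ -(i:ℤ))
    (h3 : x ≠ (i:ℤ)+1) (h4 : x ≠ -((i:ℤ)+1)) : sVal i x = x := by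
  unfold sVal; split_ifs <;> omega

lemma sVal0_fix (x : ℤ) (h1 : x ≠ 1) (h2 : x ≠ -1) : sVal 0 x = x := by
  simp [sVal, h1, h2]

lemma sVal0_neg1 : sVal 0 (-1) = 1 := by norm_num [sVal]

lemma key {n : ℕ} (w : Fin n → ℤ) (i : ℕ) (hi : 1 ≤ i) (p q : Fin n)
    (hq : w q = (i:ℤ))
    (hp : (w p = (i:ℤ) + 1 ∧ p < q) ∨ w p = -((i:ℤ) + 1))
    (hother : ∀ j, j ≠ p → j ≠ q →
      w j ≠ (i:ℤ) ∧ w j ≠ -(i:ℤ) ∧ w j ≠ (i:ℤ)+1 ∧ w j ≠ -((i:ℤ)+1)) :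
    lenS (fun j => sVal i (w j)) < lenS w := by
  set w' : Fin n → ℤ := fun j => sVal i (w j) with hw'
  have hfix : ∀ j, j ≠ p → j ≠ q → w' j = w j := by
    intro j hjp hjq
    obtain ⟨h1, h2, h3, h4⟩ := hother j hjp hjq
    exact sVal_fix i hi _ h1 h2 h3 h4
  have hnoneg : ∀ j : Fin n, w j ≠ -(i:ℤ) := by
    intro j hj
    by_cases hjp : j = p
    · subst hjp; rcases hp with ⟨h, -⟩ | h <;> omega
    by_cases hjq : j = q
    · subst hjq; omega
    · exact (hother j hjp hjq).2.1 hj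
  -- main pointwise implication
  have main : ∀ a b : Fin n, a < b → w' b < w' a → w b < w a := by
    intro a b hab hlt
    by_cases c1 : w b = (i:ℤ) ∧ w a = (i:ℤ) + 1
    · -- then b = q, a = p with w p = i+1, and w' b = i+1, w' a = i : contradiction
      have e1 : w' b = (i:ℤ) + 1 := by rw [hw']; simp only; rw [c1.1, sVal_i i hi]
      have e2 : w' a = (i:ℤ) := by rw [hw']; simp only; rw [c1.2, sVal_i1 i hi]
      omega
    by_cases c2 : w a = (i:ℤ) ∧ w b = (i:ℤ) + 1
    · -- then a = q and b = p, with hp giving p < q, contradicting a < b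
      have hbp : b = p := by
        by_cases hbq : b = q
        · subst hbq; omega
        by_cases hbp : b = p
        · exact hbp
        · exact absurd c2.2 (hother b hbp hbq).2.2.1
      have haq : a = q := by
        by_cases haq : a = q
        · exact haq
        by_cases hap : a = p
        · exfalso
          have hc := c2.1
          rw [hap] at hc
          rcases hp with ⟨h, -⟩ | h <;> omega
        · exact absurd c2.1 (hother a hap haq).1
      rw [haq, hbp] at hab
      rcases hp with ⟨-, hpq⟩ | h
      · exact absurd (hpq.trans hab) (lt_irrefl p)
      · have hc := c2.2
        rw [hbp] at hc
        omega
    · exact (sVal_lt_iff i hi (w b) (w a) c1 c2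
        (by push_neg; intro h; exact absurd h (hnoneg b))
        (by push_neg; intro h; exact absurd h (hnoneg a))).mp hlt
  rw [lenS_eq, lenS_eq]
  have hpair : ∀ r ∈ Finset.univ ×ˢ Finset.univ,
      (if (r : Fin n × Fin n).1 < r.2 ∧ w' r.2 < w' r.1 then 1 else 0) ≤
      (if r.1 < r.2 ∧ w r.2 < w r.1 then 1 else 0) := by
    rintro ⟨a, b⟩ -
    dsimp only
    split_ifs with h1 h2
    · exact le_refl _
    · exact absurd ⟨h1.1, main a b h1.1 h1.2⟩ h2
    · exact Nat.zero_le _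
    · exact Nat.zero_le _
  have hterm : ∀ j ∈ (Finset.univ : Finset (Fin n)), (-(w' j)).toNat ≤ (-(w j)).toNat := by
    intro j _
    by_cases hjp : j = p
    · rcases hp with ⟨h, -⟩ | h
      · have hj : w j = (i:ℤ) + 1 := by rw [hjp]; exact h
        have e : w' j = (i:ℤ) := by rw [hw']; simp only; rw [hj, sVal_i1 i hi]
        omega
      · have hj : w j = -((i:ℤ) + 1) := by rw [hjp]; exact h
        have e : w' j = -(i:ℤ) := by rw [hw']; simp only; rw [hj, sVal_ni1 i hi]
        omega
    by_cases hjq : j = q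
    · have hj : w j = (i:ℤ) := by rw [hjq]; exact hq
      have e : w' j = (i:ℤ) + 1 := by rw [hw']; simp only; rw [hj, sVal_i i hi]
      omega
    · rw [hfix j hjp hjq]
  rcases hp with ⟨h, hpq⟩ | h
  · -- strict decrease in the inversion sum at (p, q)
    refine Nat.add_lt_add_of_lt_of_le ?_ (Finset.sum_le_sum hterm)
    refine Finset.sum_lt_sum hpair ⟨(p, q), Finset.mem_product.mpr ⟨Finset.mem_univ _, Finset.mem_univ _⟩, ?_⟩
    have e1 : w' q = (i:ℤ) + 1 := by rw [hw']; simp only; rw [hq, sVal_i i hi]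
    have e2 : w' p = (i:ℤ) := by rw [hw']; simp only; rw [h, sVal_i1 i hi]
    show (if (p, q).1 < (p, q).2 ∧ w' (p, q).2 < w' (p, q).1 then 1 else 0) <
         (if (p, q).1 < (p, q).2 ∧ w (p, q).2 < w (p, q).1 then 1 else 0)
    dsimp only
    rw [if_neg (by rintro ⟨-, hh⟩; omega), if_pos ⟨hpq, by rw [hq, h]; omega⟩]
    omega
  · -- strict decrease in the negative-sum at p
    refine Nat.add_lt_add_of_le_of_lt (Finset.sum_le_sum hpair) ?_
    refine Finset.sum_lt_sum hterm ⟨p, Finset.mem_univ _, ?_⟩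
    have e2 : w' p = -(i:ℤ) := by rw [hw']; simp only; rw [h, sVal_ni1 i hi]
    omega

lemma key0 {n : ℕ} (w : Fin n → ℤ) (p : Fin n) (hp : w p = -1)
    (hother : ∀ j, j ≠ p → w j ≠ 1 ∧ w j ≠ -1 ∧ w j ≠ 0) :
    lenS (fun j => sVal 0 (w j)) < lenS w := by
  set w' : Fin n → ℤ := fun j => sVal 0 (w j) with hw'
  have hfix : ∀ j, j ≠ p → w' j = w j := by
    intro j hjp
    obtain ⟨h1, h2, -⟩ := hother j hjp
    exact sVal0_fix _ h1 h2
  have hwp : w' p = 1 := by rw [hw']; simp only; rw [hp, sVal0_neg1]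
  have main : ∀ a b : Fin n, a < b → w' b < w' a → w b < w a := by
    intro a b hab hlt
    by_cases hap : a = p
    · have hbp : b ≠ p := fun h => by rw [hap, h] at hab; exact lt_irrefl _ hab
      obtain ⟨h1, h2, h3⟩ := hother b hbp
      rw [hap, hwp, hfix b hbp] at hlt
      rw [hap, hp]
      omega
    by_cases hbp : b = p
    · obtain ⟨h1, h2, h3⟩ := hother a hap
      rw [hbp, hwp, hfix a hap] at hlt
      rw [hbp, hp]
      omega
    · rw [hfix a hap, hfix b hbp] at hlt; exact hlt
  rw [lenS_eq, lenS_eq]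
  have hpair : ∀ r ∈ Finset.univ ×ˢ Finset.univ,
      (if (r : Fin n × Fin n).1 < r.2 ∧ w' r.2 < w' r.1 then 1 else 0) ≤
      (if r.1 < r.2 ∧ w r.2 < w r.1 then 1 else 0) := by
    rintro ⟨a, b⟩ -
    dsimp only
    split_ifs with h1 h2
    · exact le_refl _
    · exact absurd ⟨h1.1, main a b h1.1 h1.2⟩ h2
    · exact Nat.zero_le _
    · exact Nat.zero_le _
  have hterm : ∀ j ∈ (Finset.univ : Finset (Fin n)), (-(w' j)).toNat ≤ (-(w j)).toNat := by
    intro j _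
    by_cases hjp : j = p
    · have hj : w j = -1 := by rw [hjp]; exact hp
      have e : w' j = 1 := by rw [hw']; simp only; rw [hj, sVal0_neg1]
      omega
    · rw [hfix j hjp]
  refine Nat.add_lt_add_of_le_of_lt (Finset.sum_le_sum hpair) ?_
  refine Finset.sum_lt_sum hterm ⟨p, Finset.mem_univ _, ?_⟩
  omega

lemma beta_mono {m : ℕ} (u : Fin m → ℤ) (hu : StrictMono u) {a b : Fin m} (h : a ≤ b) :
    betaOf u a ≤ betaOf u b := by
  rcases eq_or_lt_of_le h with h' | h'
  · rw [h']
  · have := hu h'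
    unfold betaOf
    split_ifs <;> omega

/-- Let w have first right descent at k, let u_1 < ⋯ < u_{n−k} list the entries
w_{k+1}, …, w_n, and let β be as above. If β_{s+1} > β_s + 1, then |β_s| is a
left descent of w, i.e. ℓ(s_{|β_s|} w) < ℓ(w). -/
theorem stmt15 (n k : ℕ) (hk : k < n) (w : Fin n → ℤ) (hw : IsSignedPerm w)
    (hinc : IncUpTo k w)
    (hdesc0 : k = 0 → w ⟨0, lt_of_le_of_lt (Nat.zero_le k) hk⟩ < 0)
    (hdesc1 : 0 < k → w ⟨k, hk⟩ < w ⟨k - 1, by omega⟩)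
    (u : Fin (n - k) → ℤ) (hu : StrictMono u)
    (humult : (Finset.univ.val.map u)
      = (Finset.univ.filter fun i : Fin n => k ≤ (i : ℕ)).val.map w)
    (s : Fin (n - k)) (hs1 : (s : ℕ) + 1 < n - k)
    (hβ : betaOf u s + 1 < betaOf u ⟨(s : ℕ) + 1, hs1⟩) :
    lenS (fun j => sVal (betaOf u s).natAbs (w j)) < lenS w := by
  obtain ⟨hwb, hwinj⟩ := hw
  set i := (betaOf u s).natAbs with hidef
  have F1 : ∀ t : Fin (n - k), ∃ j : Fin n, k ≤ (j : ℕ) ∧ w j = u t := by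
    intro t
    have hmem : u t ∈ Finset.univ.val.map u := Multiset.mem_map_of_mem u (Finset.mem_univ t)
    rw [humult] at hmem
    obtain ⟨j, hj, hwj⟩ := Multiset.mem_map.mp hmem
    exact ⟨j, (Finset.mem_filter.mp (Finset.mem_val.mp hj)).2, hwj⟩
  have F2 : ∀ j : Fin n, k ≤ (j : ℕ) → ∃ t, u t = w j := by
    intro j hj
    have hmem : w j ∈ (Finset.univ.filter fun i : Fin n => k ≤ (i : ℕ)).val.map w :=
      Multiset.mem_map_of_mem w
        (Finset.mem_val.mpr (Finset.mem_filter.mpr ⟨Finset.mem_univ _, hj⟩))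
    rw [← humult] at hmem
    obtain ⟨t, -, ht⟩ := Multiset.mem_map.mp hmem
    exact ⟨t, ht⟩
  have F3 : ∀ v : ℤ, 1 ≤ v → v ≤ (n : ℤ) → ∃ j : Fin n, |w j| = v := by
    intro v h1 h2
    have himg : Finset.image (fun j => |w j|) Finset.univ = Finset.Icc 1 (n : ℤ) := by
      apply Finset.eq_of_subset_of_card_le
      · intro x hx
        obtain ⟨j, -, rfl⟩ := Finset.mem_image.mp hx
        exact Finset.mem_Icc.mpr ⟨(hwb j).1, (hwb j).2⟩
      · rw [Finset.card_image_of_injective _ hwinj, Int.card_Icc]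
        simp
    have hv : v ∈ Finset.image (fun j => |w j|) Finset.univ := by
      rw [himg]; exact Finset.mem_Icc.mpr ⟨h1, h2⟩
    obtain ⟨j, -, hj⟩ := Finset.mem_image.mp hv
    exact ⟨j, hj⟩
  have hinj2 : ∀ a b : Fin n, (w a = w b ∨ w a = -(w b)) → a = b := by
    intro a b h
    apply hwinj
    show |w a| = |w b|
    rcases h with h | h <;> rw [h] <;> simp [abs_neg]
  have habs' : ∀ j : Fin n, 1 ≤ ((w j).natAbs : ℤ) ∧ ((w j).natAbs : ℤ) ≤ (n : ℤ) := by
    intro j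
    have := hwb j
    rwa [Int.abs_eq_natAbs] at this
  obtain ⟨q0, hq0k, hq0⟩ := F1 s
  have hq0abs := habs' q0
  by_cases hus : u s < 0
  · have hβs : betaOf u s = u s + 1 := if_pos hus
    by_cases hus1 : u s = -1
    · -- i = 0, use key0
      have h0 : i = 0 := by rw [hidef, hβs, hus1]; rfl
      rw [h0]
      apply key0 w q0 (by rw [hq0, hus1])
      intro j hj
      have hj1 := habs' j
      refine ⟨fun h => hj (hinj2 j q0 (by omega)),
              fun h => hj (hinj2 j q0 (by omega)), by omega⟩
    · -- u s ≤ -2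
      have hi' : (i : ℤ) = -(u s) - 1 := by rw [hidef, hβs]; omega
      have hi1 : 1 ≤ i := by omega
      have hq0v : w q0 = -((i : ℤ) + 1) := by omega
      have hin : (i : ℤ) ≤ (n : ℤ) := by omega
      obtain ⟨r, hr⟩ := F3 (i : ℤ) (by omega) (by omega)
      rw [Int.abs_eq_natAbs] at hr
      have hri : w r = (i : ℤ) ∨ w r = -(i : ℤ) := by omega
      rcases hri with hri | hri
      · refine key w i hi1 q0 r hri (Or.inr hq0v) ?_
        intro j hjp hjq
        exact ⟨fun h => hjq (hinj2 j r (by omega)),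
               fun h => hjq (hinj2 j r (by omega)),
               fun h => hjp (hinj2 j q0 (by omega)),
               fun h => hjp (hinj2 j q0 (by omega))⟩
      · exfalso
        have hrk : k ≤ (r : ℕ) := by
          by_contra hlt
          have := hinc.1 r (by omega)
          omega
        obtain ⟨t, ht⟩ := F2 r hrk
        have hst : s < t := hu.lt_iff_lt.mp (by omega)
        have hle : (⟨(s : ℕ) + 1, hs1⟩ : Fin (n - k)) ≤ t := by
          have h' := Fin.lt_def.mp hst
          rw [Fin.le_def]
          show (s : ℕ) + 1 ≤ (t : ℕ)
          omega
        have hbt := beta_mono u hu hle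
        have hbt' : betaOf u t = u t + 1 := if_pos (by omega)
        omega
  · -- u s ≥ 1
    have hβs : betaOf u s = u s := if_neg hus
    have hus1 : 1 ≤ u s := by omega
    have hi' : (i : ℤ) = u s := by rw [hidef, hβs]; omega
    have hi1 : 1 ≤ i := by omega
    have hq0v : w q0 = (i : ℤ) := by omega
    obtain ⟨q1, hq1k, hq1⟩ := F1 ⟨(s : ℕ) + 1, hs1⟩
    have hq1abs := habs' q1
    have hβ1 : betaOf u ⟨(s : ℕ) + 1, hs1⟩ = u ⟨(s : ℕ) + 1, hs1⟩ := by
      by_cases h : u ⟨(s : ℕ) + 1, hs1⟩ < 0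
      · have e : betaOf u ⟨(s : ℕ) + 1, hs1⟩ = u ⟨(s : ℕ) + 1, hs1⟩ + 1 := if_pos h
        omega
      · exact if_neg h
    have hin : (i : ℤ) + 1 ≤ (n : ℤ) := by omega
    obtain ⟨r, hr⟩ := F3 ((i : ℤ) + 1) (by omega) (by omega)
    rw [Int.abs_eq_natAbs] at hr
    have hri : w r = (i : ℤ) + 1 ∨ w r = -((i : ℤ) + 1) := by omega
    have hothers : ∀ j, j ≠ r → j ≠ q0 →
        w j ≠ (i : ℤ) ∧ w j ≠ -(i : ℤ) ∧ w j ≠ (i : ℤ) + 1 ∧ w j ≠ -((i : ℤ) + 1) := by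
      intro j hjp hjq
      exact ⟨fun h => hjq (hinj2 j q0 (by omega)),
             fun h => hjq (hinj2 j q0 (by omega)),
             fun h => hjp (hinj2 j r (by omega)),
             fun h => hjp (hinj2 j r (by omega))⟩
    rcases hri with hri | hri
    · by_cases hrk : (r : ℕ) < k
      · have hlt : r < q0 := by rw [Fin.lt_def]; omega
        exact key w i hi1 r q0 hq0v (Or.inl ⟨hri, hlt⟩) hothers
      · exfalso
        obtain ⟨t, ht⟩ := F2 r (by omega)
        have hst : s < t := hu.lt_iff_lt.mp (by omega)
        have hle : (⟨(s : ℕ) + 1, hs1⟩ : Fin (n - k)) ≤ t := by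
          have h' := Fin.lt_def.mp hst
          rw [Fin.le_def]
          show (s : ℕ) + 1 ≤ (t : ℕ)
          omega
        have hbt := beta_mono u hu hle
        have hbt' : betaOf u t = u t := if_neg (by omega)
        omega
    · exact key w i hi1 r q0 hq0v (Or.inr hri) hothers
end

section
/- Let λ, μ be integer vectors, D a valid set of pairs in {(i,j) : 1 ≤ i < j}, and suppose the variable families satisfy 𝔰^j = 𝔰^{j+1}, (j,j+1) ∉ D, and for each h < j, (h,j) ∈ D if and only if (h,j+1) ∈ D. Then for any integers r, s: R^D 𝔰_{(λ, r, s, μ)} = − R^D 𝔰_{(λ, s−1, r+1, μ)}, where R^D = Π_{i<j}(1 − R_{ij}) Π_{(i,j)∈D}(1 + R_{ij})^{−1} acts on monomials 𝔰_α = 𝔰¹_{α_1} 𝔰²_{α_2} ⋯ via raising operators R_{ij}(α) = (…, α_i + 1, …, α_j − 1, …). -/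
/-- Coefficient of R_{ij}^k in the factor of R^D corresponding to the pair
p = (i,j) (positions 1-indexed, pairs with 1 ≤ i < j ≤ ℓ):
(1 − R)(1 + R)^{-1} = 1 + Σ_{k≥1} 2(−1)^k R^k if p ∈ D, and 1 − R otherwise. -/
def pairCoeff (D : Finset (ℕ × ℕ)) (ℓ : ℕ) (p : ℕ × ℕ) (k : ℕ) : ℤ :=
  if k = 0 then 1
  else if ¬(1 ≤ p.1 ∧ p.1 < p.2 ∧ p.2 ≤ ℓ) then 0
  else if p ∈ D then 2 * (-1) ^ k
  else if k = 1 then -1 else 0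

/-- Coefficient of a monomial Π R_{ij}^{m(i,j)} in the expansion of R^D. -/
def monCoeff (D : Finset (ℕ × ℕ)) (ℓ : ℕ) (m : (ℕ × ℕ) →₀ ℕ) : ℤ :=
  ∏ p ∈ m.support, pairCoeff D ℓ p (m p)

/-- The integer sequence (Π R_{ij}^{m(i,j)}) α at position q. -/
def shiftBy (ℓ : ℕ) (m : (ℕ × ℕ) →₀ ℕ) (α : ℕ → ℤ) (q : ℕ) : ℤ :=
  α q + ∑ j ∈ Finset.Icc 1 ℓ, (m (q, j) : ℤ) - ∑ i ∈ Finset.Icc 1 ℓ, (m (i, q) : ℤ)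

/-- R^D 𝔰_α, where 𝔰_α = 𝔰¹_{α_1} ⋯ 𝔰^ℓ_{α_ℓ} and sv q i denotes 𝔰^q_i. -/
noncomputable def RDapply {A : Type*} [CommRing A] (sv : ℕ → ℤ → A)
    (D : Finset (ℕ × ℕ)) (ℓ : ℕ) (α : ℕ → ℤ) : A :=
  ∑ᶠ m : (ℕ × ℕ) →₀ ℕ,
    (monCoeff D ℓ m : A) * ∏ q ∈ Finset.Icc 1 ℓ, sv q (shiftBy ℓ m α q)

/-! ### Auxiliary combinatorial machinery -/

def sw (j q : ℕ) : ℕ := if q = j then j + 1 else if q = j + 1 then j else q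

lemma sw_invol (j q : ℕ) : sw j (sw j q) = q := by unfold sw; split_ifs <;> omega

lemma sw_j (j : ℕ) : sw j j = j + 1 := by simp [sw]

lemma sw_j1 (j : ℕ) : sw j (j + 1) = j := by simp [sw]

lemma sw_other {j q : ℕ} (h1 : q ≠ j) (h2 : q ≠ j + 1) : sw j q = q := by simp [sw, h1, h2]

def tog (c : ℕ) : ℕ := if c = 0 then 1 else if c = 1 then 0 else c

lemma tog_invol (c : ℕ) : tog (tog c) = c := by unfold tog; split_ifs <;> simp_all

def theta (j : ℕ) (p : ℕ × ℕ) : ℕ × ℕ :=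
  if (p.1 = j ∧ p.2 = j + 1) ∨ (p.1 = j + 1 ∧ p.2 = j) then p
  else (sw j p.1, sw j p.2)

lemma theta_invol (j : ℕ) (p : ℕ × ℕ) : theta j (theta j p) = p := by
  obtain ⟨a, b⟩ := p
  by_cases h : (a = j ∧ b = j + 1) ∨ (a = j + 1 ∧ b = j)
  · simp only [theta, h]
    simp [h]
  · have h1 : theta j (a, b) = (sw j a, sw j b) := by
      simp only [theta]; rw [if_neg]; simpa using h
    rw [h1]
    have h2 : ¬(((sw j a, sw j b).1 = j ∧ (sw j a, sw j b).2 = j + 1) ∨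
        ((sw j a, sw j b).1 = j + 1 ∧ (sw j a, sw j b).2 = j)) := by
      simp only [sw]
      split_ifs <;> simp_all <;> omega
    simp only [theta, h2, if_neg]
    simp [sw_invol]

lemma theta_fix (j : ℕ) : theta j (j, j + 1) = (j, j + 1) := by simp [theta]

lemma theta_eq_pt {j : ℕ} {p : ℕ × ℕ} (h : theta j p = (j, j + 1)) : p = (j, j + 1) := by
  have := congrArg (theta j) h
  rwa [theta_invol, theta_fix] at this

noncomputable def psi (j : ℕ) (m : (ℕ × ℕ) →₀ ℕ) : (ℕ × ℕ) →₀ ℕ :=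
  Finsupp.update
    (Finsupp.equivMapDomain ⟨theta j, theta j, theta_invol j, theta_invol j⟩ m)
    (j, j + 1) (tog (m (j, j + 1)))

lemma psi_apply (j : ℕ) (m : (ℕ × ℕ) →₀ ℕ) (p : ℕ × ℕ) :
    psi j m p = if p = (j, j + 1) then tog (m (j, j + 1)) else m (theta j p) := by
  rw [psi, Finsupp.coe_update, Function.update_apply]
  split_ifs with h
  · rfl
  · rw [Finsupp.equivMapDomain_apply]; rfl

lemma psi_invol (j : ℕ) (m : (ℕ × ℕ) →₀ ℕ) : psi j (psi j m) = m := by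
  ext p
  rw [psi_apply]
  split_ifs with h
  · subst h
    rw [psi_apply, if_pos rfl, tog_invol]
  · rw [psi_apply, if_neg (fun hc => h (theta_eq_pt hc)), theta_invol]

section

variable {ℓ j : ℕ} (hj : 1 ≤ j) (hjl : j + 1 ≤ ℓ)
    {D : Finset (ℕ × ℕ)}
    (hDpairs : ∀ p ∈ D, 1 ≤ p.1 ∧ p.1 < p.2)
    (hDideal : ∀ p ∈ D, ∀ a b : ℕ, 1 ≤ a → a ≤ p.1 → b ≤ p.2 → a < b → (a, b) ∈ D)
    (hD1 : (j, j + 1) ∉ D)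
    (hD2 : ∀ h : ℕ, 1 ≤ h → h < j → ((h, j) ∈ D ↔ (h, j + 1) ∈ D))

include hj hDpairs hDideal hD1 in
lemma row_j_not_mem : ∀ b, (j, b) ∉ D := by
  intro b hb
  exact hD1 (hDideal _ hb j (j + 1) hj le_rfl (by have := (hDpairs _ hb).2; simp at this ⊢; omega)
    (by omega))

include hj hDpairs hDideal hD1 in
lemma row_j1_not_mem : ∀ b, (j + 1, b) ∉ D := by
  intro b hb
  exact hD1 (hDideal _ hb j (j + 1) hj (by simp) (by have := (hDpairs _ hb).2; simp at this ⊢; omega)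
    (by omega))

include hj hDpairs hDideal hD1 hD2 in
lemma theta_mem_imp : ∀ p ∈ D, theta j p ∈ D := by
  rintro ⟨a, b⟩ hab
  obtain ⟨h1a, h1b⟩ := hDpairs _ hab
  simp only at h1a h1b
  by_cases hsp : ((a, b).1 = j ∧ (a, b).2 = j + 1) ∨ ((a, b).1 = j + 1 ∧ (a, b).2 = j)
  · simp only at hsp
    rcases hsp with ⟨rfl, rfl⟩ | ⟨rfl, rfl⟩
    · exact absurd hab hD1
    · omega
  · rw [theta, if_neg hsp]
    show (sw j a, sw j b) ∈ D
    simp only [not_or, not_and] at hsp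
    by_cases ha1 : a = j
    · exact absurd hab (by rw [ha1] at hab ⊢; exact row_j_not_mem hj hDpairs hDideal hD1 b)
    by_cases ha2 : a = j + 1
    · exact absurd hab (by rw [ha2] at hab ⊢; exact row_j1_not_mem hj hDpairs hDideal hD1 b)
    have hswa : sw j a = a := by simp [sw, ha1, ha2]
    rw [hswa]
    by_cases hb1 : b = j
    · have : sw j b = j + 1 := by simp [sw, hb1]
      rw [this]
      subst hb1
      exact (hD2 a (by omega) (by omega)).mp hab
    by_cases hb2 : b = j + 1
    · have : sw j b = j := by simp [sw, show b ≠ j by omega, hb2]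
      rw [this]
      subst hb2
      have haj : a < j := by omega
      exact (hD2 a (by omega) haj).mpr hab
    · have : sw j b = b := by simp [sw, hb1, hb2]
      rw [this]
      exact hab

include hj hDpairs hDideal hD1 hD2 in
lemma theta_mem_iff (p : ℕ × ℕ) : theta j p ∈ D ↔ p ∈ D := by
  constructor
  · intro h
    have := theta_mem_imp hj hDpairs hDideal hD1 hD2 _ h
    rwa [theta_invol] at this
  · exact theta_mem_imp hj hDpairs hDideal hD1 hD2 p

include hj hjl in
lemma valid_theta (p : ℕ × ℕ) :
    (1 ≤ (theta j p).1 ∧ (theta j p).1 < (theta j p).2 ∧ (theta j p).2 ≤ ℓ) ↔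
    (1 ≤ p.1 ∧ p.1 < p.2 ∧ p.2 ≤ ℓ) := by
  obtain ⟨a, b⟩ := p
  by_cases hsp : ((a, b).1 = j ∧ (a, b).2 = j + 1) ∨ ((a, b).1 = j + 1 ∧ (a, b).2 = j)
  · rw [theta, if_pos hsp]
  · rw [theta, if_neg hsp]
    simp only [not_or, not_and] at hsp
    simp only [sw]
    split_ifs <;> simp_all <;> omega

include hj hjl hDpairs hDideal hD1 hD2 in
lemma pairCoeff_theta (p : ℕ × ℕ) (k : ℕ) :
    pairCoeff D ℓ (theta j p) k = pairCoeff D ℓ p k := by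
  simp only [pairCoeff, valid_theta hj hjl p,
    theta_mem_iff hj hDpairs hDideal hD1 hD2 p]

lemma pairCoeff_zero (D : Finset (ℕ × ℕ)) (ℓ : ℕ) (p : ℕ × ℕ) : pairCoeff D ℓ p 0 = 1 := by
  simp [pairCoeff]

lemma monCoeff_eq_prod (D : Finset (ℕ × ℕ)) (ℓ : ℕ) (m : (ℕ × ℕ) →₀ ℕ)
    {T : Finset (ℕ × ℕ)} (hT : m.support ⊆ T) :
    monCoeff D ℓ m = ∏ p ∈ T, pairCoeff D ℓ p (m p) := by
  rw [monCoeff]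
  apply Finset.prod_subset hT
  intro p _ hns
  rw [Finsupp.notMem_support_iff.mp hns]
  exact pairCoeff_zero D ℓ p

include hj hjl hD1 in
lemma pairCoeff_pt (c : ℕ) :
    pairCoeff D ℓ (j, j + 1) (tog c) = - pairCoeff D ℓ (j, j + 1) c := by
  have hv : (1 ≤ (j, j + 1).1 ∧ (j, j + 1).1 < (j, j + 1).2 ∧ (j, j + 1).2 ≤ ℓ) :=
    ⟨hj, by omega, hjl⟩
  rcases c with _ | _ | n <;> simp [pairCoeff, tog, hD1, hv]

include hj hjl hDpairs hDideal hD1 hD2 in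
lemma monCoeff_psi (m : (ℕ × ℕ) →₀ ℕ) :
    monCoeff D ℓ (psi j m) = - monCoeff D ℓ m := by
  classical
  have hsub1 : m.support ⊆ insert (j, j + 1) (m.support ∪ (psi j m).support) := by
    intro p hp; exact Finset.mem_insert_of_mem (Finset.mem_union_left _ hp)
  have hsub2 : (psi j m).support ⊆ insert (j, j + 1) (m.support ∪ (psi j m).support) := by
    intro p hp; exact Finset.mem_insert_of_mem (Finset.mem_union_right _ hp)
  set T : Finset (ℕ × ℕ) := insert (j, j + 1) (m.support ∪ (psi j m).support) with hTdef
  have hptT : (j, j + 1) ∈ T := Finset.mem_insert_self _ _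
  rw [monCoeff_eq_prod D ℓ (psi j m) hsub2, monCoeff_eq_prod D ℓ m hsub1]
  rw [← Finset.mul_prod_erase T (fun p => pairCoeff D ℓ p (psi j m p)) hptT,
    ← Finset.mul_prod_erase T (fun p => pairCoeff D ℓ p (m p)) hptT]
  have h1 : pairCoeff D ℓ (j, j + 1) (psi j m (j, j + 1))
      = - pairCoeff D ℓ (j, j + 1) (m (j, j + 1)) := by
    rw [psi_apply, if_pos rfl]
    exact pairCoeff_pt hj hjl hD1 _
  have hclose : ∀ p ∈ T.erase (j, j + 1), theta j p ∈ T.erase (j, j + 1) := by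
    intro p hp
    rw [Finset.mem_erase] at hp ⊢
    obtain ⟨hne, hpT⟩ := hp
    have hthne : theta j p ≠ (j, j + 1) := fun hcon => hne (theta_eq_pt hcon)
    refine ⟨hthne, ?_⟩
    rw [hTdef, Finset.mem_insert, Finset.mem_union] at hpT ⊢
    rcases hpT with h | h | h
    · exact absurd h hne
    · right; right
      rw [Finsupp.mem_support_iff] at h ⊢
      rw [psi_apply, if_neg hthne, theta_invol]
      exact h
    · right; left
      rw [Finsupp.mem_support_iff] at h ⊢
      rw [psi_apply, if_neg hne] at h
      exact h
  have h2 : ∏ p ∈ T.erase (j, j + 1), pairCoeff D ℓ p (psi j m p)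
      = ∏ p ∈ T.erase (j, j + 1), pairCoeff D ℓ p (m p) := by
    apply Finset.prod_nbij' (theta j) (theta j) hclose hclose
      (fun p _ => theta_invol j p) (fun p _ => theta_invol j p)
    intro p hp
    have hne := (Finset.mem_erase.mp hp).1
    rw [psi_apply, if_neg hne]
    exact (pairCoeff_theta hj hjl hDpairs hDideal hD1 hD2 p (m (theta j p))).symm
  rw [h1, h2]
  ring

end

/-! ### Shift computations -/

section

variable {ℓ j : ℕ} (hj : 1 ≤ j) (hjl : j + 1 ≤ ℓ)
    {m : (ℕ × ℕ) →₀ ℕ} (hm0 : m (j + 1, j) = 0)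

include hm0 in
lemma psi_apply_int (q b : ℕ) :
    ((psi j m) (q, b) : ℤ) = (m (sw j q, sw j b) : ℤ)
      + (if q = j ∧ b = j + 1 then (tog (m (j, j + 1)) : ℤ) else 0)
      - (if q = j + 1 ∧ b = j then (m (j, j + 1) : ℤ) else 0) := by
  rw [psi_apply]
  by_cases h1 : q = j ∧ b = j + 1
  · obtain ⟨rfl, rfl⟩ := h1
    rw [if_pos rfl, if_pos ⟨rfl, rfl⟩, if_neg (by omega), sw_j, sw_j1, hm0]
    push_cast
    ring
  · have hne : (q, b) ≠ (j, j + 1) := by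
      simp only [ne_eq, Prod.mk.injEq, not_and]
      intro hq hb
      exact h1 ⟨hq, hb⟩
    rw [if_neg hne, if_neg h1]
    by_cases h2 : q = j + 1 ∧ b = j
    · obtain ⟨hq, hb⟩ := h2
      rw [if_pos (⟨hq, hb⟩ : q = j + 1 ∧ b = j), hq, hb]
      have hth : theta j (j + 1, j) = (j + 1, j) := by simp [theta]
      rw [hth, sw_j, sw_j1, hm0]
      push_cast
      ring
    · rw [if_neg h2]
      have hth : theta j (q, b) = (sw j q, sw j b) := by
        rw [theta, if_neg (not_or.mpr ⟨h1, h2⟩)]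
      rw [hth]
      ring

include hj hjl in
lemma sw_mem_Icc (q : ℕ) (hq : q ∈ Finset.Icc 1 ℓ) : sw j q ∈ Finset.Icc 1 ℓ := by
  rw [Finset.mem_Icc] at hq ⊢
  unfold sw
  split_ifs <;> omega


lemma sum_ite_and_left {M : Type*} [AddCommMonoid M] (s : Finset ℕ) (P : Prop) [Decidable P]
    (t : ℕ) (ht : t ∈ s) (x : M) :
    (∑ b ∈ s, if P ∧ b = t then x else 0) = if P then x else 0 := by
  by_cases hP : P
  · simp only [hP, true_and, if_true]
    rw [Finset.sum_ite_eq' s t fun _ => x, if_pos ht]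
  · simp [hP]

lemma sum_ite_and_right {M : Type*} [AddCommMonoid M] (s : Finset ℕ) (P : Prop) [Decidable P]
    (t : ℕ) (ht : t ∈ s) (x : M) :
    (∑ b ∈ s, if b = t ∧ P then x else 0) = if P then x else 0 := by
  simp only [and_comm]
  exact sum_ite_and_left s P t ht x

include hj hjl hm0 in
lemma row_psi (q : ℕ) :
    ∑ b ∈ Finset.Icc 1 ℓ, ((psi j m) (q, b) : ℤ)
      = ∑ b ∈ Finset.Icc 1 ℓ, (m (sw j q, b) : ℤ)
        + (if q = j then (tog (m (j, j + 1)) : ℤ) else 0)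
        - (if q = j + 1 then (m (j, j + 1) : ℤ) else 0) := by
  rw [Finset.sum_congr rfl (fun b _ => psi_apply_int hm0 q b)]
  rw [Finset.sum_sub_distrib, Finset.sum_add_distrib]
  congr 1
  · congr 1
    · exact Finset.sum_nbij' (sw j) (sw j) (sw_mem_Icc hj hjl) (sw_mem_Icc hj hjl)
        (fun b _ => sw_invol j b) (fun b _ => sw_invol j b) (fun b _ => rfl)
    · exact sum_ite_and_left (Finset.Icc 1 ℓ) (q = j) (j + 1)
        (by rw [Finset.mem_Icc]; omega) _
  · exact sum_ite_and_left (Finset.Icc 1 ℓ) (q = j + 1) j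
      (by rw [Finset.mem_Icc]; omega) _

include hj hjl hm0 in
lemma col_psi (q : ℕ) :
    ∑ a ∈ Finset.Icc 1 ℓ, ((psi j m) (a, q) : ℤ)
      = ∑ a ∈ Finset.Icc 1 ℓ, (m (a, sw j q) : ℤ)
        + (if q = j + 1 then (tog (m (j, j + 1)) : ℤ) else 0)
        - (if q = j then (m (j, j + 1) : ℤ) else 0) := by
  rw [Finset.sum_congr rfl (fun a _ => psi_apply_int hm0 a q)]
  rw [Finset.sum_sub_distrib, Finset.sum_add_distrib]
  congr 1
  · congr 1
    · exact Finset.sum_nbij' (sw j) (sw j) (sw_mem_Icc hj hjl) (sw_mem_Icc hj hjl)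
        (fun a _ => sw_invol j a) (fun a _ => sw_invol j a) (fun a _ => rfl)
    · exact sum_ite_and_right (Finset.Icc 1 ℓ) (q = j + 1) j
        (by rw [Finset.mem_Icc]; omega) _
  · exact sum_ite_and_right (Finset.Icc 1 ℓ) (q = j) (j + 1)
      (by rw [Finset.mem_Icc]; omega) _

include hj hjl hm0 in
lemma shift_psi (hc : m (j, j + 1) ≤ 1) {α α' : ℕ → ℤ}
    (hA1 : α' j = α (j + 1) - 1) (hA2 : α' (j + 1) = α j + 1)
    (hA3 : ∀ q, q ≠ j → q ≠ j + 1 → α' q = α q) (q : ℕ) :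
    shiftBy ℓ (psi j m) α' q = shiftBy ℓ m α (sw j q) := by
  have htc : (tog (m (j, j + 1)) : ℤ) + (m (j, j + 1) : ℤ) = 1 := by
    have h01 : m (j, j + 1) = 0 ∨ m (j, j + 1) = 1 := by omega
    rcases h01 with h | h <;> simp [tog, h]
  rw [shiftBy, shiftBy, row_psi hj hjl hm0, col_psi hj hjl hm0]
  have hne : j ≠ j + 1 := by omega
  have hne' : j + 1 ≠ j := by omega
  by_cases hq1 : q = j
  · rw [hq1, sw_j, hA1]
    simp only [eq_self_iff_true, if_true, hne, if_false]
    linarith [htc]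
  by_cases hq2 : q = j + 1
  · rw [hq2, sw_j1, hA2]
    simp only [eq_self_iff_true, if_true, hne', if_false]
    linarith [htc]
  · rw [sw_other hq1 hq2, hA3 q hq1 hq2]
    simp only [hq1, hq2, if_false]
    ring

end

/-! ### Main theorem -/

/-- Lemma on alternating properties: if 𝔰^j = 𝔰^{j+1}, (j, j+1) ∉ D, and for
h < j, (h,j) ∈ D ↔ (h,j+1) ∈ D, then for all integers r, s,
R^D 𝔰_{(λ,r,s,μ)} = − R^D 𝔰_{(λ,s−1,r+1,μ)}. -/
theorem stmt19 {A : Type*} [CommRing A] (sv : ℕ → ℤ → A)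
    (h0 : ∀ q : ℕ, sv q 0 = 1) (hneg : ∀ (q : ℕ) (i : ℤ), i < 0 → sv q i = 0)
    (ℓ j : ℕ) (hj : 1 ≤ j) (hjl : j + 1 ≤ ℓ)
    (hsj : ∀ i : ℤ, sv j i = sv (j + 1) i)
    (D : Finset (ℕ × ℕ))
    (hDpairs : ∀ p ∈ D, 1 ≤ p.1 ∧ p.1 < p.2)
    (hDideal : ∀ p ∈ D, ∀ a b : ℕ, 1 ≤ a → a ≤ p.1 → b ≤ p.2 → a < b → (a, b) ∈ D)
    (hD1 : (j, j + 1) ∉ D)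
    (hD2 : ∀ h : ℕ, 1 ≤ h → h < j → ((h, j) ∈ D ↔ (h, j + 1) ∈ D))
    (lam mu : ℕ → ℤ) (r s : ℤ) :
    RDapply sv D ℓ
      (fun q => if q < j then lam q else if q = j then r
        else if q = j + 1 then s else mu q) =
    - RDapply sv D ℓ
      (fun q => if q < j then lam q else if q = j then s - 1
        else if q = j + 1 then r + 1 else mu q) := by
  classical
  set α : ℕ → ℤ := fun q => if q < j then lam q else if q = j then r
    else if q = j + 1 then s else mu q with hα
  set α' : ℕ → ℤ := fun q => if q < j then lam q else if q = j then s - 1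
    else if q = j + 1 then r + 1 else mu q with hα'
  have hA1 : α' j = α (j + 1) - 1 := by
    simp [hα, hα', show ¬ j < j by omega, show ¬ j + 1 < j by omega, show j + 1 ≠ j by omega]
  have hA2 : α' (j + 1) = α j + 1 := by
    simp [hα, hα', show ¬ j < j by omega, show ¬ j + 1 < j by omega, show j + 1 ≠ j by omega]
  have hA3 : ∀ q, q ≠ j → q ≠ j + 1 → α' q = α q := by
    intro q h1 h2
    simp [hα, hα', h1, h2]
  have key : ∀ m : (ℕ × ℕ) →₀ ℕ,
      (monCoeff D ℓ m : A) * ∏ q ∈ Finset.Icc 1 ℓ, sv q (shiftBy ℓ m α q)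
      = -((monCoeff D ℓ (psi j m) : A) *
          ∏ q ∈ Finset.Icc 1 ℓ, sv q (shiftBy ℓ (psi j m) α' q)) := by
    intro m
    rw [monCoeff_psi hj hjl hDpairs hDideal hD1 hD2 m]
    push_cast
    rw [neg_mul, neg_neg]
    by_cases hz : monCoeff D ℓ m = 0
    · rw [hz]; norm_num
    · have hm0 : m (j + 1, j) = 0 := by
        by_contra hne
        apply hz
        rw [monCoeff]
        apply Finset.prod_eq_zero (Finsupp.mem_support_iff.mpr hne)
        rw [pairCoeff, if_neg hne, if_pos]
        show ¬(1 ≤ j + 1 ∧ j + 1 < j ∧ j ≤ ℓ)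
        omega
      have hc : m (j, j + 1) ≤ 1 := by
        by_contra hc'
        apply hz
        rw [monCoeff]
        apply Finset.prod_eq_zero
          (Finsupp.mem_support_iff.mpr (show m (j, j + 1) ≠ 0 by omega))
        rw [pairCoeff, if_neg (show m (j, j + 1) ≠ 0 by omega),
          if_neg (not_not_intro (show (1 ≤ j ∧ j < j + 1 ∧ j + 1 ≤ ℓ) from ⟨hj, by omega, hjl⟩)),
          if_neg hD1, if_neg (show m (j, j + 1) ≠ 1 by omega)]
      congr 1
      have hfac : ∀ q ∈ Finset.Icc 1 ℓ,
          sv q (shiftBy ℓ (psi j m) α' q) = sv (sw j q) (shiftBy ℓ m α (sw j q)) := by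
        intro q _
        rw [shift_psi hj hjl hm0 hc hA1 hA2 hA3 q]
        by_cases hq1 : q = j
        · subst hq1; rw [sw_j, hsj]
        by_cases hq2 : q = j + 1
        · subst hq2; rw [sw_j1, hsj]
        · rw [sw_other hq1 hq2]
      rw [Finset.prod_congr rfl hfac]
      exact (Finset.prod_nbij' (sw j) (sw j) (sw_mem_Icc hj hjl) (sw_mem_Icc hj hjl)
        (fun q _ => sw_invol j q) (fun q _ => sw_invol j q) (fun q _ => rfl)).symm
  rw [RDapply, RDapply]
  rw [finsum_congr key]
  rw [finsum_neg_distrib]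
  congr 1
  exact finsum_eq_of_bijective (psi j) (Function.Involutive.bijective (psi_invol j))
    (fun m => rfl)
end
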